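/- arXiv:2409.03517 — 10 statements merged into one kernel-verified Lean document; each statement's English description precedes it below -/
import Mathlib

section
/- Let H be a group, σ ∈ H, and U, U₁, X subgroups of H such that U₁σU/U and XU₁/U₁ are finite and U₂ := XU₁ is a subgroup. Then U₂σU/U is finite, and e · ch(U₂σU) = Σ_δ ch(δU₁σU), where δ ranges over a set of representatives of X/(X ∩ U₁), ch(Y) denotes the characteristic function H → ℤ of a subset Y, and e = [U₂ ∩ σUσ⁻¹ : U₁ ∩ σUσ⁻¹]. If moreover U₂ ∩ σUσ⁻¹ equals the product of X ∩ σUσ⁻¹ and U₁ ∩ σUσ⁻¹, then e = [X ∩ σUσ⁻¹ : X ∩ U₁ ∩ σUσ⁻¹]. -/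
/-!
Since `U₂ = X U₁`, a set `D` of representatives of `X/(X ∩ U₁)` also represents `U₂/U₁`.
With `V = σUσ⁻¹` we have `YσU = YVσ` for every `Y`, so the identity amounts to counting, for
`y = wv ∈ U₂V`, the `δ ∈ D` with `y ∈ δU₁V`. The map `δ ↦ w⁻¹δU₁` sends these bijectively onto
the orbit of `U₂ ∩ V` through the coset `U₁` in `H/U₁`, which has `[U₂ ∩ V : U₁ ∩ V]` elements
by orbit–stabilizer. The same description of a relative index as the size of an orbit gives the
last claim: `(X ∩ V)(U₁ ∩ V)` and `X ∩ V` have the same image in `H/(U₁ ∩ V)`.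
-/

open scoped Pointwise

section

open Finset

variable {H : Type*} [Group H]

def IsLeftTransversal (D : Set H) (K L : Subgroup H) : Prop :=
  ∀ y ∈ L, ∃! δ, δ ∈ D ∧ δ⁻¹ * y ∈ K

theorem Subgroup.relIndex_eq_ncard_image_mk (A C : Subgroup H) :
    A.relIndex C = (QuotientGroup.mk '' (C : Set H) : Set (H ⧸ A)).ncard := by
  have hsmul (c : C) : c • (QuotientGroup.mk 1 : H ⧸ A) = QuotientGroup.mk (c : H) :=
    congrArg QuotientGroup.mk (mul_one (c : H))
  have hstab : MulAction.stabilizer C (QuotientGroup.mk 1 : H ⧸ A) = A.subgroupOf C := by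
    ext c
    rw [MulAction.mem_stabilizer_iff, hsmul, QuotientGroup.eq, mul_one, inv_mem_iff,
      Subgroup.mem_subgroupOf]
  have horb :
      MulAction.orbit C (QuotientGroup.mk 1 : H ⧸ A) = QuotientGroup.mk '' (C : Set H) := by
    ext q
    simp [MulAction.mem_orbit_iff, hsmul]
  rw [Subgroup.relIndex, ← hstab, MulAction.index_stabilizer, horb]

theorem Subgroup.relIndex_eq_of_coe_eq_mul {A B C : Subgroup H} (hC : (C : Set H) = B * A) :
    A.relIndex C = A.relIndex B := by
  have himage :
      (QuotientGroup.mk '' (C : Set H) : Set (H ⧸ A)) = QuotientGroup.mk '' (B : Set H) := by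
    rw [hC]
    ext q
    constructor
    · rintro ⟨_, ⟨b, hb, a, ha, rfl⟩, rfl⟩
      exact ⟨b, hb, (QuotientGroup.mk_mul_of_mem b ha).symm⟩
    · rintro ⟨b, hb, rfl⟩
      exact ⟨b * 1, Set.mul_mem_mul hb A.one_mem, by rw [mul_one]⟩
  rw [relIndex_eq_ncard_image_mk, himage, ← relIndex_eq_ncard_image_mk]

namespace IsLeftTransversal

variable {K L : Subgroup H}

theorem subset_mul {D : Set H} (hD : IsLeftTransversal D K L) : (L : Set H) ⊆ D * K := by
  intro y hy
  obtain ⟨δ, ⟨hδD, hδy⟩, -⟩ := hD y hy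
  exact ⟨δ, hδD, δ⁻¹ * y, hδy, mul_inv_cancel_left δ y⟩

theorem of_coe_eq_mul {D : Set H} {X : Subgroup H} (hD : IsLeftTransversal D (X ⊓ K) X)
    (hDX : D ⊆ X) (hL : (L : Set H) = X * K) : IsLeftTransversal D K L := by
  intro y hy
  rw [← SetLike.mem_coe, hL] at hy
  obtain ⟨x, hx, k, hk, rfl⟩ := Set.mem_mul.mp hy
  obtain ⟨δ, ⟨hδD, hδx⟩, hδ_unique⟩ := hD x hx
  refine ⟨δ, ⟨hδD, by simpa only [mul_assoc] using K.mul_mem hδx.2 hk⟩, ?_⟩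
  rintro δ' ⟨hδ'D, hδ'y⟩
  refine hδ_unique δ' ⟨hδ'D, Subgroup.mem_inf.mpr ⟨X.mul_mem (X.inv_mem (hDX hδ'D)) hx, ?_⟩⟩
  simpa only [mul_assoc, mul_inv_cancel, mul_one] using K.mul_mem hδ'y (K.inv_mem hk)

variable {D : Finset H}

open scoped Classical in
theorem card_filter_inv_mul_mem_mul (hD : IsLeftTransversal D K L) (hDL : (D : Set H) ⊆ L)
    (hKL : K ≤ L) (V : Subgroup H) {y : H} (hy : y ∈ (L : Set H) * V) :
    #{δ ∈ D | δ⁻¹ * y ∈ (K : Set H) * V} = (K ⊓ V).relIndex (L ⊓ V) := by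
  obtain ⟨w, hw, v, hv, rfl⟩ := Set.mem_mul.mp hy
  let φ : H → H ⧸ K := fun δ => QuotientGroup.mk (w⁻¹ * δ)
  have hinj : Set.InjOn φ D := by
    intro δ hδ δ' hδ' h
    have hδδ' : δ⁻¹ * δ' ∈ K := by simpa [φ, QuotientGroup.eq, mul_assoc] using h
    exact (hD δ' (hDL hδ')).unique ⟨hδ, hδδ'⟩ ⟨hδ', by simp⟩
  have himage : φ '' ↑{δ ∈ D | δ⁻¹ * (w * v) ∈ (K : Set H) * V} =
      QuotientGroup.mk '' ((L ⊓ V : Subgroup H) : Set H) := by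
    ext q
    constructor
    · rintro ⟨δ, hδ, rfl⟩
      rw [coe_filter] at hδ
      obtain ⟨hδD, k, hk, v', hv', hkv⟩ := (Set.mem_sep_iff.mp hδ).imp_right Set.mem_mul.mp
      have hwδk : w⁻¹ * δ * k = v * v'⁻¹ := by rw [eq_mul_inv_of_mul_eq hkv]; group
      refine ⟨w⁻¹ * δ * k, ⟨?_, ?_⟩, QuotientGroup.mk_mul_of_mem _ hk⟩
      · exact L.mul_mem (L.mul_mem (L.inv_mem hw) (hDL hδD)) (hKL hk)
      · rw [hwδk]
        exact V.mul_mem hv (V.inv_mem hv')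
    · rintro ⟨c, ⟨hcL, hcV⟩, rfl⟩
      obtain ⟨δ, ⟨hδD, hδ⟩, -⟩ := hD (w * c) (L.mul_mem hw hcL)
      refine ⟨δ, ?_, QuotientGroup.eq.mpr (by simpa [mul_assoc] using hδ)⟩
      rw [coe_filter]
      exact ⟨hδD, _, hδ, c⁻¹ * v, V.mul_mem (V.inv_mem hcV) hv, by group⟩
  rw [← Set.ncard_coe_finset, ← (hinj.mono (coe_subset.mpr (filter_subset _ D))).ncard_image,
    himage, ← Subgroup.relIndex_eq_ncard_image_mk, ← Subgroup.inf_relIndex_right, ← inf_assoc,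
    inf_of_le_left hKL]

theorem sum_indicator_singleton_mul (hD : IsLeftTransversal D K L) (hDL : (D : Set H) ⊆ L)
    (hKL : K ≤ L) (V : Subgroup H) (y : H) :
    ∑ δ ∈ D, ({δ} * (K : Set H) * V).indicator (fun _ => (1 : ℤ)) y =
      (K ⊓ V).relIndex (L ⊓ V) * ((L : Set H) * V).indicator (fun _ => 1) y := by
  have hmem (δ : H) : y ∈ {δ} * (K : Set H) * V ↔ δ⁻¹ * y ∈ (K : Set H) * V := by
    rw [mul_assoc, Set.singleton_mul, Set.image_mul_left, Set.mem_preimage]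
  classical
  simp only [Set.indicator_apply, hmem, sum_boole]
  split_ifs with hy
  · rw [hD.card_filter_inv_mul_mem_mul hDL hKL V hy, mul_one]
  · rw [mul_zero, Nat.cast_eq_zero, card_eq_zero, filter_eq_empty_iff]
    intro δ hδ hδy
    obtain ⟨k, hk, v, hv, hkv⟩ := Set.mem_mul.mp hδy
    exact hy (Set.mem_mul.mpr
      ⟨δ * k, L.mul_mem (hDL hδ) (hKL hk), v, hv, by rw [mul_assoc, hkv, mul_inv_cancel_left]⟩)

end IsLeftTransversal

theorem singleton_mul_coe_eq_map_conj_mul (σ : H) (U : Subgroup H) :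
    {σ} * (U : Set H) = (U.map (MulAut.conj σ).toMonoidHom : Set H) * {σ} := by
  ext g
  simp only [Set.singleton_mul, Set.mul_singleton, Set.image_mul_left, Set.mem_preimage,
    Set.image_mul_right, Subgroup.coe_map, MulEquiv.toMonoidHom_eq_coe, MonoidHom.coe_coe,
    MulAut.conj_apply, Set.mem_image, SetLike.mem_coe]
  constructor
  · intro hg
    exact ⟨σ⁻¹ * g, hg, by group⟩
  · rintro ⟨u, hu, hug⟩
    rwa [← mul_right_cancel hug, inv_mul_cancel_left]

theorem mul_singleton_mul_coe_eq (S : Set H) (σ : H) (U : Subgroup H) :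
    S * {σ} * U = S * (U.map (MulAut.conj σ).toMonoidHom : Set H) * {σ} := by
  rw [mul_assoc, singleton_mul_coe_eq_map_conj_mul, mul_assoc]

theorem indicator_mul_singleton_apply (S : Set H) (σ g : H) :
    (S * {σ}).indicator (fun _ => (1 : ℤ)) g = S.indicator (fun _ => 1) (g * σ⁻¹) := by
  rw [Set.mul_singleton, Set.image_mul_right]
  exact Set.indicator_comp_right (fun x => x * σ⁻¹) (g := fun _ => (1 : ℤ))

theorem finite_image_mk_mul_of_subset_mul {U : Subgroup H} {σ : H} {S D T : Set H}
    (hD : D.Finite) (hST : S ⊆ D * T)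
    (hT : ((fun u => (QuotientGroup.mk (u * σ) : H ⧸ U)) '' T).Finite) :
    ((fun u => (QuotientGroup.mk (u * σ) : H ⧸ U)) '' S).Finite := by
  refine (hD.smul hT).subset ?_
  rintro _ ⟨s, hs, rfl⟩
  obtain ⟨δ, hδ, t, ht, rfl⟩ := Set.mem_mul.mp (hST hs)
  exact Set.mem_smul.mpr
    ⟨δ, hδ, _, Set.mem_image_of_mem _ ht, congrArg _ (mul_assoc δ t σ).symm⟩

end

theorem double_coset_product_decomposition_general
    {H : Type*} [Group H] (σ : H) (U U₁ X : Subgroup H)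
    (hfin₁ : ((fun u => (QuotientGroup.mk (u * σ) : H ⧸ U)) '' (U₁ : Set H)).Finite)
    (U₂ : Subgroup H) (hU₂ : (U₂ : Set H) = (X : Set H) * (U₁ : Set H))
    (σU : Subgroup H) (hσU : σU = U.map (MulAut.conj σ).toMonoidHom)
    (D : Finset H) (hDX : (D : Set H) ⊆ (X : Set H))
    (hD : ∀ x ∈ X, ∃! δ, δ ∈ D ∧ δ⁻¹ * x ∈ X ⊓ U₁) :
    ((fun u => (QuotientGroup.mk (u * σ) : H ⧸ U)) '' (U₂ : Set H)).Finite ∧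
    (∀ g : H,
      (((U₁ ⊓ σU).relIndex (U₂ ⊓ σU) : ℤ)) *
          Set.indicator ((U₂ : Set H) * {σ} * (U : Set H)) (fun _ => (1 : ℤ)) g =
        ∑ δ ∈ D, Set.indicator ({δ} * (U₁ : Set H) * {σ} * (U : Set H)) (fun _ => (1 : ℤ)) g) ∧
    (((U₂ ⊓ σU : Subgroup H) : Set H) =
        ((X ⊓ σU : Subgroup H) : Set H) * ((U₁ ⊓ σU : Subgroup H) : Set H) →
      (U₁ ⊓ σU).relIndex (U₂ ⊓ σU) = (X ⊓ U₁ ⊓ σU).relIndex (X ⊓ σU)) := by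
  have hXU₂ : X ≤ U₂ := by
    rw [← SetLike.coe_subset_coe, hU₂]
    exact Set.subset_mul_left _ U₁.one_mem
  have hU₁U₂ : U₁ ≤ U₂ := by
    rw [← SetLike.coe_subset_coe, hU₂]
    exact Set.subset_mul_right _ X.one_mem
  have hT : IsLeftTransversal D U₁ U₂ := IsLeftTransversal.of_coe_eq_mul hD hDX hU₂
  refine ⟨finite_image_mk_mul_of_subset_mul D.finite_toSet hT.subset_mul hfin₁, fun g => ?_,
    fun hprod => ?_⟩
  · subst hσU
    simp only [mul_singleton_mul_coe_eq, indicator_mul_singleton_apply]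
    exact (hT.sum_indicator_singleton_mul (hDX.trans hXU₂) hU₁U₂ _ _).symm
  · rw [Subgroup.relIndex_eq_of_coe_eq_mul hprod, ← Subgroup.inf_relIndex_right,
      inf_inf_inf_comm, inf_idem, inf_comm U₁]

/-- Lemma on products of double cosets with a non-parahoric group `U₂ = X·U₁`:
finiteness of `U₂σU/U`, the identity `e · ch(U₂σU) = Σ_δ ch(δU₁σU)` over representatives
`δ` of `X/(X ∩ U₁)`, with `e = [U₂ ∩ σUσ⁻¹ : U₁ ∩ σUσ⁻¹]`; and if `U₂ ∩ σUσ⁻¹` is the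
product of `X ∩ σUσ⁻¹` and `U₁ ∩ σUσ⁻¹`, then `e = [X ∩ σUσ⁻¹ : X ∩ U₁ ∩ σUσ⁻¹]`. -/
theorem double_coset_product_decomposition
    {H : Type*} [Group H] (σ : H) (U U₁ X : Subgroup H)
    (hfin₁ : ((fun u => (QuotientGroup.mk (u * σ) : H ⧸ U)) '' (U₁ : Set H)).Finite)
    (hfin₂ : ((fun x => (QuotientGroup.mk x : H ⧸ U₁)) '' (X : Set H)).Finite)
    (U₂ : Subgroup H) (hU₂ : (U₂ : Set H) = (X : Set H) * (U₁ : Set H))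
    (σU : Subgroup H) (hσU : σU = U.map (MulAut.conj σ).toMonoidHom)
    (D : Finset H) (hDX : (D : Set H) ⊆ (X : Set H))
    (hD : ∀ x ∈ X, ∃! δ, δ ∈ D ∧ δ⁻¹ * x ∈ X ⊓ U₁) :
    ((fun u => (QuotientGroup.mk (u * σ) : H ⧸ U)) '' (U₂ : Set H)).Finite ∧
    (∀ g : H,
      (((U₁ ⊓ σU).relIndex (U₂ ⊓ σU) : ℤ)) *
          Set.indicator ((U₂ : Set H) * {σ} * (U : Set H)) (fun _ => (1 : ℤ)) g =
        ∑ δ ∈ D, Set.indicator ({δ} * (U₁ : Set H) * {σ} * (U : Set H)) (fun _ => (1 : ℤ)) g) ∧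
    (((U₂ ⊓ σU : Subgroup H) : Set H) =
        ((X ⊓ σU : Subgroup H) : Set H) * ((U₁ ⊓ σU : Subgroup H) : Set H) →
      (U₁ ⊓ σU).relIndex (U₂ ⊓ σU) = (X ⊓ U₁ ⊓ σU).relIndex (X ⊓ σU)) :=
  double_coset_product_decomposition_general σ U U₁ X hfin₁ U₂ hU₂ σU hσU D hDX hD
end

section
/- Let X be a locally compact Hausdorff totally disconnected space with a continuous right action of a locally profinite group H, and let V ⊆ W be compact open subgroups of H. A point x ∈ X is (W,V)-smooth if and only if the stabilizer of x in W is contained in V. -/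
/-!
If the stabilizer of `x` in `W` lies in `V`, then `x` is moved off itself by every element of
the compact set `K = W \ V`, so by compactness of `K` and the tube lemma some compact open
neighbourhood `U` of `x` is moved off itself by all of `K`. Its `V`-saturation `U·V` is again
compact open and is still moved off itself by `K`, because `K` is stable under left and right
multiplication by `V`. Conversely, a fixed point `x·w = x` with `w ∈ W \ V` meets both `Z` and
`Zw`.
-/

open Set Filter Topology

theorem exists_isCompact_isOpen_subset_of_mem_nhds {X : Type*} [TopologicalSpace X]
    [LocallyCompactSpace X] [T2Space X] [TotallyDisconnectedSpace X] {x : X} {N : Set X}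
    (hN : N ∈ 𝓝 x) : ∃ U : Set X, IsCompact U ∧ IsOpen U ∧ x ∈ U ∧ U ⊆ N := by
  obtain ⟨s, hs, hsN, hsc⟩ := local_compact_nhds hN
  obtain ⟨C, hC, hxC, hCs⟩ :=
    loc_compact_Haus_tot_disc_of_zero_dim.mem_nhds_iff.1 (interior_mem_nhds.2 hs)
  have hCs' : C ⊆ s := hCs.trans interior_subset
  exact ⟨C, hsc.of_isClosed_subset (IsClopen.isClosed hC) hCs', IsClopen.isOpen hC, hxC,
    hCs'.trans hsN⟩

theorem exists_isCompact_isOpen_forall_translate_notMem {X H : Type*} [TopologicalSpace X]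
    [LocallyCompactSpace X] [T2Space X] [TotallyDisconnectedSpace X] [TopologicalSpace H]
    (ρ : X → H → X) (hρcont : Continuous fun p : X × H => ρ p.1 p.2) {K : Set H}
    (hK : IsCompact K) {x : X} (hx : ∀ δ ∈ K, ρ x δ ≠ x) :
    ∃ U : Set X, IsCompact U ∧ IsOpen U ∧ x ∈ U ∧ ∀ u ∈ U, ∀ δ ∈ K, ρ u δ ∉ U := by
  have hxK : IsClosed (ρ x '' K) :=
    (hK.image (hρcont.comp (Continuous.prodMk_right x))).isClosed
  obtain ⟨S, hSc, hSo, hxS, hSK⟩ := exists_isCompact_isOpen_subset_of_mem_nhds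
    (hxK.isOpen_compl.mem_nhds fun ⟨δ, hδ, hδx⟩ => hx δ hδ hδx)
  have hK_exits_S : ∀ᶠ z in 𝓝 x, ∀ δ ∈ K, ρ z δ ∈ Sᶜ :=
    hK.eventually_forall_of_forall_eventually fun δ hδ =>
      hρcont.continuousAt.eventually_mem
        (hSc.isClosed.isOpen_compl.mem_nhds fun hxδ => hSK hxδ ⟨δ, hδ, rfl⟩)
  obtain ⟨U, hUc, hUo, hxU, hU⟩ :=
    exists_isCompact_isOpen_subset_of_mem_nhds (hK_exits_S.and (hSo.mem_nhds hxS))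
  exact ⟨U, hUc, hUo, hxU, fun u hu δ hδ huδ => (hU hu).1 δ hδ (hU huδ).2⟩

section RightAction

variable {X H : Type*} [Group H]

theorem act_inv_eq_of_act_eq (ρ : X → H → X) (hρone : ∀ x, ρ x 1 = x)
    (hρmul : ∀ x g h, ρ (ρ x g) h = ρ x (g * h)) {a b : X} {g : H} (h : ρ a g = b) :
    ρ b g⁻¹ = a := by
  rw [← h, hρmul, mul_inv_cancel, hρone]

theorem mem_image2_subgroup_iff (ρ : X → H → X) (hρone : ∀ x, ρ x 1 = x)
    (hρmul : ∀ x g h, ρ (ρ x g) h = ρ x (g * h)) (U : Set X) (V : Subgroup H) (z : X) :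
    z ∈ image2 ρ U V ↔ ∃ v ∈ V, ρ z v ∈ U := by
  constructor
  · rintro ⟨u, hu, v, hv, rfl⟩
    exact ⟨v⁻¹, V.inv_mem hv, (act_inv_eq_of_act_eq ρ hρone hρmul rfl).symm ▸ hu⟩
  · rintro ⟨v, hv, hzv⟩
    exact ⟨ρ z v, hzv, v⁻¹, V.inv_mem hv, act_inv_eq_of_act_eq ρ hρone hρmul rfl⟩

theorem isOpen_image2_subgroup [TopologicalSpace X] (ρ : X → H → X)
    (hρ : ∀ g, Continuous fun z => ρ z g) (hρone : ∀ x, ρ x 1 = x)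
    (hρmul : ∀ x g h, ρ (ρ x g) h = ρ x (g * h)) {U : Set X} (hU : IsOpen U) (V : Subgroup H) :
    IsOpen (image2 ρ U V) := by
  have hUV : image2 ρ U V = ⋃ v ∈ V, (fun z => ρ z v) ⁻¹' U := by
    ext z
    simp only [mem_image2_subgroup_iff ρ hρone hρmul, mem_iUnion, mem_preimage, exists_prop]
  rw [hUV]
  exact isOpen_biUnion fun v _ => hU.preimage (hρ v)

theorem act_mem_image2_subgroup (ρ : X → H → X) (hρmul : ∀ x g h, ρ (ρ x g) h = ρ x (g * h))
    {U : Set X} {V : Subgroup H} {z : X} (hz : z ∈ image2 ρ U V) {v : H} (hv : v ∈ V) :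
    ρ z v ∈ image2 ρ U V := by
  obtain ⟨u, hu, v', hv', rfl⟩ := hz
  rw [hρmul]
  exact mem_image2_of_mem hu (V.mul_mem hv' hv)

theorem disjoint_translates_image2_subgroup (ρ : X → H → X) (hρone : ∀ x, ρ x 1 = x)
    (hρmul : ∀ x g h, ρ (ρ x g) h = ρ x (g * h)) {W V : Subgroup H} (hVW : V ≤ W) {U : Set X}
    (hU : ∀ u ∈ U, ∀ δ ∈ (W : Set H) \ V, ρ u δ ∉ U) {γ γ' : H} (hγ : γ ∈ W) (hγ' : γ' ∈ W)
    (hγγ' : γ * γ'⁻¹ ∉ V) :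
    Disjoint ((fun z => ρ z γ) '' image2 ρ U V) ((fun z => ρ z γ') '' image2 ρ U V) := by
  rw [disjoint_left]
  rintro _ ⟨_, ⟨u, hu, v, hv, rfl⟩, rfl⟩ ⟨_, ⟨u', hu', v', hv', rfl⟩, heq⟩
  simp only [hρmul] at heq
  have hδ : ρ u (v * γ * (v' * γ')⁻¹) = u' := by
    rw [← hρmul, ← heq, act_inv_eq_of_act_eq ρ hρone hρmul rfl]
  refine hU u hu _ ⟨?_, fun hδV => hγγ' ?_⟩ (hδ ▸ hu')
  · exact W.mul_mem (W.mul_mem (hVW hv) hγ) (W.inv_mem (W.mul_mem (hVW hv') hγ'))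
  · have hconj : γ * γ'⁻¹ = v⁻¹ * (v * γ * (v' * γ')⁻¹) * v' := by group
    rw [hconj]
    exact V.mul_mem (V.mul_mem (V.inv_mem hv) hδV) hv'

end RightAction

theorem smooth_point_iff_stabilizer_le_general
    {X H : Type*} [TopologicalSpace X] [LocallyCompactSpace X] [T2Space X]
    [TotallyDisconnectedSpace X]
    [Group H] [TopologicalSpace H]
    (ρ : X → H → X)
    (hρcont : Continuous fun p : X × H => ρ p.1 p.2)
    (hρone : ∀ x, ρ x 1 = x)
    (hρmul : ∀ x g h, ρ (ρ x g) h = ρ x (g * h))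
    (W V : Subgroup H) (hVW : V ≤ W)
    (hWc : IsCompact (W : Set H))
    (hVc : IsCompact (V : Set H)) (hVo : IsOpen (V : Set H))
    (x : X) :
    (∃ Z : Set X, IsCompact Z ∧ IsOpen Z ∧ x ∈ Z ∧
        (∀ v ∈ V, ∀ z ∈ Z, ρ z v ∈ Z) ∧
        (∀ γ ∈ W, ∀ γ' ∈ W, γ * γ'⁻¹ ∉ V →
          Disjoint ((fun z => ρ z γ) '' Z) ((fun z => ρ z γ') '' Z))) ↔
      {w : H | w ∈ W ∧ ρ x w = x} ⊆ (V : Set H) := by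
  constructor
  · rintro ⟨Z, -, -, hxZ, -, hdisj⟩ w ⟨hwW, hwx⟩
    by_contra hwV
    exact disjoint_left.1 (hdisj w hwW 1 W.one_mem (by simpa using hwV))
      ⟨x, hxZ, hwx⟩ ⟨x, hxZ, hρone x⟩
  · intro hstab
    obtain ⟨U, hUc, hUo, hxU, hU⟩ := exists_isCompact_isOpen_forall_translate_notMem ρ hρcont
      (hWc.diff hVo) fun δ hδ hδx => hδ.2 (hstab ⟨hδ.1, hδx⟩)
    refine ⟨image2 ρ U V, image_prod ρ ▸ (hUc.prod hVc).image hρcont,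
      isOpen_image2_subgroup ρ (fun g => hρcont.comp (Continuous.prodMk_left g)) hρone hρmul
        hUo V,
      hρone x ▸ mem_image2_of_mem hxU V.one_mem,
      fun v hv z hz => act_mem_image2_subgroup ρ hρmul hz hv,
      fun γ hγ γ' hγ' => disjoint_translates_image2_subgroup ρ hρone hρmul hVW hU hγ hγ'⟩

/-- A point `x` of a locally compact Hausdorff totally disconnected space `X`, with a
continuous right action of a locally profinite group `H`, is `(W,V)`-smooth (for compact
open subgroups `V ⊆ W`) if and only if its stabilizer in `W` is contained in `V`. -/
theorem smooth_point_iff_stabilizer_le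
    {X H : Type*} [TopologicalSpace X] [LocallyCompactSpace X] [T2Space X]
    [TotallyDisconnectedSpace X]
    [Group H] [TopologicalSpace H] [IsTopologicalGroup H]
    [LocallyCompactSpace H] [TotallyDisconnectedSpace H]
    (ρ : X → H → X)
    (hρcont : Continuous fun p : X × H => ρ p.1 p.2)
    (hρone : ∀ x, ρ x 1 = x)
    (hρmul : ∀ x g h, ρ (ρ x g) h = ρ x (g * h))
    (W V : Subgroup H) (hVW : V ≤ W)
    (hWc : IsCompact (W : Set H)) (hWo : IsOpen (W : Set H))
    (hVc : IsCompact (V : Set H)) (hVo : IsOpen (V : Set H))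
    (x : X) :
    (∃ Z : Set X, IsCompact Z ∧ IsOpen Z ∧ x ∈ Z ∧
        (∀ v ∈ V, ∀ z ∈ Z, ρ z v ∈ Z) ∧
        (∀ γ ∈ W, ∀ γ' ∈ W, γ * γ'⁻¹ ∉ V →
          Disjoint ((fun z => ρ z γ) '' Z) ((fun z => ρ z γ') '' Z))) ↔
      {w : H | w ∈ W ∧ ρ x w = x} ⊆ (V : Set H) :=
  smooth_point_iff_stabilizer_le_general ρ hρcont hρone hρmul W V hVW hWc hVc hVo x
end

section
/- Let X be a locally compact Hausdorff totally disconnected space with a continuous right action of a locally profinite group H, V ⊆ W compact open subgroups of H, Y ⊆ X a (W,V)-smooth compact open subset, and S ⊆ X a W-invariant compact open subset. Then Y \ S and Y ∩ S are (W,V)-smooth. If moreover S is (W,V)-smooth, then Y ∪ S is (W,V)-smooth. -/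
/-! If `Z` is a fundamental piece of `Y` and `T` is a `W`-invariant clopen set, then `Z ∩ T` is
a fundamental piece of `Y ∩ T`; applied to `T = S` and `T = Sᶜ` this gives `Y ∩ S` and `Y \ S`.
Since `Y ∪ S` is the disjoint union of `Y \ S` and `S`, the union of their pieces is a piece
of `Y ∪ S`. -/

/-- A `W`-invariant compact open set `Y` is `(W,V)`-smooth if it is the disjoint union of the
translates `Z·γ`, `γ ∈ V\W`, of a `V`-invariant compact open set `Z`. -/
def IsSmoothPair {X H : Type*} [TopologicalSpace X] [Group H]
    (ρ : X → H → X) (W V : Subgroup H) (Y : Set X) : Prop :=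
  ∃ Z : Set X, IsCompact Z ∧ IsOpen Z ∧
    (∀ v ∈ V, ∀ z ∈ Z, ρ z v ∈ Z) ∧
    Y = ⋃ γ ∈ (W : Set H), (fun z => ρ z γ) '' Z ∧
    (∀ γ ∈ W, ∀ γ' ∈ W, γ * γ'⁻¹ ∉ V →
      Disjoint ((fun z => ρ z γ) '' Z) ((fun z => ρ z γ') '' Z))

namespace IsSmoothPair

variable {X H : Type*} [Group H] {ρ : X → H → X} {W V : Subgroup H}

lemma act_mem_iff (hρone : ∀ x, ρ x 1 = x) (hρmul : ∀ x g h, ρ (ρ x g) h = ρ x (g * h))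
    {T : Set X} (hT : ∀ w ∈ W, ∀ x ∈ T, ρ x w ∈ T) {γ : H} (hγ : γ ∈ W) {x : X} :
    ρ x γ ∈ T ↔ x ∈ T := by
  refine ⟨fun hx => ?_, hT γ hγ x⟩
  simpa [hρmul, hρone] using hT γ⁻¹ (inv_mem hγ) _ hx

lemma compl_invariant (hρone : ∀ x, ρ x 1 = x) (hρmul : ∀ x g h, ρ (ρ x g) h = ρ x (g * h))
    {T : Set X} (hT : ∀ w ∈ W, ∀ x ∈ T, ρ x w ∈ T) :
    ∀ w ∈ W, ∀ x ∈ Tᶜ, ρ x w ∈ Tᶜ :=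
  fun _ hw _ hx hxw => hx ((act_mem_iff hρone hρmul hT hw).1 hxw)

lemma image_inter_invariant (hρone : ∀ x, ρ x 1 = x)
    (hρmul : ∀ x g h, ρ (ρ x g) h = ρ x (g * h)) {T : Set X}
    (hT : ∀ w ∈ W, ∀ x ∈ T, ρ x w ∈ T) {γ : H} (hγ : γ ∈ W) (Z : Set X) :
    (fun z => ρ z γ) '' (Z ∩ T) = (fun z => ρ z γ) '' Z ∩ T := by
  ext x
  constructor
  · rintro ⟨z, ⟨hz, hzT⟩, rfl⟩
    exact ⟨⟨z, hz, rfl⟩, hT γ hγ z hzT⟩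
  · rintro ⟨⟨z, hz, rfl⟩, hzT⟩
    exact ⟨z, ⟨hz, (act_mem_iff hρone hρmul hT hγ).1 hzT⟩, rfl⟩

lemma translate_subset {Y Z : Set X} (hY : Y = ⋃ γ ∈ (W : Set H), (fun z => ρ z γ) '' Z)
    {γ : H} (hγ : γ ∈ W) : (fun z => ρ z γ) '' Z ⊆ Y :=
  hY ▸ Set.subset_iUnion₂ (s := fun γ (_ : γ ∈ (W : Set H)) => (fun z => ρ z γ) '' Z) γ hγ

variable [TopologicalSpace X]

lemma inter_invariant (hρone : ∀ x, ρ x 1 = x) (hρmul : ∀ x g h, ρ (ρ x g) h = ρ x (g * h))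
    (hVW : V ≤ W) {Y T : Set X} (hY : IsSmoothPair ρ W V Y) (hTc : IsClopen T)
    (hT : ∀ w ∈ W, ∀ x ∈ T, ρ x w ∈ T) : IsSmoothPair ρ W V (Y ∩ T) := by
  obtain ⟨Z, hZc, hZo, hZV, rfl, hZdisj⟩ := hY
  refine ⟨Z ∩ T, hZc.inter_right hTc.isClosed, hZo.inter hTc.isOpen,
    fun v hv z hz => ⟨hZV v hv z hz.1, hT v (hVW hv) z hz.2⟩, ?_,
    fun γ hγ γ' hγ' h => (hZdisj γ hγ γ' hγ' h).mono
      (Set.image_mono Set.inter_subset_left) (Set.image_mono Set.inter_subset_left)⟩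
  rw [Set.iUnion₂_inter]
  exact Set.iUnion₂_congr fun γ hγ => (image_inter_invariant hρone hρmul hT hγ Z).symm

/-- Translates of the piece of `Y` lie in `Y` and those of the piece of `T` lie in `T`, so they
never meet. -/
lemma union_of_disjoint {Y T : Set X} (hY : IsSmoothPair ρ W V Y) (hT : IsSmoothPair ρ W V T)
    (hYT : Disjoint Y T) : IsSmoothPair ρ W V (Y ∪ T) := by
  obtain ⟨Z, hZc, hZo, hZV, hYeq, hZdisj⟩ := hY
  obtain ⟨Z', hZ'c, hZ'o, hZ'V, hTeq, hZ'disj⟩ := hT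
  refine ⟨Z ∪ Z', hZc.union hZ'c, hZo.union hZ'o,
    fun v hv z hz => hz.imp (hZV v hv z) (hZ'V v hv z), ?_, ?_⟩
  · simp only [hYeq, hTeq, Set.image_union, Set.iUnion_union_distrib]
  · intro γ hγ γ' hγ' h
    simp only [Set.image_union, Set.disjoint_union_left, Set.disjoint_union_right]
    exact ⟨⟨hZdisj γ hγ γ' hγ' h,
        hYT.symm.mono (translate_subset hTeq hγ) (translate_subset hYeq hγ')⟩,
      hYT.mono (translate_subset hYeq hγ) (translate_subset hTeq hγ'),
      hZ'disj γ hγ γ' hγ' h⟩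

end IsSmoothPair

theorem smooth_set_diff_inter_union_general
    {X H : Type*} [TopologicalSpace X] [T2Space X]
    [Group H]
    (ρ : X → H → X)
    (hρone : ∀ x, ρ x 1 = x)
    (hρmul : ∀ x g h, ρ (ρ x g) h = ρ x (g * h))
    (W V : Subgroup H) (hVW : V ≤ W)
    (Y S : Set X)
    (hY : IsSmoothPair ρ W V Y)
    (hSc : IsCompact S) (hSo : IsOpen S)
    (hSinv : ∀ w ∈ W, ∀ s ∈ S, ρ s w ∈ S) :
    IsSmoothPair ρ W V (Y \ S) ∧ IsSmoothPair ρ W V (Y ∩ S) ∧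
      (IsSmoothPair ρ W V S → IsSmoothPair ρ W V (Y ∪ S)) := by
  have hS : IsClopen S := ⟨hSc.isClosed, hSo⟩
  have hdiff : IsSmoothPair ρ W V (Y \ S) :=
    hY.inter_invariant hρone hρmul hVW hS.compl
      (IsSmoothPair.compl_invariant hρone hρmul hSinv)
  refine ⟨hdiff, hY.inter_invariant hρone hρmul hVW hS hSinv, fun hSsmooth => ?_⟩
  rw [← Set.sdiff_union_self]
  exact hdiff.union_of_disjoint hSsmooth Set.disjoint_sdiff_left

/-- If `Y` is a `(W,V)`-smooth compact open subset and `S` is a `W`-invariant compact open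
subset, then `Y \ S` and `Y ∩ S` are `(W,V)`-smooth; if moreover `S` is `(W,V)`-smooth,
then so is `Y ∪ S`. -/
theorem smooth_set_diff_inter_union
    {X H : Type*} [TopologicalSpace X] [LocallyCompactSpace X] [T2Space X]
    [TotallyDisconnectedSpace X]
    [Group H] [TopologicalSpace H] [IsTopologicalGroup H]
    [LocallyCompactSpace H] [TotallyDisconnectedSpace H]
    (ρ : X → H → X)
    (hρcont : Continuous fun p : X × H => ρ p.1 p.2)
    (hρone : ∀ x, ρ x 1 = x)
    (hρmul : ∀ x g h, ρ (ρ x g) h = ρ x (g * h))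
    (W V : Subgroup H) (hVW : V ≤ W)
    (hWc : IsCompact (W : Set H)) (hWo : IsOpen (W : Set H))
    (hVc : IsCompact (V : Set H)) (hVo : IsOpen (V : Set H))
    (Y S : Set X)
    (hY : IsSmoothPair ρ W V Y) (hYc : IsCompact Y) (hYo : IsOpen Y)
    (hSc : IsCompact S) (hSo : IsOpen S)
    (hSinv : ∀ w ∈ W, ∀ s ∈ S, ρ s w ∈ S) :
    IsSmoothPair ρ W V (Y \ S) ∧ IsSmoothPair ρ W V (Y ∩ S) ∧
      (IsSmoothPair ρ W V S → IsSmoothPair ρ W V (Y ∪ S)) :=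
  smooth_set_diff_inter_union_general ρ hρone hρmul W V hVW Y S hY hSc hSo hSinv
end

section
/- Let X be a locally compact Hausdorff totally disconnected space with a continuous right action of a locally profinite group H, let V be a normal compact open subgroup of a compact open subgroup W of H, let R be an integral domain, and let φ : X → R be a locally constant compactly supported W-invariant function. Then there exists a locally constant compactly supported V-invariant function ψ : X → R with φ = Σ_{γ ∈ W/V} γ·ψ if and only if for every x in the support of φ, the value φ(x) lies in the ideal [V_x : V]·R, where V_x is the subgroup of W generated by V and the stabilizer of x in W. -/
/-- The stabilizer, as a subgroup of `H`, of a point `x` under a right action `ρ` of `H`. -/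
def rightStabilizer {X H : Type*} [Group H] (ρ : X → H → X)
    (hone : ∀ x, ρ x 1 = x) (hmul : ∀ x g h, ρ (ρ x g) h = ρ x (g * h)) (x : X) :
    Subgroup H where
  carrier := {h | ρ x h = x}
  one_mem' := hone x
  mul_mem' := by
    intro a b ha hb
    simp only [Set.mem_setOf_eq] at *
    rw [← hmul, ha, hb]
  inv_mem' := by
    intro a ha
    simp only [Set.mem_setOf_eq] at *
    have h := hmul x a a⁻¹
    rw [ha, mul_inv_cancel, hone] at h
    exact h

/-!
Necessity: since `V ⊴ W`, inverting a left transversal `D` of `V` in `W` gives another one, so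
`φ x = ∑_{δ ∈ D} ψ (x·δ⁻¹)`. Writing an element of `V_x` as `v s` with `v ∈ V` and `s` fixing `x`
shows that this summand is constant on the cosets `δ V_x`, and each such coset meets `D` in
exactly `[V_x : V]` elements.

Sufficiency: around each `x` in the support there is a compact open `U` on which `φ` is constant
and such that `{w ∈ W | u·w ∈ U} = V_x` for every `u ∈ U`. The trace of `r·1_U` is then
`[V_x : V]·r·1_{U·W} = φ·1_{U·W}`. Finitely many saturations `U·W` cover the compact support of
`φ`, and since they are `W`-invariant clopen sets, traces on them can be glued one at a time.
-/

open Set Function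
open scoped Finset Topology

section Transversal

variable {H : Type*} [Group H]

def IsLeftTransversalIn (D : Finset H) (V K : Subgroup H) : Prop :=
  (D : Set H) ⊆ K ∧ ∀ g ∈ K, ∃! δ, δ ∈ D ∧ δ⁻¹ * g ∈ V

namespace IsLeftTransversalIn

variable {D : Finset H} {V K W : Subgroup H}

theorem card_eq_relIndex (hD : IsLeftTransversalIn D V K) : #D = V.relIndex K := by
  rw [Subgroup.relIndex, Subgroup.index, ← Nat.card_eq_finsetCard]
  refine Nat.card_congr (Equiv.ofBijective
    (fun δ : D => ((⟨δ, hD.1 δ.2⟩ : K) : K ⧸ V.subgroupOf K)) ⟨?_, fun q => ?_⟩)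
  · rintro ⟨δ, hδ⟩ ⟨δ', hδ'⟩ h
    obtain ⟨ε, -, hε⟩ := hD.2 δ' (hD.1 hδ')
    have hδδ' : (⟨δ, hD.1 hδ⟩ : K)⁻¹ * ⟨δ', hD.1 hδ'⟩ ∈ V.subgroupOf K := QuotientGroup.eq.1 h
    have h₁ : δ = ε := hε δ ⟨hδ, hδδ'⟩
    have h₂ : δ' = ε := hε δ' ⟨hδ', by simp⟩
    exact Subtype.ext (h₁.trans h₂.symm)
  · induction q using QuotientGroup.induction_on with
    | H g =>
      obtain ⟨δ, ⟨hδ, hδg⟩, -⟩ := hD.2 g g.2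
      exact ⟨⟨δ, hδ⟩, QuotientGroup.eq.2 hδg⟩

theorem card_filter_inv_mul_mem [DecidablePred (· ∈ K)] (hD : IsLeftTransversalIn D V W)
    (hVK : V ≤ K) (hKW : K ≤ W) {g : H} (hg : g ∈ W) :
    #{δ ∈ D | g⁻¹ * δ ∈ K} = V.relIndex K := by
  classical
  rw [← Finset.card_image_of_injective _ (mul_right_injective g⁻¹)]
  refine card_eq_relIndex ⟨?_, fun k hk => ?_⟩
  · intro _ h
    obtain ⟨δ, hδ, rfl⟩ := Finset.mem_image.1 h
    exact (Finset.mem_filter.1 hδ).2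
  · obtain ⟨δ, ⟨hδ, hδk⟩, huniq⟩ := hD.2 (g * k) (W.mul_mem hg (hKW hk))
    have hδK : g⁻¹ * δ ∈ K := by
      rw [show g⁻¹ * δ = k * (δ⁻¹ * (g * k))⁻¹ by group]
      exact K.mul_mem hk (K.inv_mem (hVK hδk))
    refine ⟨g⁻¹ * δ, ⟨Finset.mem_image_of_mem _ (Finset.mem_filter.2 ⟨hδ, hδK⟩), ?_⟩, ?_⟩
    · simpa [mul_assoc] using hδk
    · rintro _ ⟨hmem, hεk⟩
      obtain ⟨ε, hε, rfl⟩ := Finset.mem_image.1 hmem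
      rw [huniq ε ⟨(Finset.mem_filter.1 hε).1, by simpa [mul_assoc] using hεk⟩]

theorem image_inv [DecidableEq H] (hWV : W ≤ Subgroup.normalizer (V : Set H))
    (hD : IsLeftTransversalIn D V W) :
    IsLeftTransversalIn (D.image (·⁻¹)) V W := by
  have hcond : ∀ δ ∈ D, ∀ w, δ⁻¹ * w⁻¹ ∈ V ↔ δ⁻¹⁻¹ * w ∈ V := fun δ hδ w => by
    rw [← mul_inv_rev, inv_mem_iff, inv_inv, Subgroup.mem_normalizer_iff'.1 (hWV (hD.1 hδ))]
  refine ⟨fun _ h => ?_, fun w hw => ?_⟩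
  · obtain ⟨δ, hδ, rfl⟩ := Finset.mem_image.1 h
    exact W.inv_mem (hD.1 hδ)
  · obtain ⟨δ, ⟨hδ, hδw⟩, huniq⟩ := hD.2 w⁻¹ (W.inv_mem hw)
    refine ⟨δ⁻¹, ⟨Finset.mem_image_of_mem _ hδ, (hcond δ hδ w).1 hδw⟩, ?_⟩
    rintro _ ⟨hmem, hεw⟩
    obtain ⟨ε, hε, rfl⟩ := Finset.mem_image.1 hmem
    rw [huniq ε ⟨hε, (hcond ε hε w).2 hεw⟩]

theorem natCast_relIndex_dvd_sum {R : Type*} [Semiring R] (hD : IsLeftTransversalIn D V W)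
    (hVK : V ≤ K) (hKW : K ≤ W) {f : H → R} (hf : ∀ δ ∈ W, ∀ k ∈ K, f (δ * k) = f δ) :
    (V.relIndex K : R) ∣ ∑ δ ∈ D, f δ := by
  classical
  rw [← Finset.sum_fiberwise_of_maps_to
    (fun δ hδ => Finset.mem_image_of_mem (QuotientGroup.mk (s := K)) hδ)]
  refine Finset.dvd_sum fun q hq => ?_
  obtain ⟨δ₀, hδ₀, rfl⟩ := Finset.mem_image.1 hq
  have hfiber : D.filter (fun δ : H => (δ : H ⧸ K) = δ₀) = {δ ∈ D | δ₀⁻¹ * δ ∈ K} :=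
    Finset.filter_congr fun δ _ => by rw [eq_comm, QuotientGroup.eq]
  rw [hfiber, Finset.sum_eq_card_nsmul (b := f δ₀), hD.card_filter_inv_mul_mem hVK hKW (hD.1 hδ₀),
    nsmul_eq_mul]
  · exact dvd_mul_right _ _
  · intro δ hδ
    simpa using hf δ₀ (hD.1 hδ₀) _ (Finset.mem_filter.1 hδ).2

end IsLeftTransversalIn

theorem exists_isLeftTransversalIn {V K : Subgroup H} [Finite (K ⧸ V.subgroupOf K)] :
    ∃ D : Finset H, IsLeftTransversalIn D V K := by
  classical
  have := Fintype.ofFinite (K ⧸ V.subgroupOf K)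
  refine ⟨Finset.univ.image fun q : K ⧸ V.subgroupOf K => ((q.out : K) : H), ?_, fun g hg => ?_⟩
  · intro _ h
    obtain ⟨q, -, rfl⟩ := Finset.mem_image.1 h
    exact q.out.2
  · let q₀ : K ⧸ V.subgroupOf K := QuotientGroup.mk ⟨g, hg⟩
    refine ⟨q₀.out, ⟨Finset.mem_image_of_mem _ (Finset.mem_univ _),
      (QuotientGroup.eq.1 (QuotientGroup.out_eq' q₀) : q₀.out⁻¹ * ⟨g, hg⟩ ∈ V.subgroupOf K)⟩, ?_⟩
    rintro _ ⟨hδ, hδg⟩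
    obtain ⟨q, -, rfl⟩ := Finset.mem_image.1 hδ
    have hq : q = q₀ := (QuotientGroup.out_eq' q).symm.trans
      (QuotientGroup.eq.2 (show q.out⁻¹ * ⟨g, hg⟩ ∈ V.subgroupOf K from hδg))
    rw [hq]

theorem exists_isLeftTransversalIn_of_isCompact [TopologicalSpace H] [IsTopologicalGroup H]
    {V K : Subgroup H} (hK : IsCompact (K : Set H)) (hV : IsOpen (V : Set H)) :
    ∃ D : Finset H, IsLeftTransversalIn D V K := by
  have : CompactSpace K := isCompact_iff_compactSpace.1 hK
  have := Subgroup.quotient_finite_of_isOpen (V.subgroupOf K) (hV.preimage continuous_subtype_val)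
  exact exists_isLeftTransversalIn

end Transversal

theorem IsLocallyConstant.isClosed_support {X R : Type*} [TopologicalSpace X] [Zero R]
    {f : X → R} (hf : IsLocallyConstant f) : IsClosed (support f) :=
  (hf.isClopen_fiber 0).compl.isClosed

theorem exists_isCompact_isClopen_between {X : Type*} [TopologicalSpace X] [LocallyCompactSpace X]
    [T2Space X] [TotallyDisconnectedSpace X] {K Ω : Set X} (hK : IsCompact K) (hΩ : IsOpen Ω)
    (hKΩ : K ⊆ Ω) : ∃ A : Set X, IsCompact A ∧ IsClopen A ∧ K ⊆ A ∧ A ⊆ Ω := by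
  obtain ⟨N, hN, hKN⟩ := exists_compact_superset hK
  have hnhd : ∀ x ∈ K, ∃ A, IsClopen A ∧ x ∈ A ∧ A ⊆ Ω ∩ interior N := fun x hx =>
    loc_compact_Haus_tot_disc_of_zero_dim.mem_nhds_iff.1
      ((hΩ.inter isOpen_interior).mem_nhds ⟨hKΩ hx, hKN hx⟩)
  choose! A hA hxA hAΩ using hnhd
  obtain ⟨t, htK, hKt⟩ := hK.elim_nhds_subcover A fun x hx => (hA x hx).isOpen.mem_nhds (hxA x hx)
  have hcl : IsClopen (⋃ x ∈ t, A x) := isClopen_biUnion_finset fun x hx => hA x (htK x hx)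
  have hsub : (⋃ x ∈ t, A x) ⊆ Ω ∩ interior N := iUnion₂_subset fun x hx => hAΩ x (htK x hx)
  exact ⟨_, hN.of_isClosed_subset hcl.isClosed (hsub.trans (inter_subset_right.trans
    interior_subset)), hcl, hKt, hsub.trans inter_subset_left⟩

theorem isClopen_setOf_forall_act_mem_iff {X H : Type*} [TopologicalSpace X] [TopologicalSpace H]
    {ρ : X → H → X} (hρcont : Continuous fun p : X × H => ρ p.1 p.2)
    {W K : Set H} (hW : IsCompact W) (hK : IsClopen K) {A : Set X} (hA : IsClopen A) :
    IsClopen {z | ∀ w ∈ W, ρ z w ∈ A ↔ w ∈ K} := by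
  set P : Set (X × H) := {p | ρ p.1 p.2 ∈ A ↔ p.2 ∈ K}
  have hP : IsClopen P := by
    have hA' := hA.preimage hρcont
    have hK' := hK.preimage (continuous_snd (X := X))
    convert (hA'.inter hK').union (hA'.compl.inter hK'.compl) using 1
    ext p
    simp only [P, mem_ofPred_eq, mem_union, mem_inter_iff, mem_preimage, mem_compl_iff]
    tauto
  refine ⟨?_, isOpen_iff_eventually.2 fun z hz => hW.eventually_forall_of_forall_eventually
    fun w hw => hP.isOpen.eventually_mem (hz w hw)⟩
  have : {z | ∀ w ∈ W, ρ z w ∈ A ↔ w ∈ K} = ⋂ w ∈ W, (fun z => (z, w)) ⁻¹' P := by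
    ext; simp [P]
  rw [this]
  exact isClosed_biInter fun w _ =>
    hP.isClosed.preimage ((continuous_id (X := X)).prodMk continuous_const)

section RightAction

variable {X H : Type*} [Group H] {ρ : X → H → X}

def rightSaturation (ρ : X → H → X) (W : Subgroup H) (U : Set X) : Set X :=
  {z | ∃ w ∈ W, ρ z w ∈ U}

theorem subset_rightSaturation (hρone : ∀ x, ρ x 1 = x) (W : Subgroup H) (U : Set X) :
    U ⊆ rightSaturation ρ W U :=
  fun z hz => ⟨1, W.one_mem, by rwa [hρone]⟩

theorem act_mem_rightSaturation_iff (hρmul : ∀ x g h, ρ (ρ x g) h = ρ x (g * h))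
    {W : Subgroup H} {U : Set X} {w : H} (hw : w ∈ W) (z : X) :
    ρ z w ∈ rightSaturation ρ W U ↔ z ∈ rightSaturation ρ W U :=
  ⟨fun ⟨w', hw', h⟩ => ⟨w * w', W.mul_mem hw hw', by rwa [← hρmul]⟩,
    fun ⟨w', hw', h⟩ => ⟨w⁻¹ * w', W.mul_mem (W.inv_mem hw) hw', by
      rwa [hρmul, mul_inv_cancel_left]⟩⟩

theorem sum_indicator_act_eq {R : Type*} [Semiring R] (hρmul : ∀ x g h, ρ (ρ x g) h = ρ x (g * h))
    {W V K : Subgroup H} (hVK : V ≤ K) (hKW : K ≤ W) {U : Set X}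
    (hU : ∀ u ∈ U, ∀ w ∈ W, ρ u w ∈ U ↔ w ∈ K) {D : Finset H} (hD : IsLeftTransversalIn D V W)
    (c : R) (y : X) :
    ∑ δ ∈ D, U.indicator (fun _ => c) (ρ y δ) =
      (rightSaturation ρ W U).indicator (fun _ => (V.relIndex K : R) * c) y := by
  classical
  by_cases hy : y ∈ rightSaturation ρ W U
  · rw [indicator_of_mem hy]
    obtain ⟨w, hw, hyw⟩ := hy
    rw [← hD.card_filter_inv_mul_mem hVK hKW hw, ← nsmul_eq_mul,
      ← Finset.sum_const, Finset.sum_filter]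
    refine Finset.sum_congr rfl fun δ hδ => ?_
    have hmem : ρ y δ ∈ U ↔ w⁻¹ * δ ∈ K := by
      rw [← hU _ hyw _ (W.mul_mem (W.inv_mem hw) (hD.1 hδ)), hρmul, mul_inv_cancel_left]
    simp only [indicator_apply, hmem]
  · rw [indicator_of_notMem hy]
    exact Finset.sum_eq_zero fun δ hδ => indicator_of_notMem (fun h => hy ⟨δ, hD.1 hδ, h⟩) _

theorem natCast_relIndex_dvd_of_forall_sum_eq {R : Type*} [Semiring R] [TopologicalSpace H]
    [IsTopologicalGroup H] (hρone : ∀ x, ρ x 1 = x) (hρmul : ∀ x g h, ρ (ρ x g) h = ρ x (g * h))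
    {W V : Subgroup H} (hW : IsCompact (W : Set H)) (hVo : IsOpen (V : Set H)) (hVW : V ≤ W)
    (hWV : W ≤ Subgroup.normalizer (V : Set H)) {φ ψ : X → R}
    (hψV : ∀ v ∈ V, ∀ x, ψ (ρ x v) = ψ x)
    (hφ : ∀ D : Finset H, IsLeftTransversalIn D V W → ∀ x, φ x = ∑ δ ∈ D, ψ (ρ x δ)) (x : X) :
    (V.relIndex (V ⊔ (W ⊓ rightStabilizer ρ hρone hρmul x)) : R) ∣ φ x := by
  classical
  set S := W ⊓ rightStabilizer ρ hρone hρmul x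
  obtain ⟨D, hD⟩ := exists_isLeftTransversalIn_of_isCompact hW hVo
  rw [hφ _ (hD.image_inv hWV) x, Finset.sum_image fun a _ b _ h => inv_injective h]
  refine hD.natCast_relIndex_dvd_sum le_sup_left (sup_le hVW inf_le_left) fun δ hδ k hk => ?_
  obtain ⟨v, hv, s, hs, rfl⟩ : ∃ v ∈ V, ∃ s ∈ S, v * s = k :=
    (Subgroup.coe_mul_of_right_le_normalizer_left V S (inf_le_left.trans hWV)).subset hk
  have hfix : ρ x (δ * (v * s))⁻¹ = ρ x (v⁻¹ * δ⁻¹) := by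
    rw [show (δ * (v * s))⁻¹ = s⁻¹ * (v⁻¹ * δ⁻¹) by group, ← hρmul, (S.inv_mem hs).2]
  have hconj : δ * v⁻¹ * δ⁻¹ ∈ V := (Subgroup.mem_normalizer_iff.1 (hWV hδ) _).1 (V.inv_mem hv)
  rw [hfix, ← hψV _ hconj (ρ x δ⁻¹), hρmul]
  congr 2
  group

variable [TopologicalSpace X] [TopologicalSpace H]

theorem isOpen_rightSaturation (hρcont : Continuous fun p : X × H => ρ p.1 p.2)
    (W : Subgroup H) {U : Set X} (hU : IsOpen U) : IsOpen (rightSaturation ρ W U) := by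
  have : rightSaturation ρ W U = ⋃ w ∈ W, (ρ · w) ⁻¹' U := by
    ext; simp [rightSaturation]
  rw [this]
  exact isOpen_biUnion fun w _ => hU.preimage (hρcont.comp (continuous_id.prodMk continuous_const))

theorem isCompact_rightSaturation (hρcont : Continuous fun p : X × H => ρ p.1 p.2)
    (hρone : ∀ x, ρ x 1 = x) (hρmul : ∀ x g h, ρ (ρ x g) h = ρ x (g * h)) {W : Subgroup H}
    (hW : IsCompact (W : Set H)) {U : Set X} (hU : IsCompact U) :
    IsCompact (rightSaturation ρ W U) := by
  convert (hU.prod hW).image hρcont using 1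
  ext z
  constructor
  · rintro ⟨w, hw, hzw⟩
    exact ⟨(ρ z w, w⁻¹), ⟨hzw, W.inv_mem hw⟩, by simp [hρmul, hρone]⟩
  · rintro ⟨⟨u, w⟩, ⟨hu, hw⟩, rfl⟩
    exact ⟨w⁻¹, W.inv_mem hw, by simpa [hρmul, hρone]⟩

theorem exists_isCompact_isClopen_nhd_forall_act_mem_iff [LocallyCompactSpace X] [T2Space X]
    [TotallyDisconnectedSpace X] [IsTopologicalGroup H]
    (hρcont : Continuous fun p : X × H => ρ p.1 p.2) (hρone : ∀ x, ρ x 1 = x)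
    (hρmul : ∀ x g h, ρ (ρ x g) h = ρ x (g * h)) {W K : Subgroup H} (hW : IsCompact (W : Set H))
    (hKo : IsOpen (K : Set H)) (hKW : K ≤ W) {x : X}
    (hxK : W ⊓ rightStabilizer ρ hρone hρmul x ≤ K) {Ω : Set X} (hΩ : IsOpen Ω)
    (hxΩ : ∀ k ∈ K, ρ x k ∈ Ω) :
    ∃ U : Set X, IsCompact U ∧ IsClopen U ∧ x ∈ U ∧ U ⊆ Ω ∧
      ∀ u ∈ U, ∀ w ∈ W, ρ u w ∈ U ↔ w ∈ K := by
  have hKcl : IsClopen (K : Set H) := ⟨K.isClosed_of_isOpen hKo, hKo⟩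
  have horbit : Continuous (ρ x ·) := hρcont.comp (continuous_const.prodMk continuous_id)
  have hxC : IsCompact ((ρ x ·) '' ((W : Set H) \ K)) := (hW.diff hKo).image horbit
  have hdisj : ∀ k ∈ K, ρ x k ∉ (ρ x ·) '' ((W : Set H) \ K) := by
    rintro k hk ⟨c, ⟨hcW, hcK⟩, hck⟩
    have hfix : ρ x (c * k⁻¹) = x := by
      rw [← hρmul, show ρ x c = ρ x k from hck, hρmul, mul_inv_cancel, hρone]
    have : c * k⁻¹ ∈ K := hxK ⟨W.mul_mem hcW (W.inv_mem (hKW hk)), hfix⟩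
    exact hcK (by simpa using K.mul_mem this hk)
  obtain ⟨A, hAc, hA, hxKA, hAΩ⟩ := exists_isCompact_isClopen_between
    ((hW.of_isClosed_subset hKcl.isClosed hKW).image horbit) (hΩ.inter hxC.isClosed.isOpen_compl)
    (by rintro _ ⟨k, hk, rfl⟩; exact ⟨hxΩ k hk, hdisj k hk⟩)
  -- the points whose return set `{w ∈ W | z·w ∈ A}` is exactly `K`; `x` is one of them
  set U := {z | ∀ w ∈ W, ρ z w ∈ A ↔ w ∈ K}
  have hU : IsClopen U := isClopen_setOf_forall_act_mem_iff hρcont hW hKcl hA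
  have hUA : U ⊆ A := fun z hz => by simpa [hρone] using (hz 1 W.one_mem).2 K.one_mem
  refine ⟨U, hAc.of_isClosed_subset hU.isClosed hUA, hU, fun w hw => ⟨fun h => ?_,
    fun h => hxKA ⟨w, h, rfl⟩⟩, hUA.trans (hAΩ.trans inter_subset_left),
    fun u hu w hw => ⟨fun h => (hu w hw).1 (hUA h), fun h w' hw' => ?_⟩⟩
  · by_contra hwK
    exact (hAΩ h).2 ⟨w, ⟨hw, hwK⟩, rfl⟩
  · rw [hρmul, hu _ (W.mul_mem hw hw'), K.mul_mem_cancel_left h]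

end RightAction

section Trace

variable {X H R : Type*} [TopologicalSpace X] [Group H]

/-- `φ·1_T` is the trace `∑_{γ ∈ W/V} γ·ψ` of a `V`-invariant Schwartz function `ψ`. -/
def IsTraceOn [AddCommMonoid R] (ρ : X → H → X) (W V : Subgroup H) (φ : X → R) (T : Set X) :
    Prop :=
  ∃ ψ : X → R, IsLocallyConstant ψ ∧ IsCompact (support ψ) ∧ (∀ v ∈ V, ∀ x, ψ (ρ x v) = ψ x) ∧
    ∀ D : Finset H, IsLeftTransversalIn D V W → ∀ y, ∑ δ ∈ D, ψ (ρ y δ) = T.indicator φ y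

variable {ρ : X → H → X} {W V : Subgroup H}

theorem isTraceOn_empty [AddCommMonoid R] (φ : X → R) : IsTraceOn ρ W V φ ∅ :=
  ⟨0, IsLocallyConstant.zero, by simp, fun _ _ _ => rfl, fun _ _ _ => by simp⟩

theorem IsTraceOn.union [AddCommMonoid R] (hVW : V ≤ W) {φ : X → R} {T₁ T₂ : Set X}
    (hT₁ : IsClopen T₁) (hT₁W : ∀ w ∈ W, ∀ z, ρ z w ∈ T₁ ↔ z ∈ T₁)
    (h₁ : IsTraceOn ρ W V φ T₁) (h₂ : IsTraceOn ρ W V φ T₂) : IsTraceOn ρ W V φ (T₁ ∪ T₂) := by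
  classical
  obtain ⟨ψ₁, hlc₁, hc₁, hV₁, htr₁⟩ := h₁
  obtain ⟨ψ₂, hlc₂, hc₂, hV₂, htr₂⟩ := h₂
  have hlc : IsLocallyConstant (T₁ᶜ.indicator ψ₂) :=
    (LocallyConstant.indicator ⟨ψ₂, hlc₂⟩ hT₁.compl).isLocallyConstant
  refine ⟨ψ₁ + T₁ᶜ.indicator ψ₂, hlc₁.add hlc, ?_, fun v hv z => ?_, fun D hD y => ?_⟩
  · refine (hc₁.union hc₂).of_isClosed_subset (hlc₁.add hlc).isClosed_support
      ((support_add _ _).trans (union_subset_union_right _ ?_))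
    exact support_indicator.trans_subset inter_subset_right
  · simp only [Pi.add_apply, indicator_apply, mem_compl_iff, hT₁W v (hVW hv), hV₁ v hv, hV₂ v hv]
  · have h₂ : ∑ δ ∈ D, T₁ᶜ.indicator ψ₂ (ρ y δ) = T₁ᶜ.indicator (T₂.indicator φ) y := by
      by_cases hy : y ∈ T₁
      · rw [indicator_of_notMem (not_not.2 hy)]
        exact Finset.sum_eq_zero fun δ hδ =>
          indicator_of_notMem (not_not.2 ((hT₁W δ (hD.1 hδ) y).2 hy)) _
      · rw [indicator_of_mem hy, ← htr₂ D hD y]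
        exact Finset.sum_congr rfl fun δ hδ =>
          indicator_of_mem (show ρ y δ ∈ T₁ᶜ from fun h => hy ((hT₁W δ (hD.1 hδ) y).1 h)) _
    rw [Finset.sum_congr rfl fun δ _ => Pi.add_apply ψ₁ _ (ρ y δ), Finset.sum_add_distrib,
      htr₁ D hD y, h₂]
    by_cases hy₁ : y ∈ T₁ <;> by_cases hy₂ : y ∈ T₂ <;> simp [hy₁, hy₂]

variable [LocallyCompactSpace X] [T2Space X] [TotallyDisconnectedSpace X] [TopologicalSpace H]
  [IsTopologicalGroup H] [Semiring R]

theorem exists_mem_nhds_isTraceOn_rightSaturation (hρcont : Continuous fun p : X × H => ρ p.1 p.2)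
    (hρone : ∀ x, ρ x 1 = x) (hρmul : ∀ x g h, ρ (ρ x g) h = ρ x (g * h))
    (hW : IsCompact (W : Set H)) (hVo : IsOpen (V : Set H)) {K : Subgroup H} (hVK : V ≤ K)
    (hKW : K ≤ W) {φ : X → R} (hφlc : IsLocallyConstant φ) (hφW : ∀ w ∈ W, ∀ x, φ (ρ x w) = φ x)
    {x : X} (hxK : W ⊓ rightStabilizer ρ hρone hρmul x ≤ K) (hφx : (V.relIndex K : R) ∣ φ x) :
    ∃ U ∈ 𝓝 x, IsClopen (rightSaturation ρ W U) ∧ IsTraceOn ρ W V φ (rightSaturation ρ W U) := by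
  classical
  obtain ⟨c, hc⟩ := hφx
  obtain ⟨U, hUc, hU, hxU, hUφ, hUK⟩ := exists_isCompact_isClopen_nhd_forall_act_mem_iff hρcont
    hρone hρmul hW (Subgroup.isOpen_mono hVK hVo) hKW hxK (hφlc.isOpen_fiber (φ x))
    fun k hk => hφW k (hKW hk) x
  have hlc : IsLocallyConstant (U.indicator fun _ => c) :=
    (LocallyConstant.indicator (LocallyConstant.const X c) hU).isLocallyConstant
  have hψV : ∀ v ∈ V, ∀ z, U.indicator (fun _ => c) (ρ z v) = U.indicator (fun _ => c) z := by
    intro v hv z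
    have hmem : ρ z v ∈ U ↔ z ∈ U :=
      ⟨fun h => by simpa [hρmul, hρone] using
        (hUK _ h v⁻¹ (W.inv_mem (hKW (hVK hv)))).2 (K.inv_mem (hVK hv)),
        fun h => (hUK z h v (hKW (hVK hv))).2 (hVK hv)⟩
    simp only [indicator_apply, hmem]
  refine ⟨U, hU.isOpen.mem_nhds hxU,
    ⟨(isCompact_rightSaturation hρcont hρone hρmul hW hUc).isClosed,
      isOpen_rightSaturation hρcont W hU.isOpen⟩, U.indicator fun _ => c, hlc,
    hUc.of_isClosed_subset hlc.isClosed_support support_indicator_subset, hψV, fun D hD y => ?_⟩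
  rw [sum_indicator_act_eq hρmul hVK hKW hUK hD c y, ← hc]
  refine congrFun (indicator_congr fun z hz => ?_) y
  obtain ⟨w, hw, hzw⟩ := hz
  rw [← hφW w hw z]
  exact (hUφ hzw).symm

theorem exists_isTraceOn_superset_support (hρcont : Continuous fun p : X × H => ρ p.1 p.2)
    (hρone : ∀ x, ρ x 1 = x) (hρmul : ∀ x g h, ρ (ρ x g) h = ρ x (g * h))
    (hW : IsCompact (W : Set H)) (hVo : IsOpen (V : Set H)) (hVW : V ≤ W) {φ : X → R}
    (hφlc : IsLocallyConstant φ) (hφsupp : IsCompact (support φ))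
    (hφW : ∀ w ∈ W, ∀ x, φ (ρ x w) = φ x)
    (hdvd : ∀ x ∈ support φ,
      (V.relIndex (V ⊔ (W ⊓ rightStabilizer ρ hρone hρmul x)) : R) ∣ φ x) :
    ∃ T, support φ ⊆ T ∧ IsTraceOn ρ W V φ T := by
  let P : Set X → Prop := fun S => ∃ T, S ⊆ T ∧ IsClopen T ∧
    (∀ w ∈ W, ∀ z, ρ z w ∈ T ↔ z ∈ T) ∧ IsTraceOn ρ W V φ T
  have hP : P (support φ) := by
    refine hφsupp.induction_on ⟨∅, Subset.rfl, isClopen_empty, by simp, isTraceOn_empty φ⟩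
      (fun S S' hSS' ⟨T, hS'T, hT⟩ => ⟨T, hSS'.trans hS'T, hT⟩) ?_ fun x hx => ?_
    · rintro S S' ⟨T, hST, hTc, hTW, hT⟩ ⟨T', hST', hTc', hTW', hT'⟩
      exact ⟨T ∪ T', union_subset_union hST hST', hTc.union hTc',
        fun w hw z => by simp only [mem_union, hTW w hw, hTW' w hw], hT.union hVW hTc hTW hT'⟩
    · obtain ⟨U, hU, hsat, htrace⟩ := exists_mem_nhds_isTraceOn_rightSaturation hρcont hρone hρmul
        hW hVo le_sup_left (sup_le hVW inf_le_left) hφlc hφW le_sup_right (hdvd x hx)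
      exact ⟨U, mem_nhdsWithin_of_mem_nhds hU, _, subset_rightSaturation hρone W U, hsat,
        fun w hw => act_mem_rightSaturation_iff hρmul hw, htrace⟩
  obtain ⟨T, hT, -, -, htrace⟩ := hP
  exact ⟨T, hT, htrace⟩

end Trace

theorem trace_criterion_schwartz_general
    {X H R : Type*} [TopologicalSpace X] [LocallyCompactSpace X] [T2Space X]
    [TotallyDisconnectedSpace X]
    [Group H] [TopologicalSpace H] [IsTopologicalGroup H]
    [CommRing R]
    (ρ : X → H → X)
    (hρcont : Continuous fun p : X × H => ρ p.1 p.2)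
    (hρone : ∀ x, ρ x 1 = x)
    (hρmul : ∀ x g h, ρ (ρ x g) h = ρ x (g * h))
    (W V : Subgroup H) (hVW : V ≤ W)
    (hWc : IsCompact (W : Set H))
    (hVo : IsOpen (V : Set H))
    (hnorm : ∀ w ∈ W, ∀ v ∈ V, w * v * w⁻¹ ∈ V)
    (φ : X → R) (hφlc : IsLocallyConstant φ) (hφsupp : IsCompact (Function.support φ))
    (hφW : ∀ w ∈ W, ∀ x, φ (ρ x w) = φ x) :
    (∃ ψ : X → R, IsLocallyConstant ψ ∧ IsCompact (Function.support ψ) ∧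
        (∀ v ∈ V, ∀ x, ψ (ρ x v) = ψ x) ∧
        ∀ D : Finset H, (D : Set H) ⊆ (W : Set H) →
          (∀ w ∈ W, ∃! δ, δ ∈ D ∧ δ⁻¹ * w ∈ V) →
          ∀ x, φ x = ∑ γ ∈ D, ψ (ρ x γ)) ↔
      ∀ x ∈ Function.support φ, ∃ r : R,
        φ x = (V.relIndex (V ⊔ (W ⊓ rightStabilizer ρ hρone hρmul x)) : R) * r := by
  have hWV : W ≤ Subgroup.normalizer (V : Set H) := fun w hw =>
    Subgroup.mem_normalizer_iff.2 fun v =>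
      ⟨hnorm w hw v, fun h => by simpa [mul_assoc] using hnorm w⁻¹ (W.inv_mem hw) _ h⟩
  constructor
  · rintro ⟨ψ, -, -, hψV, hψ⟩ x -
    exact natCast_relIndex_dvd_of_forall_sum_eq hρone hρmul hWc hVo hVW hWV hψV
      (fun D hD => hψ D hD.1 hD.2) x
  · intro hdvd
    obtain ⟨T, hT, ψ, hψlc, hψc, hψV, hψ⟩ := exists_isTraceOn_superset_support hρcont hρone hρmul
      hWc hVo hVW hφlc hφsupp hφW hdvd
    refine ⟨ψ, hψlc, hψc, hψV, fun D hDW hD x => ?_⟩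
    rw [hψ D ⟨hDW, hD⟩ x, indicator_eq_self.2 hT]

/-- Trace criterion in Schwartz spaces: a `W`-invariant locally constant compactly supported
function `φ : X → R` is the trace `Σ_{γ ∈ W/V} γ·ψ` of a `V`-invariant one if and only if
`φ(x) ∈ [V_x : V]·R` for every `x` in the support of `φ`, where `V_x = ⟨V, Stab_W(x)⟩`. -/
theorem trace_criterion_schwartz
    {X H R : Type*} [TopologicalSpace X] [LocallyCompactSpace X] [T2Space X]
    [TotallyDisconnectedSpace X]
    [Group H] [TopologicalSpace H] [IsTopologicalGroup H]
    [LocallyCompactSpace H] [TotallyDisconnectedSpace H]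
    [CommRing R] [IsDomain R]
    (ρ : X → H → X)
    (hρcont : Continuous fun p : X × H => ρ p.1 p.2)
    (hρone : ∀ x, ρ x 1 = x)
    (hρmul : ∀ x g h, ρ (ρ x g) h = ρ x (g * h))
    (W V : Subgroup H) (hVW : V ≤ W)
    (hWc : IsCompact (W : Set H)) (hWo : IsOpen (W : Set H))
    (hVc : IsCompact (V : Set H)) (hVo : IsOpen (V : Set H))
    (hnorm : ∀ w ∈ W, ∀ v ∈ V, w * v * w⁻¹ ∈ V)
    (φ : X → R) (hφlc : IsLocallyConstant φ) (hφsupp : IsCompact (Function.support φ))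
    (hφW : ∀ w ∈ W, ∀ x, φ (ρ x w) = φ x) :
    (∃ ψ : X → R, IsLocallyConstant ψ ∧ IsCompact (Function.support ψ) ∧
        (∀ v ∈ V, ∀ x, ψ (ρ x v) = ψ x) ∧
        ∀ D : Finset H, (D : Set H) ⊆ (W : Set H) →
          (∀ w ∈ W, ∃! δ, δ ∈ D ∧ δ⁻¹ * w ∈ V) →
          ∀ x, φ x = ∑ γ ∈ D, ψ (ρ x γ)) ↔
      ∀ x ∈ Function.support φ, ∃ r : R,
        φ x = (V.relIndex (V ⊔ (W ⊓ rightStabilizer ρ hρone hρmul x)) : R) * r :=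
  trace_criterion_schwartz_general ρ hρcont hρone hρmul W V hVW hWc hVo hnorm φ hφlc hφsupp hφW
end

section
/- Let Ψ be a root datum with reduced root system Φ. A dominant element λ of X^∨ (or of P^∨) is minuscule if and only if S(λ) = W·λ, where S(λ) is the smallest saturated subset containing λ and W is the Weyl group. -/
/-!
If `l` is minuscule then so is every `w l`, so the only integers between `0` and `⟨w l, α⟩` are
the endpoints and the Weyl orbit of `l` is itself saturated; since saturated sets are stable under
the reflections, it is the smallest one. Conversely, if `⟨l, δ⟩ ≥ 2` for some root `δ`, then
`l - δ^∨ ∈ S(l)`, but `l - δ^∨` is strictly shorter than `l` for the `W`-invariant form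
`B(ν, μ) = ∑_{β ∈ Φ} ⟨ν, β⟩⟨μ, β⟩`, so it is not in `W·l`.
-/

def IsSaturatedSet {X Xv : Type*} [AddCommGroup X] [AddCommGroup Xv]
    (p : Xv →+ X →+ ℤ) (Φ : Finset X) (cr : X → Xv) (S : Set Xv) : Prop :=
  ∀ x ∈ S, ∀ α ∈ Φ, ∀ i : ℤ,
    ((0 ≤ i ∧ i ≤ p x α) ∨ (p x α ≤ i ∧ i ≤ 0)) → x - i • cr α ∈ S

open Finset

namespace RootSystemPairing

variable {X Xv : Type*} [AddCommGroup X] [AddCommGroup Xv]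
  (p : Xv →+ X →+ ℤ) (Φ : Finset X) (cr : X → Xv)

def reflection (α β : X) : X := β - p (cr α) β • α

def coreflection (α : X) (ν : Xv) : Xv := ν - p ν α • cr α

def IsMinuscule (ν : Xv) : Prop := ∀ α ∈ Φ, p ν α = 1 ∨ p ν α = 0 ∨ p ν α = -1

def weylGroup : Subgroup (Equiv.Perm Xv) :=
  Subgroup.closure {f | ∃ α ∈ Φ, ∀ ν, f ν = coreflection p cr α ν}

def weylOrbit (l : Xv) : Set Xv := {μ | ∃ w ∈ weylGroup p Φ cr, w l = μ}

def saturatedHull (l : Xv) : Set Xv := ⋂₀ {S | IsSaturatedSet p Φ cr S ∧ l ∈ S}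

def rootForm : Xv →+ Xv →+ ℤ :=
  ∑ β ∈ Φ, (AddMonoidHom.mul.comp (p.flip β)).compl₂ (p.flip β)

variable {p Φ cr}

theorem rootForm_apply (ν μ : Xv) : rootForm p Φ ν μ = ∑ β ∈ Φ, p ν β * p μ β := by
  simp [rootForm, AddMonoidHom.finsetSum_apply]

theorem rootForm_comm (ν μ : Xv) : rootForm p Φ ν μ = rootForm p Φ μ ν := by
  simp only [rootForm_apply, mul_comm]

theorem pairing_coreflection (α : X) (ν : Xv) (β : X) :
    p (coreflection p cr α ν) β = p ν (reflection p cr α β) := by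
  simp only [coreflection, reflection, map_sub, map_zsmul, AddMonoidHom.sub_apply,
    AddMonoidHom.smul_apply, smul_eq_mul]
  ring

section Reflection

variable {α : X} (hα : p (cr α) α = 2)
include hα

theorem reflection_involutive : Function.Involutive (reflection p cr α) := by
  intro β
  simp only [reflection, map_sub, map_zsmul, hα, smul_eq_mul]
  module

theorem coreflection_involutive : Function.Involutive (coreflection p cr α) := by
  intro ν
  simp only [coreflection, map_sub, map_zsmul, AddMonoidHom.sub_apply, AddMonoidHom.smul_apply,
    hα, smul_eq_mul]
  module

theorem coreflection_coroot : coreflection p cr α (cr α) = -cr α := by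
  rw [coreflection, hα]
  abel

theorem reflection_self : reflection p cr α α = -α := by
  rw [reflection, hα]
  abel

theorem rootForm_coreflection (hΦ : ∀ β ∈ Φ, reflection p cr α β ∈ Φ) (ν μ : Xv) :
    rootForm p Φ (coreflection p cr α ν) (coreflection p cr α μ) = rootForm p Φ ν μ := by
  simp only [rootForm_apply, pairing_coreflection]
  exact sum_nbij' _ _ hΦ hΦ (fun β _ => reflection_involutive hα β)
    (fun β _ => reflection_involutive hα β) (fun _ _ => rfl)

theorem two_mul_rootForm_coroot (hΦ : ∀ β ∈ Φ, reflection p cr α β ∈ Φ) (ν : Xv) :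
    2 * rootForm p Φ ν (cr α) = p ν α * rootForm p Φ (cr α) (cr α) := by
  have h := rootForm_coreflection hα hΦ ν (cr α)
  rw [coreflection_coroot hα] at h
  simp only [coreflection, map_sub, map_zsmul, map_neg,
    AddMonoidHom.sub_apply, AddMonoidHom.smul_apply, smul_eq_mul] at h
  linarith

theorem rootForm_coroot_self_pos (hαΦ : α ∈ Φ) : 0 < rootForm p Φ (cr α) (cr α) := by
  rw [rootForm_apply]
  calc (0 : ℤ) < p (cr α) α * p (cr α) α := by rw [hα]; norm_num
    _ ≤ _ := single_le_sum (f := fun β => p (cr α) β * p (cr α) β)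
        (fun β _ => mul_self_nonneg _) hαΦ

theorem rootForm_sub_coroot_lt (hΦ : ∀ β ∈ Φ, reflection p cr α β ∈ Φ) (hαΦ : α ∈ Φ) {ν : Xv}
    (hν : 2 ≤ p ν α) : rootForm p Φ (ν - cr α) (ν - cr α) < rootForm p Φ ν ν := by
  have hB := two_mul_rootForm_coroot hα hΦ ν
  have hQ := rootForm_coroot_self_pos (Φ := Φ) hα hαΦ
  simp only [map_sub, AddMonoidHom.sub_apply, rootForm_comm (cr α) ν]
  nlinarith

end Reflection

variable (h2 : ∀ α ∈ Φ, p (cr α) α = 2)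
include h2

theorem weylGroup_mapsTo {S : Set Xv} (hS : ∀ α ∈ Φ, Set.MapsTo (coreflection p cr α) S S)
    {w : Equiv.Perm Xv} (hw : w ∈ weylGroup p Φ cr) : Set.MapsTo w S S := by
  induction hw using Subgroup.closure_induction'' with
  | mem f hf =>
    obtain ⟨α, hα, hf⟩ := hf
    rw [funext hf]
    exact hS α hα
  | inv_mem f hf =>
    obtain ⟨α, hα, hf⟩ := hf
    have hff : f * f = 1 := Equiv.ext fun ν => by
      rw [Equiv.Perm.mul_apply, hf, hf, coreflection_involutive (h2 α hα), Equiv.Perm.one_apply]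
    rw [inv_eq_of_mul_eq_one_right hff, funext hf]
    exact hS α hα
  | one => exact Set.mapsTo_id S
  | mul x y _ _ hx hy => exact hx.comp hy

theorem weylOrbit_subset {S : Set Xv} (hS : IsSaturatedSet p Φ cr S) {l : Xv} (hl : l ∈ S) :
    weylOrbit p Φ cr l ⊆ S := by
  rintro _ ⟨w, hw, rfl⟩
  refine weylGroup_mapsTo h2 (fun α hα ν hν => hS ν hν α hα _ ?_) hw hl
  exact (le_total 0 (p ν α)).imp (fun h => ⟨h, le_rfl⟩) (fun h => ⟨le_rfl, h⟩)

theorem rootForm_weylGroup_apply (hrefl : ∀ α ∈ Φ, ∀ β ∈ Φ, reflection p cr α β ∈ Φ)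
    {w : Equiv.Perm Xv} (hw : w ∈ weylGroup p Φ cr) (ν : Xv) :
    rootForm p Φ (w ν) (w ν) = rootForm p Φ ν ν :=
  weylGroup_mapsTo (S := {μ | rootForm p Φ μ μ = rootForm p Φ ν ν}) h2
    (fun α hα _ hμ => (rootForm_coreflection (h2 α hα) (hrefl α hα) _ _).trans hμ) hw rfl

theorem neg_mem_of_mem (hrefl : ∀ α ∈ Φ, ∀ β ∈ Φ, reflection p cr α β ∈ Φ) {α : X}
    (hα : α ∈ Φ) : -α ∈ Φ := by
  simpa only [reflection_self (h2 α hα)] using hrefl α hα α hα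

theorem exists_two_le_of_not_isMinuscule (hrefl : ∀ α ∈ Φ, ∀ β ∈ Φ, reflection p cr α β ∈ Φ)
    {ν : Xv} (hν : ¬IsMinuscule p Φ ν) : ∃ δ ∈ Φ, 2 ≤ p ν δ := by
  obtain ⟨α, hα, hνα⟩ : ∃ α ∈ Φ, ¬(p ν α = 1 ∨ p ν α = 0 ∨ p ν α = -1) := by
    simpa [IsMinuscule] using hν
  rcases le_or_gt 2 (p ν α) with h | h
  · exact ⟨α, hα, h⟩
  · exact ⟨-α, neg_mem_of_mem h2 hrefl hα, by rw [map_neg]; omega⟩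

theorem IsMinuscule.weylGroup_apply (hrefl : ∀ α ∈ Φ, ∀ β ∈ Φ, reflection p cr α β ∈ Φ)
    {ν : Xv} (hν : IsMinuscule p Φ ν) {w : Equiv.Perm Xv} (hw : w ∈ weylGroup p Φ cr) :
    IsMinuscule p Φ (w ν) :=
  weylGroup_mapsTo (S := {μ | IsMinuscule p Φ μ}) h2
    (fun α hα μ (hμ : IsMinuscule p Φ μ) β hβ => by
      rw [pairing_coreflection]
      exact hμ _ (hrefl α hα β hβ)) hw hν

theorem isSaturatedSet_weylOrbit (hrefl : ∀ α ∈ Φ, ∀ β ∈ Φ, reflection p cr α β ∈ Φ) {l : Xv}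
    (hl : IsMinuscule p Φ l) : IsSaturatedSet p Φ cr (weylOrbit p Φ cr l) := by
  rintro _ ⟨w, hw, rfl⟩ α hα i hi
  have hwl := hl.weylGroup_apply h2 hrefl hw α hα
  obtain rfl | rfl : i = 0 ∨ i = p (w l) α := by omega
  · exact ⟨w, hw, by simp⟩
  · exact ⟨(coreflection_involutive (h2 α hα)).toPerm _ * w,
      mul_mem (Subgroup.subset_closure ⟨α, hα, fun _ => rfl⟩) hw, rfl⟩

theorem saturatedHull_eq_weylOrbit (hrefl : ∀ α ∈ Φ, ∀ β ∈ Φ, reflection p cr α β ∈ Φ)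
    {l : Xv} (hl : IsMinuscule p Φ l) : saturatedHull p Φ cr l = weylOrbit p Φ cr l :=
  subset_antisymm
    (Set.sInter_subset_of_mem ⟨isSaturatedSet_weylOrbit h2 hrefl hl, 1, one_mem _, rfl⟩)
    (Set.subset_sInter fun _ ⟨hS, hlS⟩ => weylOrbit_subset h2 hS hlS)

omit h2 in
theorem sub_coroot_mem_saturatedHull {l : Xv} {δ : X} (hδ : δ ∈ Φ) (hlδ : 1 ≤ p l δ) :
    l - cr δ ∈ saturatedHull p Φ cr l :=
  Set.mem_sInter.2 fun _ ⟨hS, hlS⟩ => by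
    simpa using hS l hlS δ hδ 1 (Or.inl ⟨zero_le_one, hlδ⟩)

end RootSystemPairing

open RootSystemPairing

theorem minuscule_iff_saturated_eq_weyl_orbit_general
    {X Xv : Type*} [AddCommGroup X] [AddCommGroup Xv]
    (p : Xv →+ X →+ ℤ) (Φ : Finset X) (cr : X → Xv)
    (h2 : ∀ α ∈ Φ, p (cr α) α = 2)
    (hrefl : ∀ α ∈ Φ, ∀ β ∈ Φ, β - p (cr α) β • α ∈ Φ)
    (l : Xv) :
    (∀ α ∈ Φ, p l α = 1 ∨ p l α = 0 ∨ p l α = -1) ↔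
      (⋂₀ {S : Set Xv | IsSaturatedSet p Φ cr S ∧ l ∈ S}) =
        {μ : Xv | ∃ w ∈ Subgroup.closure
            {f : Equiv.Perm Xv | ∃ α ∈ Φ, ∀ ν : Xv, f ν = ν - p ν α • cr α},
          w l = μ} := by
  change IsMinuscule p Φ l ↔ saturatedHull p Φ cr l = weylOrbit p Φ cr l
  refine ⟨saturatedHull_eq_weylOrbit h2 hrefl, fun hS => by_contra fun hl => ?_⟩
  obtain ⟨δ, hδ, hlδ⟩ := exists_two_le_of_not_isMinuscule h2 hrefl hl
  obtain ⟨w, hw, hwl⟩ : l - cr δ ∈ weylOrbit p Φ cr l :=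
    hS ▸ sub_coroot_mem_saturatedHull hδ (by omega)
  have hlt := rootForm_sub_coroot_lt (h2 δ hδ) (hrefl δ hδ) hδ hlδ
  rw [← hwl, rootForm_weylGroup_apply h2 hrefl hw] at hlt
  exact lt_irrefl _ hlt

/-- For a reduced root datum with base `Δ`, a dominant element `l` of the cocharacter lattice
is minuscule if and only if `S(l) = W·l`, where `S(l)` is the smallest saturated subset
containing `l` and `W` is the Weyl group. -/
theorem minuscule_iff_saturated_eq_weyl_orbit
    {X Xv : Type*} [AddCommGroup X] [AddCommGroup Xv]
    (p : Xv →+ X →+ ℤ) (Φ Δ : Finset X) (cr : X → Xv)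
    (h0 : (0 : X) ∉ Φ)
    (h2 : ∀ α ∈ Φ, p (cr α) α = 2)
    (hrefl : ∀ α ∈ Φ, ∀ β ∈ Φ, β - p (cr α) β • α ∈ Φ)
    (hcrrefl : ∀ α ∈ Φ, ∀ β ∈ Φ, cr (β - p (cr α) β • α) = cr β - p (cr β) α • cr α)
    (hreduced : ∀ α ∈ Φ, (2 : ℤ) • α ∉ Φ)
    (hΔΦ : (Δ : Set X) ⊆ (Φ : Set X))
    (hbase : ∀ β ∈ Φ, (∃ c : X → ℕ, β = ∑ α ∈ Δ, (c α : ℤ) • α) ∨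
                      (∃ c : X → ℕ, β = -∑ α ∈ Δ, (c α : ℤ) • α))
    (l : Xv)
    (hdom : ∀ α ∈ Δ, 0 ≤ p l α) :
    (∀ α ∈ Φ, p l α = 1 ∨ p l α = 0 ∨ p l α = -1) ↔
      (⋂₀ {S : Set Xv | IsSaturatedSet p Φ cr S ∧ l ∈ S}) =
        {μ : Xv | ∃ w ∈ Subgroup.closure
            {f : Equiv.Perm Xv | ∃ α ∈ Φ, ∀ ν : Xv, f ν = ν - p ν α • cr α},
          w l = μ} :=
  minuscule_iff_saturated_eq_weyl_orbit_general p Φ cr h2 hrefl l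
end

section
/- Every non-empty saturated subset of the coweight lattice P^∨ of a reduced root system contains a minuscule element. -/
/-- A subset `S` of the coweight lattice is saturated if for all `x ∈ S`, roots `α`, and
integers `i` between `0` and `⟨x, α⟩`, we have `x − i·α^∨ ∈ S`. -/
def IsSaturatedSubset {X P : Type*} [AddCommGroup X] [AddCommGroup P]
    (p : P →+ X →+ ℤ) (Φ : Finset X) (cr : X → P) (S : Set P) : Prop :=
  ∀ x ∈ S, ∀ α ∈ Φ, ∀ i : ℤ,
    ((0 ≤ i ∧ i ≤ p x α) ∨ (p x α ≤ i ∧ i ≤ 0)) → x - i • cr α ∈ S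

/-- Every non-empty saturated subset of the coweight lattice `P^∨` of a reduced root system
contains a minuscule element, i.e. an element `x` with `⟨x, α⟩ ∈ {−1, 0, 1}` for all roots. -/
theorem saturated_subset_contains_minuscule
    {X P : Type*} [AddCommGroup X] [AddCommGroup P]
    (p : P →+ X →+ ℤ)         -- the pairing of the coweight lattice with characters
    (Φ Δ : Finset X) (cr : X → P)
    (h0 : (0 : X) ∉ Φ)
    (h2 : ∀ α ∈ Φ, p (cr α) α = 2)
    (hrefl : ∀ α ∈ Φ, ∀ β ∈ Φ, β - p (cr α) β • α ∈ Φ)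
    (hcrrefl : ∀ α ∈ Φ, ∀ β ∈ Φ, cr (β - p (cr α) β • α) = cr β - p (cr β) α • cr α)
    (hreduced : ∀ α ∈ Φ, (2 : ℤ) • α ∉ Φ)
    (hΔΦ : (Δ : Set X) ⊆ (Φ : Set X))
    (hbase : ∀ β ∈ Φ, (∃ c : X → ℕ, β = ∑ α ∈ Δ, (c α : ℤ) • α) ∨
                      (∃ c : X → ℕ, β = -∑ α ∈ Δ, (c α : ℤ) • α))
    (ω : X → P)               -- the fundamental coweights, dual basis to the simple roots
    (hdual : ∀ α ∈ Δ, ∀ β ∈ Δ, (α = β → p (ω α) β = 1) ∧ (α ≠ β → p (ω α) β = 0))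
    (hspan : ∀ x : P, ∃ c : X → ℤ, x = ∑ α ∈ Δ, c α • ω α)
    (S : Set P) (hne : S.Nonempty) (hsat : IsSaturatedSubset p Φ cr S) :
    ∃ x ∈ S, ∀ α ∈ Φ, p x α = 1 ∨ p x α = 0 ∨ p x α = -1 := by
  classical
  set N : P → ℤ := fun x => ∑ β ∈ Φ, (p x β) ^ 2 with hNdef
  have hNnonneg : ∀ x, 0 ≤ N x := fun x => Finset.sum_nonneg fun β _ => sq_nonneg _
  have happ : ∀ (x : P) (i : ℤ) (y : P) (β : X),
      p (x - i • y) β = p x β - i * p y β := by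
    intro x i y β
    simp [map_sub, map_zsmul]
  -- expansion of the norm
  have hexpand : ∀ (x : P) (α : X) (i : ℤ),
      N (x - i • cr α) =
        N x - 2 * i * (∑ β ∈ Φ, p x β * p (cr α) β) + i ^ 2 * N (cr α) := by
    intro x α i
    simp only [hNdef]
    rw [Finset.mul_sum, Finset.mul_sum, ← Finset.sum_sub_distrib, ← Finset.sum_add_distrib]
    refine Finset.sum_congr rfl fun β _ => ?_
    rw [happ]; ring
  -- reflection invariance of the norm
  have hinv : ∀ (x : P), ∀ α ∈ Φ, N (x - p x α • cr α) = N x := by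
    intro x α hα
    have hfp : ∀ β : X, p (cr α) (β - p (cr α) β • α) = -(p (cr α) β) := by
      intro β
      rw [map_sub, map_zsmul, h2 α hα, smul_eq_mul]
      ring
    have hff : ∀ β ∈ Φ, (β - p (cr α) β • α) - p (cr α) (β - p (cr α) β • α) • α = β := by
      intro β _
      rw [hfp, neg_zsmul]
      abel
    simp only [hNdef]
    refine Finset.sum_nbij' (i := fun β => β - p (cr α) β • α)
      (j := fun β => β - p (cr α) β • α) (fun β hβ => hrefl α hα β hβ)
      (fun β hβ => hrefl α hα β hβ) (fun β hβ => hff β hβ) (fun β hβ => hff β hβ) ?_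
    intro β _
    have : p (x - p x α • cr α) β = p x (β - p (cr α) β • α) := by
      rw [happ, map_sub, map_zsmul, smul_eq_mul]
      ring
    rw [this]
  -- the norm of a coroot is at least 4
  have hNcr : ∀ α ∈ Φ, 4 ≤ N (cr α) := by
    intro α hα
    have : (p (cr α) α) ^ 2 ≤ N (cr α) :=
      Finset.single_le_sum (fun β _ => sq_nonneg (p (cr α) β)) hα
    rw [h2 α hα] at this
    linarith
  -- key step: a non-minuscule element of S can be replaced by one of smaller norm
  have hstep : ∀ x ∈ S, (¬ ∀ α ∈ Φ, p x α = 1 ∨ p x α = 0 ∨ p x α = -1) →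
      ∃ y ∈ S, N y < N x := by
    intro x hx hnot
    push_neg at hnot
    obtain ⟨α, hα, hval⟩ := hnot
    set n : ℤ := p x α with hn
    have hB : 2 * n * (∑ β ∈ Φ, p x β * p (cr α) β) = n ^ 2 * N (cr α) := by
      have := hinv x α hα
      rw [hexpand x α n] at this
      linarith
    have hn2 : 2 ≤ n ∨ n ≤ -2 := by omega
    rcases hn2 with hge | hle
    · refine ⟨x - (1 : ℤ) • cr α, hsat x hx α hα 1 (Or.inl ⟨by norm_num, by omega⟩), ?_⟩
      have hE := hexpand x α 1
      have hBn : 2 * (∑ β ∈ Φ, p x β * p (cr α) β) = n * N (cr α) := by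
        have hne0 : n ≠ 0 := by omega
        have : n * (2 * (∑ β ∈ Φ, p x β * p (cr α) β)) = n * (n * N (cr α)) := by
          linear_combination hB
        exact mul_left_cancel₀ hne0 this
      have h4 := hNcr α hα
      nlinarith [hE, hBn]
    · refine ⟨x - (-1 : ℤ) • cr α, hsat x hx α hα (-1) (Or.inr ⟨by omega, by norm_num⟩), ?_⟩
      have hE := hexpand x α (-1)
      have hBn : 2 * (∑ β ∈ Φ, p x β * p (cr α) β) = n * N (cr α) := by
        have hne0 : n ≠ 0 := by omega
        have : n * (2 * (∑ β ∈ Φ, p x β * p (cr α) β)) = n * (n * N (cr α)) := by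
          linear_combination hB
        exact mul_left_cancel₀ hne0 this
      have h4 := hNcr α hα
      nlinarith [hE, hBn]
  -- minimize the norm over S by strong induction
  obtain ⟨x₀, hx₀⟩ := hne
  have main : ∀ k : ℕ, ∀ x ∈ S, (N x).toNat ≤ k →
      ∃ x ∈ S, ∀ α ∈ Φ, p x α = 1 ∨ p x α = 0 ∨ p x α = -1 := by
    intro k
    induction k with
    | zero =>
      intro x hx hk
      by_cases hmin : ∀ α ∈ Φ, p x α = 1 ∨ p x α = 0 ∨ p x α = -1
      · exact ⟨x, hx, hmin⟩
      · obtain ⟨y, _, hy⟩ := hstep x hx hmin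
        have := hNnonneg y
        have := hNnonneg x
        omega
    | succ k ih =>
      intro x hx hk
      by_cases hmin : ∀ α ∈ Φ, p x α = 1 ∨ p x α = 0 ∨ p x α = -1
      · exact ⟨x, hx, hmin⟩
      · obtain ⟨y, hyS, hy⟩ := hstep x hx hmin
        have := hNnonneg y
        have := hNnonneg x
        exact ih y hyS (by omega)
  exact main (N x₀).toNat x₀ hx₀ le_rfl
end

section
/- Let (G, B, N, S) be a Tits system such that BsB/B is finite for every s ∈ S, and let q_w denote the cardinality of BwB/B for w in the Weyl group W. If σ, τ ∈ W satisfy ℓ(σ) + ℓ(τ) = ℓ(στ), then q_{στ} = q_τ · q_σ. -/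
open scoped Pointwise

section TitsAux

variable {I G W : Type*} [Group G] [Group W] {M : CoxeterMatrix I}
  {cs : CoxeterSystem M W} {B : Subgroup G} {C : W → Set G}

private lemma tits_nonempty
    (hdouble : ∀ w : W, ∃ g : G, C w = (B : Set G) * {g} * (B : Set G)) (w : W) :
    (C w).Nonempty := by
  obtain ⟨g, hg⟩ := hdouble w
  rw [hg]
  exact Set.Nonempty.mul (Set.Nonempty.mul ⟨1, B.one_mem⟩ (Set.singleton_nonempty g))
    ⟨1, B.one_mem⟩

private lemma tits_B_mul
    (hdouble : ∀ w : W, ∃ g : G, C w = (B : Set G) * {g} * (B : Set G)) (w : W) :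
    (B : Set G) * C w = C w := by
  obtain ⟨g, hg⟩ := hdouble w
  rw [hg, ← mul_assoc, ← mul_assoc, coe_mul_coe]

private lemma tits_mul_B
    (hdouble : ∀ w : W, ∃ g : G, C w = (B : Set G) * {g} * (B : Set G)) (w : W) :
    C w * (B : Set G) = C w := by
  obtain ⟨g, hg⟩ := hdouble w
  rw [hg, mul_assoc ((B : Set G) * {g}), coe_mul_coe]

/-- A nonempty `B`-biinvariant subset of a double coset `C w` is all of `C w`. -/
private lemma tits_biinv_eq
    (hdouble : ∀ w : W, ∃ g : G, C w = (B : Set G) * {g} * (B : Set G))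
    {X : Set G} (hne : X.Nonempty) (hl : (B : Set G) * X = X) (hr : X * (B : Set G) = X)
    {w : W} (hsub : X ⊆ C w) : X = C w := by
  obtain ⟨g, hg⟩ := hdouble w
  refine le_antisymm hsub ?_
  obtain ⟨x, hx⟩ := hne
  have hx' : x ∈ C w := hsub hx
  rw [hg] at hx'
  obtain ⟨u, hu, b', hb', rfl⟩ := hx'
  obtain ⟨b, hb, c, hc, rfl⟩ := hu
  rcases hc with rfl
  have hgX : c ∈ X := by
    have : (b : G)⁻¹ * (b * c * b') * b'⁻¹ ∈ (B : Set G) * X * (B : Set G) :=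
      Set.mul_mem_mul (Set.mul_mem_mul (B.inv_mem hb) hx) (B.inv_mem hb')
    rw [mul_assoc, hr, hl] at this
    simpa [mul_assoc] using this
  calc C w = (B : Set G) * {c} * (B : Set G) := hg
    _ ⊆ (B : Set G) * X * (B : Set G) := by
        gcongr <;> simp [Set.singleton_subset_iff, hgX, subset_rfl]
    _ = X := by rw [mul_assoc, hr, hl]

/-- The right-handed version of axiom T3, obtained by taking inverses. -/
private lemma tits_T3_right
    (hinv : ∀ w : W, C w⁻¹ = (C w)⁻¹)
    (hT3 : ∀ (i : I) (w : W), C (cs.simple i) * C w ⊆ C w ∪ C (cs.simple i * w))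
    (i : I) (w : W) :
    C w * C (cs.simple i) ⊆ C w ∪ C (w * cs.simple i) := by
  have h1 : (C w * C (cs.simple i))⁻¹ = C (cs.simple i) * C w⁻¹ := by
    rw [mul_inv_rev, ← hinv, ← hinv, cs.inv_simple]
  have h2 : C (cs.simple i) * C w⁻¹ ⊆ C w⁻¹ ∪ C (cs.simple i * w⁻¹) := hT3 i w⁻¹
  intro x hx
  have hx' : x⁻¹ ∈ (C w * C (cs.simple i))⁻¹ := by simpa using Set.inv_mem_inv.mpr hx
  rw [h1] at hx'
  rcases h2 hx' with h | h
  · left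
    have := Set.inv_mem_inv.mpr h
    rwa [← hinv, inv_inv, inv_inv] at this
  · right
    have := Set.inv_mem_inv.mpr h
    rw [← hinv, inv_inv] at this
    rwa [mul_inv_rev, inv_inv, cs.inv_simple] at this

/-- Key product lemma: if `ℓ(s i * w) = ℓ(w) + 1` then `C (s i) * C w = C (s i * w)`. -/
private lemma tits_prod
    (hdouble : ∀ w : W, ∃ g : G, C w = (B : Set G) * {g} * (B : Set G))
    (hone : C 1 = (B : Set G))
    (hdisj : Pairwise fun w w' : W => Disjoint (C w) (C w'))
    (hinv : ∀ w : W, C w⁻¹ = (C w)⁻¹)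
    (hT3 : ∀ (i : I) (w : W), C (cs.simple i) * C w ⊆ C w ∪ C (cs.simple i * w)) :
    ∀ (n : ℕ) (w : W), cs.length w = n → ∀ i : I,
      cs.length (cs.simple i * w) = cs.length w + 1 →
      C (cs.simple i) * C w = C (cs.simple i * w) := by
  intro n
  induction n using Nat.strong_induction_on with
  | _ n IH =>
    intro w hw i hi
    rcases eq_or_ne w 1 with rfl | hne
    · rw [hone, tits_mul_B hdouble, mul_one]
    · -- pick a right descent `s j` of `w`
      obtain ⟨j, hj⟩ := cs.exists_rightDescent_of_ne_one hne
      rw [cs.isRightDescent_iff] at hj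
      set w' : W := w * cs.simple j with hw'
      have hww' : w' * cs.simple j = w := cs.simple_mul_simple_cancel_right j
      have hlw' : cs.length w' = n - 1 := by omega
      have hn1 : 1 ≤ n := by
        rcases Nat.eq_zero_or_pos n with h0 | h
        · exact absurd (cs.length_eq_zero_iff.mp (hw.trans h0)) hne
        · exact h
      -- `C w = C w' * C (s j)` via the inductive hypothesis applied to `w'⁻¹`
      have hCw : C w' * C (cs.simple j) = C w := by
        have hlen_inv : cs.length (cs.simple j * w'⁻¹) = cs.length w'⁻¹ + 1 := by
          have : cs.simple j * w'⁻¹ = w⁻¹ := by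
            rw [hw', mul_inv_rev, cs.inv_simple, ← mul_assoc, cs.simple_mul_simple_self,
              one_mul]
          rw [this, cs.length_inv, cs.length_inv, hw, hlw']
          omega
        have hIH := IH (n - 1) (by omega) w'⁻¹ (by rw [cs.length_inv, hlw']) j hlen_inv
        have hstep : cs.simple j * w'⁻¹ = w⁻¹ := by
          rw [hw', mul_inv_rev, cs.inv_simple, ← mul_assoc, cs.simple_mul_simple_self,
            one_mul]
        rw [hstep] at hIH
        have := congrArg (fun X : Set G => X⁻¹) hIH
        simp only [mul_inv_rev, ← hinv, inv_inv, cs.inv_simple] at this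
        exact this
      -- `ℓ (s i * w') = ℓ w' + 1`
      have hlsw' : cs.length (cs.simple i * w') = cs.length w' + 1 := by
        have h1 : cs.length (cs.simple i * w' * cs.simple j) = n + 1 := by
          rw [mul_assoc, hww', hi, hw]
        have h2 := cs.length_mul_simple (cs.simple i * w') j
        have h3 := cs.length_mul_le (cs.simple i) w'
        rw [cs.length_simple] at h3
        omega
      have hIH2 := IH (n - 1) (by omega) w' hlw' i hlsw'
      -- subset in both upper bounds
      have hsub : C (cs.simple i) * C w ⊆ C (cs.simple i * w) := by
        intro x hx
        have hx1 : x ∈ C w ∪ C (cs.simple i * w) := hT3 i w hx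
        have hx2 : x ∈ C (cs.simple i * w') ∪ C (cs.simple i * w) := by
          have : C (cs.simple i) * C w = C (cs.simple i * w') * C (cs.simple j) := by
            rw [← hCw, ← mul_assoc, hIH2]
          rw [this] at hx
          have := tits_T3_right hinv hT3 j (cs.simple i * w') hx
          rwa [mul_assoc, hww'] at this
        rcases hx2 with h | h
        · rcases hx1 with h' | h'
          · exfalso
            have hne2 : cs.simple i * w' ≠ w := by
              intro hcontra
              have heqw : cs.simple i * w = w' := by
                rw [← hcontra, cs.simple_mul_simple_cancel_left]
              rw [heqw, hlw'] at hi
              omega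
            exact (hdisj hne2).le_bot ⟨h, h'⟩
          · exact h'
        · exact h
      -- upgrade to equality
      refine tits_biinv_eq hdouble ?_ ?_ ?_ hsub
      · exact (tits_nonempty hdouble _).mul (tits_nonempty hdouble _)
      · rw [← mul_assoc, tits_B_mul hdouble]
      · rw [mul_assoc, tits_mul_B hdouble]

/-- Well-definedness of the first factor: if `x y B = x' y' B` with `x, x' ∈ C s`,
`y, y' ∈ C w`, then `x B = x' B`. -/
private lemma tits_first_factor
    (hdouble : ∀ w : W, ∃ g : G, C w = (B : Set G) * {g} * (B : Set G))
    (hone : C 1 = (B : Set G))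
    (hdisj : Pairwise fun w w' : W => Disjoint (C w) (C w'))
    (hinv : ∀ w : W, C w⁻¹ = (C w)⁻¹)
    (hT3 : ∀ (i : I) (w : W), C (cs.simple i) * C w ⊆ C w ∪ C (cs.simple i * w))
    {i : I} {w : W} (hlen : cs.length (cs.simple i * w) = cs.length w + 1)
    {x x' y y' : G} (hx : x ∈ C (cs.simple i)) (hx' : x' ∈ C (cs.simple i))
    (hy : y ∈ C w) (hy' : y' ∈ C w)
    (h : (QuotientGroup.mk (x * y) : G ⧸ B) = QuotientGroup.mk (x' * y')) :
    (QuotientGroup.mk x : G ⧸ B) = QuotientGroup.mk x' := by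
  rw [QuotientGroup.eq] at h ⊢
  set u : G := x⁻¹ * x' with hu
  have humem : u ∈ C (cs.simple i) ∪ (B : Set G) := by
    have h1 : x⁻¹ ∈ C (cs.simple i) := by
      have : x⁻¹ ∈ (C (cs.simple i))⁻¹ := Set.inv_mem_inv.mpr hx
      rwa [← hinv, cs.inv_simple] at this
    have h2 : u ∈ C (cs.simple i) * C (cs.simple i) := Set.mul_mem_mul h1 hx'
    have h3 := hT3 i (cs.simple i) h2
    rwa [cs.simple_mul_simple_self, hone] at h3
  rcases humem with hcs | hb
  · exfalso
    -- then `u * y' ∈ C (s i * w)` but also `u * y' ∈ C w`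
    have h1 : u * y' ∈ C (cs.simple i) * C w := Set.mul_mem_mul hcs hy'
    have h2 : u * y' ∈ C (cs.simple i * w) := by
      rwa [tits_prod hdouble hone hdisj hinv hT3 (cs.length w) w rfl i hlen] at h1
    have hb2 : y⁻¹ * (u * y') ∈ (B : Set G) := by
      have : (x * y)⁻¹ * (x' * y') ∈ (B : Set G) := h
      have heq : (x * y)⁻¹ * (x' * y') = y⁻¹ * (u * y') := by rw [hu]; group
      rwa [heq] at this
    have h3 : u * y' ∈ C w := by
      have : y * (y⁻¹ * (u * y')) ∈ C w * (B : Set G) := Set.mul_mem_mul hy hb2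
      rw [tits_mul_B hdouble] at this
      simpa [mul_assoc] using this
    have hne : cs.simple i * w ≠ w := fun hc => by rw [hc] at hlen; omega
    exact (hdisj hne).le_bot ⟨h2, h3⟩
  · exact hb

/-- The counting lemma: `q_{s w} = q_s * q_w` when `ℓ(s w) = ℓ(w) + 1`. -/
private lemma tits_card_simple_mul
    (hdouble : ∀ w : W, ∃ g : G, C w = (B : Set G) * {g} * (B : Set G))
    (hone : C 1 = (B : Set G))
    (hdisj : Pairwise fun w w' : W => Disjoint (C w) (C w'))
    (hinv : ∀ w : W, C w⁻¹ = (C w)⁻¹)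
    (hT3 : ∀ (i : I) (w : W), C (cs.simple i) * C w ⊆ C w ∪ C (cs.simple i * w))
    {i : I} {w : W} (hlen : cs.length (cs.simple i * w) = cs.length w + 1) :
    Nat.card ((QuotientGroup.mk : G → G ⧸ B) '' C (cs.simple i * w)) =
      Nat.card ((QuotientGroup.mk : G → G ⧸ B) '' C (cs.simple i)) *
        Nat.card ((QuotientGroup.mk : G → G ⧸ B) '' C w) := by
  classical
  have hprod : C (cs.simple i) * C w = C (cs.simple i * w) :=
    tits_prod hdouble hone hdisj hinv hT3 (cs.length w) w rfl i hlen
  set mk : G → G ⧸ B := QuotientGroup.mk with hmk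
  -- representative choice
  have repx : ∀ p : (mk '' C (cs.simple i)), ∃ x, x ∈ C (cs.simple i) ∧ mk x = (p : G ⧸ B) :=
    fun p => p.property
  have repy : ∀ q : (mk '' C w), ∃ y, y ∈ C w ∧ mk y = (q : G ⧸ B) := fun q => q.property
  let f : (mk '' C (cs.simple i)) × (mk '' C w) → (mk '' C (cs.simple i * w)) :=
    fun pq => ⟨mk ((repx pq.1).choose * (repy pq.2).choose),
      ⟨(repx pq.1).choose * (repy pq.2).choose,
        hprod ▸ Set.mul_mem_mul (repx pq.1).choose_spec.1 (repy pq.2).choose_spec.1, rfl⟩⟩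
  have hbij : Function.Bijective f := by
    constructor
    · rintro ⟨p, q⟩ ⟨p', q'⟩ hfeq
      have heq : mk ((repx p).choose * (repy q).choose)
          = mk ((repx p').choose * (repy q').choose) := congrArg Subtype.val hfeq
      have hp : (p : G ⧸ B) = (p' : G ⧸ B) := by
        rw [← (repx p).choose_spec.2, ← (repx p').choose_spec.2]
        exact tits_first_factor hdouble hone hdisj hinv hT3 hlen
          (repx p).choose_spec.1 (repx p').choose_spec.1
          (repy q).choose_spec.1 (repy q').choose_spec.1 heq
      have hpp : p = p' := Subtype.ext hp
      subst hpp
      have hq : (q : G ⧸ B) = (q' : G ⧸ B) := by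
        rw [← (repy q).choose_spec.2, ← (repy q').choose_spec.2]
        rw [QuotientGroup.eq] at heq ⊢
        have hrw : ((repx p).choose * (repy q).choose)⁻¹ *
            ((repx p).choose * (repy q').choose)
            = (repy q).choose⁻¹ * (repy q').choose := by group
        rwa [hrw] at heq
      exact Prod.ext rfl (Subtype.ext hq)
    · rintro ⟨r, hr⟩
      obtain ⟨g, hg, hgr⟩ := hr
      rw [← hprod] at hg
      obtain ⟨x, hx, y, hy, rfl⟩ := hg
      set p : (mk '' C (cs.simple i)) := ⟨mk x, ⟨x, hx, rfl⟩⟩ with hp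
      have hx0 := (repx p).choose_spec
      set x₀ : G := (repx p).choose with hx₀def
      have hbmem : x₀⁻¹ * x ∈ B := by
        have : mk x₀ = mk x := hx0.2
        rwa [QuotientGroup.eq] at this
      have hy' : (x₀⁻¹ * x) * y ∈ C w := by
        have : (x₀⁻¹ * x) * y ∈ (B : Set G) * C w := Set.mul_mem_mul hbmem hy
        rwa [tits_B_mul hdouble] at this
      set q : (mk '' C w) := ⟨mk ((x₀⁻¹ * x) * y), ⟨_, hy', rfl⟩⟩ with hq
      refine ⟨⟨p, q⟩, ?_⟩
      apply Subtype.ext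
      show mk (x₀ * (repy q).choose) = r
      have hy0 := (repy q).choose_spec
      rw [← hgr]
      rw [QuotientGroup.eq]
      have hyB : ((x₀⁻¹ * x) * y)⁻¹ * (repy q).choose ∈ B := by
        have : mk ((x₀⁻¹ * x) * y) = mk (repy q).choose := hy0.2.symm
        rwa [QuotientGroup.eq] at this
      have hrw : (x₀ * (repy q).choose)⁻¹ * (x * y)
          = (((x₀⁻¹ * x) * y)⁻¹ * (repy q).choose)⁻¹ := by group
      rw [hrw]
      exact B.inv_mem hyB
  calc Nat.card ((QuotientGroup.mk : G → G ⧸ B) '' C (cs.simple i * w))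
      = Nat.card ((mk '' C (cs.simple i)) × (mk '' C w)) :=
        (Nat.card_congr (Equiv.ofBijective f hbij)).symm
    _ = _ := Nat.card_prod _ _

end TitsAux

/-- In a commensurable Tits system (presented by its Bruhat cells `C w = B n_w B` indexed by
the Coxeter group `W`), if `ℓ(σ) + ℓ(τ) = ℓ(στ)` then `q_{στ} = q_τ · q_σ`, where
`q_w = |BwB/B|`. -/
theorem tits_system_q_multiplicative
    {I G W : Type*} [Group G] [Group W] (M : CoxeterMatrix I)
    (cs : CoxeterSystem M W)
    (B : Subgroup G)
    (C : W → Set G)                              -- the Bruhat cell `BwB`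
    (hdouble : ∀ w : W, ∃ g : G, C w = (B : Set G) * {g} * (B : Set G))
    (hone : C 1 = (B : Set G))
    (hcover : (⋃ w : W, C w) = Set.univ)
    (hdisj : Pairwise fun w w' : W => Disjoint (C w) (C w'))
    (hinv : ∀ w : W, C w⁻¹ = (C w)⁻¹)
    (hT3 : ∀ (i : I) (w : W), C (cs.simple i) * C w ⊆ C w ∪ C (cs.simple i * w))
    (hfin : ∀ i : I,
      ((QuotientGroup.mk : G → G ⧸ B) '' C (cs.simple i)).Finite)
    (σ τ : W)
    (hlen : cs.length σ + cs.length τ = cs.length (σ * τ)) :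
    Nat.card ((QuotientGroup.mk : G → G ⧸ B) '' C (σ * τ)) =
      Nat.card ((QuotientGroup.mk : G → G ⧸ B) '' C τ) *
        Nat.card ((QuotientGroup.mk : G → G ⧸ B) '' C σ) := by
  have key : ∀ (n : ℕ) (σ τ : W), cs.length σ = n →
      cs.length σ + cs.length τ = cs.length (σ * τ) →
      Nat.card ((QuotientGroup.mk : G → G ⧸ B) '' C (σ * τ)) =
        Nat.card ((QuotientGroup.mk : G → G ⧸ B) '' C τ) *
          Nat.card ((QuotientGroup.mk : G → G ⧸ B) '' C σ) := by
    intro n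
    induction n with
    | zero =>
      intro σ τ hσ _
      have hσ1 : σ = 1 := cs.length_eq_zero_iff.mp hσ
      subst hσ1
      rw [one_mul, hone]
      have himg : (QuotientGroup.mk : G → G ⧸ B) '' (B : Set G)
          = {QuotientGroup.mk (1 : G)} := by
        ext z
        simp only [Set.mem_image, Set.mem_singleton_iff]
        constructor
        · rintro ⟨b, hb, rfl⟩
          rw [QuotientGroup.eq]
          simpa using B.inv_mem hb
        · rintro rfl
          exact ⟨1, B.one_mem, rfl⟩
      rw [himg]
      simp
    | succ n IH =>
      intro σ τ hσ hadd
      have hσne : σ ≠ 1 := by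
        intro h; rw [h, cs.length_one] at hσ; omega
      obtain ⟨i, hi⟩ := cs.exists_leftDescent_of_ne_one hσne
      rw [cs.isLeftDescent_iff] at hi
      set σ' : W := cs.simple i * σ with hσ'def
      have hσσ' : cs.simple i * σ' = σ := cs.simple_mul_simple_cancel_left i
      have hlσ' : cs.length σ' = n := by omega
      -- length bookkeeping
      have h1 : cs.length (σ' * τ) ≤ n + cs.length τ := by
        have := cs.length_mul_le σ' τ
        omega
      have h2 : cs.length (σ * τ) ≤ cs.length (σ' * τ) + 1 := by
        have := cs.length_mul_le (cs.simple i) (σ' * τ)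
        rw [cs.length_simple] at this
        rw [← hσσ', mul_assoc]
        omega
      have hadd' : cs.length σ' + cs.length τ = cs.length (σ' * τ) := by omega
      have hstep : cs.length (cs.simple i * (σ' * τ)) = cs.length (σ' * τ) + 1 := by
        rw [← mul_assoc, hσσ']
        omega
      have hstep2 : cs.length (cs.simple i * σ') = cs.length σ' + 1 := by
        rw [hσσ']
        omega
      have hq1 := tits_card_simple_mul (cs := cs) hdouble hone hdisj hinv hT3 hstep
      have hq2 := tits_card_simple_mul (cs := cs) hdouble hone hdisj hinv hT3 hstep2
      rw [← mul_assoc, hσσ'] at hq1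
      rw [hσσ'] at hq2
      rw [hq1, IH σ' τ hlσ' hadd', hq2]
      ring
  exact key (cs.length σ) σ τ rfl hlen
end

section
/- Let (G, B, N, S) be a commensurable Tits system, W its Weyl group with length function ℓ. For w ∈ W with reduced decomposition w = s₁⋯s_m, let 𝒦_{s_i} be a set of representatives of B/(B ∩ s_i B s_i⁻¹) and choose lifts s̃_i of s_i in N. Then BwB is the disjoint union, over tuples (κ₁, …, κ_m) ∈ 𝒦_{s₁} × ⋯ × 𝒦_{s_m}, of the left cosets κ₁s̃₁ κ₂s̃₂ ⋯ κ_m s̃_m B. In particular |BwB/B| = q_{s₁}⋯q_{s_m}. -/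
/-!
The heart of the matter is that `C(s) C(w) = C(sw)` whenever `ℓ(sw) > ℓ(w)`. By induction on
`ℓ(w)`: write `w = w' s'` with `ℓ(w') < ℓ(w)`; the induction hypothesis gives `C(w) = C(w') C(s')`
and `C(s) C(w') = C(sw')`, so the mirror image of (T3) puts `C(s) C(w)` inside
`C(sw') ∪ C(sw)`, while (T3) itself puts it inside `C(w) ∪ C(sw)`.

Consequently `C(s)` misses `C(w) C(w)⁻¹`. If `a, a' ∈ C(s)` and `q, q' ∈ C(w)` satisfy
`aqB = a'q'B`, then `a⁻¹a'` lies in `C(w) C(w)⁻¹` and also in `C(s) C(s) ⊆ B ∪ C(s)`, so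
`aB = a'B`. Hence products of coset representatives of `C(s)/B` and `C(w)/B` represent
`C(sw)/B` bijectively. Along a reduced word this yields the decomposition, and then the count.
-/

open scoped Pointwise

open Set DoubleCoset

section LeftCosets

variable {G : Type*} [Group G] {B : Subgroup G}

theorem mk_mem_image_mk_iff {X : Set G} (hX : X * B = X) {x : G} :
    (x : G ⧸ B) ∈ ((↑) : G → G ⧸ B) '' X ↔ x ∈ X := by
  rw [← mem_preimage, QuotientGroup.preimage_image_mk_eq_mul, hX]

theorem eq_biUnion_smul_of_image_eq {ι : Type*} {X : Set G} (hX : X * B = X) {f : ι → G}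
    {S : Set ι} (hf : (fun i => (f i : G ⧸ B)) '' S = ((↑) : G → G ⧸ B) '' X) :
    X = ⋃ i ∈ S, f i • (B : Set G) := by
  ext x
  simp only [← mk_mem_image_mk_iff hX, ← hf, mem_image, mem_iUnion, mem_leftCoset_iff,
    SetLike.mem_coe, QuotientGroup.eq, exists_prop]

theorem injOn_smul_of_injOn_mk {ι : Type*} {f : ι → G} {S : Set ι}
    (hf : InjOn (fun i => (f i : G ⧸ B)) S) : InjOn (fun i => f i • (B : Set G)) S :=
  fun _ hi _ hj hij => hf hi hj (QuotientGroup.eq.mpr ((leftCoset_eq_iff B).mp hij))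

theorem bijOn_mk_mul_doubleCoset {t : G} {K : Set G} (hKB : K ⊆ B)
    (hK : ∀ b ∈ B, ∃! κ, κ ∈ K ∧ κ⁻¹ * b ∈ B ⊓ B.map (MulAut.conj t).toMonoidHom) :
    BijOn (fun κ => ((κ * t : G) : G ⧸ B)) K ((↑) '' doubleCoset t B B) := by
  have mem_conj {x : G} : x ∈ B.map (MulAut.conj t).toMonoidHom ↔ t⁻¹ * x * t ∈ B := by
    simp only [Subgroup.mem_map_equiv, MulAut.conj_symm_apply]
  refine ⟨fun κ hκ => mem_image_of_mem _ (mem_doubleCoset.mpr ⟨κ, hKB hκ, 1, B.one_mem, by simp⟩),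
    fun κ hκ κ' hκ' hκκ' => ?_, ?_⟩
  · have hconj : κ⁻¹ * κ' ∈ B ⊓ B.map (MulAut.conj t).toMonoidHom := by
      refine ⟨B.mul_mem (B.inv_mem (hKB hκ)) (hKB hκ'), mem_conj.mpr ?_⟩
      simpa [mul_assoc] using QuotientGroup.eq.mp hκκ'
    exact (hK κ' (hKB hκ')).unique ⟨hκ, hconj⟩ ⟨hκ', by rw [inv_mul_cancel]; exact one_mem _⟩
  · rintro _ ⟨x, hx, rfl⟩
    obtain ⟨b, hb, b', hb', rfl⟩ := mem_doubleCoset.mp hx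
    obtain ⟨κ, ⟨hκ, -, hκb⟩, -⟩ := hK b hb
    refine ⟨κ, hκ, QuotientGroup.eq.mpr ?_⟩
    simpa [mul_assoc] using B.mul_mem (mem_conj.mp hκb) hb'

end LeftCosets

theorem Fin.bijOn_zero_tail {α : Type*} {n : ℕ} (K : Fin (n + 1) → Set α) :
    BijOn (fun κ => (κ 0, Fin.tail κ)) {κ | ∀ j, κ j ∈ K j}
      (K 0 ×ˢ {κ | ∀ j, κ j ∈ K j.succ}) :=
  (Fin.consEquiv fun _ => α).symm.bijOn fun κ => by
    simp [Fin.forall_fin_succ, Fin.tail]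

/-- The cells `C w = BwB` of a Tits system with Weyl group `W`, through the properties that the
Bruhat decomposition and axiom (T3) give them. -/
structure IsBruhatCells {I G W : Type*} [Group G] [Group W] {M : CoxeterMatrix I}
    (cs : CoxeterSystem M W) (B : Subgroup G) (C : W → Set G) : Prop where
  exists_eq_doubleCoset : ∀ w, ∃ g, C w = doubleCoset g B B
  one : C 1 = B
  pairwise_disjoint : Pairwise fun w w' => Disjoint (C w) (C w')
  inv : ∀ w, C w⁻¹ = (C w)⁻¹
  simple_mul_subset : ∀ i w, C (cs.simple i) * C w ⊆ C w ∪ C (cs.simple i * w)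

namespace IsBruhatCells

variable {I G W : Type*} [Group G] [Group W] {M : CoxeterMatrix I} {cs : CoxeterSystem M W}
  {B : Subgroup G} {C : W → Set G}

local prefix:100 "s" => cs.simple
local prefix:100 "ℓ" => cs.length

theorem nonempty (h : IsBruhatCells cs B C) (w : W) : (C w).Nonempty := by
  obtain ⟨g, hg⟩ := h.exists_eq_doubleCoset w
  exact ⟨g, hg ▸ mem_doubleCoset_self B B g⟩

theorem subgroup_mul (h : IsBruhatCells cs B C) (w : W) : (B : Set G) * C w = C w := by
  obtain ⟨g, hg⟩ := h.exists_eq_doubleCoset w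
  rw [hg, doubleCoset, ← mul_assoc, ← mul_assoc, coe_mul_coe]

theorem mul_subgroup (h : IsBruhatCells cs B C) (w : W) : C w * B = C w := by
  obtain ⟨g, hg⟩ := h.exists_eq_doubleCoset w
  rw [hg, doubleCoset, mul_assoc _ (B : Set G), coe_mul_coe]

/-- A product of cells is a union of cells, so it is a single cell as soon as it lies in one. -/
theorem mul_eq_of_subset (h : IsBruhatCells cs B C) {u v w : W} (huv : C u * C v ⊆ C w) :
    C u * C v = C w := by
  obtain ⟨g, hg⟩ := (h.nonempty u).mul (h.nonempty v)
  obtain ⟨g₀, hg₀⟩ := h.exists_eq_doubleCoset w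
  refine huv.antisymm ?_
  calc C w = (B : Set G) * {g} * B := by
        rw [hg₀, ← doubleCoset_eq_of_mem (hg₀ ▸ huv hg), doubleCoset]
    _ ⊆ (B : Set G) * (C u * C v) * B := by gcongr; exact singleton_subset_iff.mpr hg
    _ = C u * C v := by rw [← mul_assoc, h.subgroup_mul, mul_assoc, h.mul_subgroup]

theorem mul_simple_subset (h : IsBruhatCells cs B C) (w : W) (i : I) :
    C w * C (s i) ⊆ C w ∪ C (w * s i) := by
  rw [← inv_subset_inv]
  simpa only [mul_inv_rev, union_inv, ← h.inv, cs.inv_simple, inv_inv] using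
    h.simple_mul_subset i w⁻¹

theorem simple_mul_eq (h : IsBruhatCells cs B C) {i : I} {w : W} (hlt : ℓ w < ℓ (s i * w)) :
    C (s i) * C w = C (s i * w) := by
  induction hn : ℓ w using Nat.strong_induction_on generalizing i w with
  | _ n ih =>
  rcases eq_or_ne w 1 with rfl | hw
  · rw [mul_one, h.one, h.mul_subgroup]
  obtain ⟨j, hj⟩ := cs.exists_rightDescent_of_ne_one hw
  obtain ⟨w, rfl⟩ : ∃ w', w = w' * s j := ⟨w * s j, by simp [mul_assoc]⟩
  replace hj : ℓ w < ℓ (w * s j) := by simpa [CoxeterSystem.IsRightDescent, mul_assoc] using hj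
  have hlen_le : ℓ (s i * (w * s j)) ≤ ℓ (s i * w) + 1 := by
    simpa [mul_assoc] using cs.length_mul_le (s i * w) (s j)
  have hlt_w : ℓ w < ℓ (s i * w) := by
    have := cs.length_mul_simple w j
    have := cs.length_simple_mul w i
    omega
  have hC : C w * C (s j) = C (w * s j) := by
    have := congrArg (·⁻¹) (ih (ℓ w) (hn ▸ hj) (i := j) (w := w⁻¹)
      (by rwa [cs.length_inv, ← cs.inv_simple j, ← mul_inv_rev, cs.length_inv])
      (cs.length_inv _))
    simpa [mul_inv_rev, ← h.inv] using this
  have hne : s i * w ≠ w * s j := by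
    rintro hiw
    have : s i * (w * s j) = w := by
      rw [← hiw, ← mul_assoc, cs.simple_mul_simple_self, one_mul]
    rw [this] at hlt
    omega
  refine h.mul_eq_of_subset fun x hx => ?_
  have hx' : x ∈ C (s i * w) ∪ C (s i * (w * s j)) := by
    rw [← hC, ← mul_assoc, ih _ (hn ▸ hj) hlt_w rfl] at hx
    simpa [mul_assoc] using h.mul_simple_subset _ _ hx
  refine hx'.elim (fun hx₁ => (h.simple_mul_subset i _ hx).resolve_left fun hx₂ => ?_) id
  exact (h.pairwise_disjoint hne).ne_of_mem hx₁ hx₂ rfl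

theorem disjoint_simple_mul_inv (h : IsBruhatCells cs B C) {i : I} {w : W}
    (hlt : ℓ w < ℓ (s i * w)) : Disjoint (C (s i)) (C w * (C w)⁻¹) := by
  rw [disjoint_left]
  rintro _ hx ⟨y, hy, z, hz, rfl⟩
  have hyC : y ∈ C (s i * w) := by
    rw [← h.simple_mul_eq hlt]
    exact ⟨y * z, hx, z⁻¹, hz, by simp⟩
  have hne : s i * w ≠ w := fun hw => hlt.ne (congrArg cs.length hw).symm
  exact (h.pairwise_disjoint hne).ne_of_mem hyC hy rfl

theorem mk_eq_of_mk_mul_eq (h : IsBruhatCells cs B C) {i : I} {w : W}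
    (hlt : ℓ w < ℓ (s i * w)) {a a' q q' : G} (ha : a ∈ C (s i)) (ha' : a' ∈ C (s i))
    (hq : q ∈ C w) (hq' : q' ∈ C w)
    (heq : ((a * q : G) : G ⧸ B) = (a' * q' : G)) : (a : G ⧸ B) = a' := by
  rw [QuotientGroup.eq] at heq ⊢
  have h_ss : a⁻¹ * a' ∈ C (s i) ∪ C 1 := by
    rw [← cs.simple_mul_simple_self i]
    refine h.simple_mul_subset i _ ⟨a⁻¹, ?_, a', ha', rfl⟩
    rw [← cs.inv_simple, h.inv]
    exact inv_mem_inv.mpr ha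
  have h_ww : a⁻¹ * a' ∈ C w * (C w)⁻¹ :=
    ⟨q * ((a * q)⁻¹ * (a' * q')), h.mul_subgroup w ▸ mul_mem_mul hq heq, q'⁻¹,
      inv_mem_inv.mpr hq', by group⟩
  rw [← SetLike.mem_coe, ← h.one]
  exact h_ss.resolve_left fun h_s => (h.disjoint_simple_mul_inv hlt).ne_of_mem h_s h_ww rfl

theorem bijOn_mul (h : IsBruhatCells cs B C) {i : I} {w : W} (hlt : ℓ w < ℓ (s i * w))
    {α β : Type*} {f : α → G} {g : β → G} {S : Set α} {T : Set β}
    (hf : BijOn (fun a => (f a : G ⧸ B)) S ((↑) '' C (s i)))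
    (hg : BijOn (fun b => (g b : G ⧸ B)) T ((↑) '' C w)) :
    BijOn (fun p : α × β => ((f p.1 * g p.2 : G) : G ⧸ B)) (S ×ˢ T) ((↑) '' C (s i * w)) := by
  have hfC {a} (ha : a ∈ S) : f a ∈ C (s i) :=
    (mk_mem_image_mk_iff (h.mul_subgroup _)).mp (hf.mapsTo ha)
  have hgC {b} (hb : b ∈ T) : g b ∈ C w :=
    (mk_mem_image_mk_iff (h.mul_subgroup _)).mp (hg.mapsTo hb)
  have mk_mul (x y : G) : ((x * y : G) : G ⧸ B) = x • (y : G ⧸ B) := rfl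
  rw [← h.simple_mul_eq hlt]
  refine ⟨fun p hp => mem_image_of_mem _ (mul_mem_mul (hfC hp.1) (hgC hp.2)), ?_, ?_⟩
  · rintro ⟨a, b⟩ ⟨ha, hb⟩ ⟨a', b'⟩ ⟨ha', hb'⟩ heq
    obtain rfl : a = a' :=
      hf.injOn ha ha' (h.mk_eq_of_mk_mul_eq hlt (hfC ha) (hfC ha') (hgC hb) (hgC hb') heq)
    simp only [mk_mul, smul_left_cancel_iff] at heq
    exact congrArg (a, ·) (hg.injOn hb hb' heq)
  · rintro _ ⟨_, ⟨y, hy, z, hz, rfl⟩, rfl⟩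
    obtain ⟨a, ha, hay⟩ := hf.surjOn (mem_image_of_mem _ hy)
    obtain ⟨c, hc, rfl⟩ : ∃ c ∈ B, f a * c = y := ⟨_, QuotientGroup.eq.mp hay, by group⟩
    have hcz : c * z ∈ C w := h.subgroup_mul w ▸ mul_mem_mul hc hz
    obtain ⟨b, hb, hbz⟩ := hg.surjOn (mem_image_of_mem _ hcz)
    refine ⟨(a, b), ⟨ha, hb⟩, ?_⟩
    simp only [mul_assoc, mk_mul, hbz]

theorem bijOn_wordProd (h : IsBruhatCells cs B C) {ω : List I} (hω : cs.IsReduced ω)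
    (t : Fin ω.length → G) (K : Fin ω.length → Set G)
    (hK : ∀ j, BijOn (fun κ => ((κ * t j : G) : G ⧸ B)) (K j) ((↑) '' C (s (ω.get j)))) :
    BijOn (fun κ : Fin ω.length → G => ((List.ofFn fun j => κ j * t j).prod : G ⧸ B))
      {κ | ∀ j, κ j ∈ K j} ((↑) '' C (cs.wordProd ω)) := by
  induction ω with
  | nil =>
    refine ⟨fun _ _ => ⟨1, by simp [h.one]⟩, fun _ _ _ _ _ => funext fun j => j.elim0, ?_⟩
    rintro _ ⟨x, hx, rfl⟩
    rw [cs.wordProd_nil, h.one] at hx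
    exact ⟨Fin.elim0, fun j => j.elim0, QuotientGroup.eq.mpr (by simpa using hx)⟩
  | cons i ω ih =>
    have hlt : ℓ (cs.wordProd ω) < ℓ (s i * cs.wordProd ω) := by
      have := cs.length_wordProd_le ω
      rw [← cs.wordProd_cons, hω.eq, List.length_cons]
      omega
    have htail := ih (by simpa using hω.drop 1) (fun j => t j.succ) (fun j => K j.succ)
      fun j => hK j.succ
    rw [cs.wordProd_cons]
    refine ((h.bijOn_mul hlt (hK 0) htail).comp (Fin.bijOn_zero_tail K)).congr
      fun κ _ => ?_
    simp [List.ofFn_succ, mul_assoc, Fin.tail]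

end IsBruhatCells

theorem tits_system_bruhat_cell_decomposition_general
    {I G W : Type*} [Group G] [Group W] (M : CoxeterMatrix I)
    (cs : CoxeterSystem M W)
    (B : Subgroup G)
    (C : W → Set G)                              -- the Bruhat cell `BwB`
    (hdouble : ∀ w : W, ∃ g : G, C w = (B : Set G) * {g} * (B : Set G))
    (hone : C 1 = (B : Set G))
    (hdisj : Pairwise fun w w' : W => Disjoint (C w) (C w'))
    (hinv : ∀ w : W, C w⁻¹ = (C w)⁻¹)
    (hT3 : ∀ (i : I) (w : W), C (cs.simple i) * C w ⊆ C w ∪ C (cs.simple i * w))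
    (w : W) (ω : List I) (hred : cs.IsReduced ω) (hw : cs.wordProd ω = w)
    (t : Fin ω.length → G)                       -- lifts of the simple reflections of `ω`
    (ht : ∀ i : Fin ω.length,
      C (cs.simple (ω.get i)) = (B : Set G) * {t i} * (B : Set G))
    (𝒦 : Fin ω.length → Set G)                   -- representatives of `B/(B ∩ t_i B t_i⁻¹)`
    (h𝒦B : ∀ i, 𝒦 i ⊆ (B : Set G))
    (h𝒦rep : ∀ i, ∀ b ∈ B, ∃! κ, κ ∈ 𝒦 i ∧
      κ⁻¹ * b ∈ B ⊓ B.map (MulAut.conj (t i)).toMonoidHom) :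
    (C w = ⋃ κ ∈ {κ : Fin ω.length → G | ∀ i, κ i ∈ 𝒦 i},
        (List.ofFn fun i => κ i * t i).prod • (B : Set G)) ∧
    Set.InjOn (fun κ : Fin ω.length → G => (List.ofFn fun i => κ i * t i).prod • (B : Set G))
      {κ | ∀ i, κ i ∈ 𝒦 i} ∧
    Nat.card ((QuotientGroup.mk : G → G ⧸ B) '' C w) =
      ∏ i : Fin ω.length,
        Nat.card ((QuotientGroup.mk : G → G ⧸ B) '' C (cs.simple (ω.get i))) := by
  subst hw
  have h : IsBruhatCells cs B C := ⟨hdouble, hone, hdisj, hinv, hT3⟩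
  have hsimple (i : Fin ω.length) :
      BijOn (fun κ => ((κ * t i : G) : G ⧸ B)) (𝒦 i) ((↑) '' C (cs.simple (ω.get i))) := by
    rw [ht i]
    exact bijOn_mk_mul_doubleCoset (h𝒦B i) (h𝒦rep i)
  have hbij := h.bijOn_wordProd hred t 𝒦 hsimple
  refine ⟨eq_biUnion_smul_of_image_eq (h.mul_subgroup _) hbij.image_eq,
    injOn_smul_of_injOn_mk hbij.injOn, ?_⟩
  calc Nat.card ((QuotientGroup.mk : G → G ⧸ B) '' C (cs.wordProd ω))
      = Nat.card {κ : Fin ω.length → G | ∀ i, κ i ∈ 𝒦 i} :=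
        (Nat.card_congr hbij.equiv).symm
    _ = ∏ i, Nat.card (𝒦 i) := (Nat.card_congr Equiv.subtypePiEquivPi).trans Nat.card_pi
    _ = _ := Finset.prod_congr rfl fun i _ => Nat.card_congr (hsimple i).equiv

/-- Decomposition of a Bruhat cell in a commensurable Tits system: if `w = s₁⋯s_m` is a
reduced word, `t i` are lifts of the simple reflections and `𝒦 i` sets of representatives of
`B/(B ∩ t_i B t_i⁻¹)`, then `BwB` is the disjoint union of the left cosets
`κ₁t₁⋯κ_mt_m B` over tuples `(κ₁, …, κ_m)`, and `|BwB/B| = q_{s₁}⋯q_{s_m}`. -/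
theorem tits_system_bruhat_cell_decomposition
    {I G W : Type*} [Group G] [Group W] (M : CoxeterMatrix I)
    (cs : CoxeterSystem M W)
    (B : Subgroup G)
    (C : W → Set G)                              -- the Bruhat cell `BwB`
    (hdouble : ∀ w : W, ∃ g : G, C w = (B : Set G) * {g} * (B : Set G))
    (hone : C 1 = (B : Set G))
    (hcover : (⋃ w : W, C w) = Set.univ)
    (hdisj : Pairwise fun w w' : W => Disjoint (C w) (C w'))
    (hinv : ∀ w : W, C w⁻¹ = (C w)⁻¹)
    (hT3 : ∀ (i : I) (w : W), C (cs.simple i) * C w ⊆ C w ∪ C (cs.simple i * w))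
    (hfin : ∀ i : I, ((QuotientGroup.mk : G → G ⧸ B) '' C (cs.simple i)).Finite)
    (w : W) (ω : List I) (hred : cs.IsReduced ω) (hw : cs.wordProd ω = w)
    (t : Fin ω.length → G)                       -- lifts of the simple reflections of `ω`
    (ht : ∀ i : Fin ω.length,
      C (cs.simple (ω.get i)) = (B : Set G) * {t i} * (B : Set G))
    (𝒦 : Fin ω.length → Set G)                   -- representatives of `B/(B ∩ t_i B t_i⁻¹)`
    (h𝒦B : ∀ i, 𝒦 i ⊆ (B : Set G))
    (h𝒦rep : ∀ i, ∀ b ∈ B, ∃! κ, κ ∈ 𝒦 i ∧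
      κ⁻¹ * b ∈ B ⊓ B.map (MulAut.conj (t i)).toMonoidHom) :
    (C w = ⋃ κ ∈ {κ : Fin ω.length → G | ∀ i, κ i ∈ 𝒦 i},
        (List.ofFn fun i => κ i * t i).prod • (B : Set G)) ∧
    Set.InjOn (fun κ : Fin ω.length → G => (List.ofFn fun i => κ i * t i).prod • (B : Set G))
      {κ | ∀ i, κ i ∈ 𝒦 i} ∧
    Nat.card ((QuotientGroup.mk : G → G ⧸ B) '' C w) =
      ∏ i : Fin ω.length,
        Nat.card ((QuotientGroup.mk : G → G ⧸ B) '' C (cs.simple (ω.get i))) :=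
  tits_system_bruhat_cell_decomposition_general M cs B C hdouble hone hdisj hinv hT3 w ω hred hw t
    ht 𝒦 h𝒦B h𝒦rep
end

section
/- Let (W, S) be a Coxeter system, X, Y ⊆ S, W_X, W_Y the standard parabolic subgroups, and let σ ∈ W be the unique minimal-length element of a double coset W_X σ W_Y. Then W_X ∩ σW_Yσ⁻¹ is a standard parabolic subgroup of (W_X, X), and for any minimal-length coset representative τ of W_X/(W_X ∩ σW_Yσ⁻¹) and any υ ∈ W_Y one has ℓ(τσυ) = ℓ(τ) + ℓ(σ) + ℓ(υ). -/
/-!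
Everything rests on the exchange condition for simple reflections: if `s i` is a left descent of
`π ω`, then `s i` occurs in the left inversion sequence of `ω`, so deleting one letter of `ω`
gives a word for `s i * π ω`. It comes from the sign representation of `W` on `W × {±1}`, where
`s i` acts by `(t, ε) ↦ (s i * t * s i, ±ε)`, the sign flipping iff `t = s i`: along a word `ω`
the sign picked up at `t` is `-1` to the number of occurrences of `t` in the left inversion
sequence, so the parity of that number depends on `π ω` only.

By exchange, an element `a` of minimal length in `a W_Y` has `ℓ (a u) = ℓ a + ℓ u` for all
`u ∈ W_Y`, and an element without right descents in `Y` is already minimal. For `σ` this makes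
lengths add on both sides. If `x ∈ X` is a left descent of `w = σ u σ⁻¹ ∈ W_X ∩ σ W_Y σ⁻¹`, then
`s x` exchanges into the `u`-part of a reduced word for `σ u`, so `σ⁻¹ s x σ ∈ W_Y` has length one
and is some `s y` with `y ∈ Y`; induction on `ℓ w` shows that such `s x` generate the
intersection. Finally, a right descent `y ∈ Y` of `τ σ` would exchange into `τ` and give the
shorter element `τ (σ s y σ⁻¹)` of `τ (W_X ∩ σ W_Y σ⁻¹)`; so `τ σ` is minimal in `τ σ W_Y`.
-/

namespace CoxeterSystem

open List

variable {B W : Type*} [Group W] {M : CoxeterMatrix B} (cs : CoxeterSystem M W)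

local prefix:100 "s" => cs.simple
local prefix:100 "π" => cs.wordProd
local prefix:100 "ℓ" => cs.length
local prefix:100 "lis" => cs.leftInvSeq

theorem prod_map_alternatingWord_two_mul {G : Type*} [Monoid G] (f : B → G) (i j : B) (m : ℕ) :
    ((alternatingWord i j (2 * m)).map f).prod = (f i * f j) ^ m := by
  induction m with
  | zero => simp [alternatingWord]
  | succ m ih =>
    rw [show 2 * (m + 1) = 2 * m + 1 + 1 by ring, alternatingWord_succ', alternatingWord_succ',
      if_neg (by simp [parity_simps]), if_pos (by simp)]
    simp [ih, pow_succ', mul_assoc]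

theorem conj_simple_conj_simple (i : B) (t : W) : MulAut.conj (s i) (MulAut.conj (s i) t) = t := by
  rw [← MulAut.mul_apply, ← map_mul, cs.simple_mul_simple_self, map_one, MulAut.one_apply]

theorem conj_simple_eq_simple_iff (i : B) (t : W) : MulAut.conj (s i) t = s i ↔ t = s i :=
  (MulAut.conj (s i)).injective.eq_iff' (by simp)

theorem leftInvSeq_alternatingWord (i j : B) (p : ℕ) :
    lis (alternatingWord i j (2 * p)) =
      (range (2 * p)).map fun k => π (alternatingWord j i (2 * k + 1)) :=
  ext_getElem (by simp) fun k _ hk => by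
    simp [cs.getElem_leftInvSeq_alternatingWord i j p k (by simpa using hk)]

section SignRepresentation

variable [DecidableEq W]

def signPerm (i : B) : Equiv.Perm (W × ℤˣ) :=
  Function.Involutive.toPerm
    (fun p => (MulAut.conj (s i) p.1, if p.1 = s i then -p.2 else p.2)) <| by
      rintro ⟨t, ε⟩
      simp only [Prod.mk.injEq, cs.conj_simple_conj_simple, cs.conj_simple_eq_simple_iff, true_and]
      split_ifs <;> simp

theorem prod_map_signPerm_apply (ω : List B) (t : W) (ε : ℤˣ) :
    (ω.map cs.signPerm).prod (t, ε) =
      (MulAut.conj (π ω) t, (-1) ^ (lis ω).count (MulAut.conj (π ω) t) * ε) := by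
  induction ω with
  | nil => simp
  | cons i ω ih =>
    simp only [map_cons, prod_cons, Equiv.Perm.mul_apply, ih, signPerm,
      wordProd_cons, map_mul, MulAut.mul_apply, leftInvSeq,
      count_cons, count_map_of_injective _ _ (MulAut.conj (s i)).injective, beq_iff_eq,
      eq_comm (a := s i), cs.conj_simple_eq_simple_iff]
    split_ifs <;> simp_all [pow_succ]

theorem even_count_leftInvSeq_alternatingWord (i j : B) (t : W) :
    Even ((lis (alternatingWord i j (2 * M i j))).count t) := by
  have hperiod : ∀ k, π (alternatingWord j i (2 * (M i j + k) + 1)) =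
      π (alternatingWord j i (2 * k + 1)) := fun k => by
    simp only [prod_alternatingWord_eq_mul_pow, Nat.not_even_bit1, if_false,
      Nat.mul_add_div two_pos, pow_add, cs.simple_mul_simple_pow', one_mul]
  rw [leftInvSeq_alternatingWord, two_mul, range_add, map_append, map_map, count_append]
  simp only [Function.comp_def, hperiod]
  exact ⟨_, rfl⟩

theorem isLiftable_signPerm : M.IsLiftable cs.signPerm := by
  intro i j
  have hrel : π (alternatingWord i j (2 * M i j)) = 1 := by
    rw [prod_alternatingWord_eq_mul_pow, if_pos (even_two_mul _),
      Nat.mul_div_cancel_left _ two_pos, one_mul, cs.simple_mul_simple_pow]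
  ext ⟨t, ε⟩ : 1
  obtain ⟨c, hc⟩ := cs.even_count_leftInvSeq_alternatingWord i j t
  rw [← prod_map_alternatingWord_two_mul, prod_map_signPerm_apply, hrel, map_one,
    MulAut.one_apply, hc, pow_add, Int.units_mul_self, one_mul]
  rfl

def signRep : W →* Equiv.Perm (W × ℤˣ) := cs.lift ⟨cs.signPerm, cs.isLiftable_signPerm⟩

theorem signRep_wordProd (ω : List B) : cs.signRep (π ω) = (ω.map cs.signPerm).prod := by
  induction ω with
  | nil => simp
  | cons i ω ih => rw [wordProd_cons, map_mul, ih, signRep, lift_apply_simple, map_cons, prod_cons]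

theorem neg_one_pow_count_leftInvSeq_eq {ω ω' : List B} (h : π ω = π ω') (t : W) :
    (-1 : ℤˣ) ^ (lis ω).count t = (-1) ^ (lis ω').count t := by
  have key := congrArg (fun g => (g ((MulAut.conj (π ω)).symm t, 1)).2)
    ((cs.signRep_wordProd ω).symm.trans ((congrArg cs.signRep h).trans (cs.signRep_wordProd ω')))
  simp only [prod_map_signPerm_apply] at key
  rwa [← h, MulEquiv.apply_symm_apply, mul_one, mul_one] at key

end SignRepresentation

theorem simple_mem_leftInvSeq {ω : List B} {i : B}
    (h : cs.IsLeftDescent (π ω) i) : s i ∈ lis ω := by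
  classical
  by_contra hi
  obtain ⟨κ, hκ, hκω⟩ := cs.exists_isReduced (s i * π ω)
  have hcount : (lis (i :: ω)).count (s i) = 1 := by
    have hconj := count_map_of_injective (lis ω) _ (MulAut.conj (s i)).injective (s i)
    rw [show MulAut.conj (s i) (s i) = s i by simp] at hconj
    rw [leftInvSeq, count_cons_self, hconj, count_eq_zero_of_not_mem hi]
  have hmem : s i ∈ lis κ := by
    have := cs.neg_one_pow_count_leftInvSeq_eq (ω := i :: ω) (ω' := κ)
      (by rw [wordProd_cons, hκω]) (s i)
    rw [← count_pos_iff, Nat.pos_iff_ne_zero]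
    intro h0
    simp [hcount, h0] at this
  have := (cs.isLeftInversion_of_mem_leftInvSeq hκ hmem).2
  rw [← hκω, simple_mul_simple_cancel_left] at this
  exact lt_asymm h this

theorem exists_sublist_wordProd_eq_simple_mul {ω : List B} {i : B}
    (h : cs.IsLeftDescent (π ω) i) :
    ∃ ω', ω' <+ ω ∧ ω'.length + 1 = ω.length ∧ π ω' = s i * π ω := by
  obtain ⟨j, hj, hji⟩ := List.mem_iff_getElem.mp (cs.simple_mem_leftInvSeq h)
  rw [length_leftInvSeq] at hj
  refine ⟨ω.eraseIdx j, eraseIdx_sublist _ _, length_eraseIdx_add_one hj, ?_⟩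
  rw [← getD_leftInvSeq_mul_wordProd, getD_eq_getElem _ _ (by simpa), hji]

theorem isLeftDescent_or_exists_sublist_of_isLeftDescent_mul {a : W} {β : List B} {i : B}
    (h : cs.IsLeftDescent (a * π β) i) :
    cs.IsLeftDescent a i ∨
      ∃ β', β' <+ β ∧ β'.length < β.length ∧ s i * (a * π β) = a * π β' := by
  obtain ⟨α, hα, rfl⟩ := cs.exists_isReduced a
  rw [← wordProd_append] at h
  obtain ⟨ω, hsub, hlen, hω⟩ := cs.exists_sublist_wordProd_eq_simple_mul h
  obtain ⟨α', β', rfl, hα', hβ'⟩ := sublist_append_iff.mp hsub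
  rw [length_append, length_append] at hlen
  rw [wordProd_append, wordProd_append] at hω
  have := hβ'.length_le
  rcases hα'.length_le.lt_or_eq with hlt | heq
  · obtain rfl := hβ'.eq_of_length (by omega)
    left
    have hα'α : π α' = s i * π α := by
      rw [← mul_assoc] at hω
      exact mul_right_cancel hω
    calc ℓ (s i * π α) = ℓ (π α') := by rw [hα'α]
      _ ≤ α'.length := cs.length_wordProd_le α'
      _ < ℓ (π α) := hα.symm ▸ hlt
  · obtain rfl := hα'.eq_of_length heq
    exact Or.inr ⟨β', hβ', by omega, hω.symm⟩

theorem isRightDescent_or_exists_sublist_of_isRightDescent_mul {α : List B} {b : W} {i : B}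
    (h : cs.IsRightDescent (π α * b) i) :
    cs.IsRightDescent b i ∨
      ∃ α', α' <+ α ∧ α'.length < α.length ∧ π α * b * s i = π α' * b := by
  rw [← isLeftDescent_inv_iff, mul_inv_rev, ← wordProd_reverse] at h
  rcases cs.isLeftDescent_or_exists_sublist_of_isLeftDescent_mul h with hb | ⟨β, hβ, hlen, heq⟩
  · exact Or.inl (cs.isLeftDescent_inv_iff.mp hb)
  · refine Or.inr ⟨β.reverse, reverse_sublist.mp (by rwa [reverse_reverse]),
      by simpa using hlen, ?_⟩
    simpa [mul_assoc] using congrArg (·⁻¹) heq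

theorem exists_isReduced_sublist (ω : List B) :
    ∃ ω', ω' <+ ω ∧ cs.IsReduced ω' ∧ π ω' = π ω := by
  induction ω with
  | nil => exact ⟨[], Sublist.slnil, by simp [IsReduced], rfl⟩
  | cons i ω ih =>
    obtain ⟨ω₀, hsub, hred, hprod⟩ := ih
    rcases cs.length_simple_mul (π ω₀) i with hup | hdown
    · refine ⟨i :: ω₀, hsub.cons_cons i, ?_, by rw [wordProd_cons, wordProd_cons, hprod]⟩
      rw [IsReduced, wordProd_cons, hup, hred, length_cons]
    · obtain ⟨ω₁, hsub₁, hlen, hprod₁⟩ :=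
        cs.exists_sublist_wordProd_eq_simple_mul (ω := ω₀) (i := i) (by
          unfold IsLeftDescent; omega)
      refine ⟨ω₁, (hsub₁.trans hsub).cons i, ?_, by rw [hprod₁, hprod, wordProd_cons]⟩
      unfold IsReduced at hred ⊢
      rw [hprod₁]
      omega

theorem wordProd_mem_closure {X : Set B} {ω : List B} (hω : ∀ i ∈ ω, i ∈ X) :
    π ω ∈ Subgroup.closure (cs.simple '' X) :=
  Subgroup.list_prod_mem _ fun _ hx => by
    obtain ⟨i, hi, rfl⟩ := mem_map.mp hx
    exact Subgroup.subset_closure ⟨i, hω i hi, rfl⟩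

theorem exists_isReduced_of_mem_closure {X : Set B} {w : W}
    (hw : w ∈ Subgroup.closure (cs.simple '' X)) :
    ∃ ω, cs.IsReduced ω ∧ (∀ i ∈ ω, i ∈ X) ∧ π ω = w := by
  obtain ⟨ω, hωX, rfl⟩ : ∃ ω : List B, (∀ i ∈ ω, i ∈ X) ∧ π ω = w := by
    induction hw using Subgroup.closure_induction with
    | mem _ hx =>
      obtain ⟨i, hi, rfl⟩ := hx
      exact ⟨[i], by simpa using hi, wordProd_singleton cs i⟩
    | one => exact ⟨[], by simp, wordProd_nil cs⟩
    | mul _ _ _ _ ih₁ ih₂ =>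
      obtain ⟨ω₁, h₁, rfl⟩ := ih₁
      obtain ⟨ω₂, h₂, rfl⟩ := ih₂
      exact ⟨ω₁ ++ ω₂, fun i hi => (mem_append.mp hi).elim (h₁ i) (h₂ i), wordProd_append ..⟩
    | inv _ _ ih =>
      obtain ⟨ω, h, rfl⟩ := ih
      exact ⟨ω.reverse, by simpa using h, wordProd_reverse ..⟩
  obtain ⟨ω', hsub, hred, hprod⟩ := cs.exists_isReduced_sublist ω
  exact ⟨ω', hred, fun i hi => hωX i (hsub.subset hi), hprod⟩

theorem exists_isRightDescent_of_mem_closure {X : Set B} {w : W}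
    (hw : w ∈ Subgroup.closure (cs.simple '' X)) (hne : w ≠ 1) :
    ∃ i ∈ X, cs.IsRightDescent w i := by
  obtain ⟨ω, hred, hωX, rfl⟩ := cs.exists_isReduced_of_mem_closure hw
  obtain rfl | ⟨ω, i, rfl⟩ := ω.eq_nil_or_concat
  · exact absurd (wordProd_nil cs) hne
  refine ⟨i, hωX i (by simp), ?_⟩
  unfold IsRightDescent
  rw [wordProd_concat, simple_mul_simple_cancel_right, ← wordProd_concat, hred]
  simpa using cs.length_wordProd_le ω

theorem length_mul_eq_of_forall_length_le {Y : Set B} {a : W}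
    (ha : ∀ v ∈ Subgroup.closure (cs.simple '' Y), ℓ a ≤ ℓ (a * v)) {u : W}
    (hu : u ∈ Subgroup.closure (cs.simple '' Y)) : ℓ (a * u) = ℓ a + ℓ u := by
  obtain ⟨α, hα, rfl⟩ := cs.exists_isReduced a
  have step : ∀ u ∈ Subgroup.closure (cs.simple '' Y), ∀ i ∈ Y,
      ℓ (π α * u) = ℓ (π α) + ℓ u → ℓ (π α * (u * s i)) = ℓ (π α) + ℓ (u * s i) := by
    intro u hu i hi ih
    rw [← mul_assoc]
    rcases cs.length_mul_simple u i with hup | hdown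
    · rcases cs.length_mul_simple (π α * u) i with hup' | hdown'
      · omega
      exfalso
      rcases cs.isRightDescent_or_exists_sublist_of_isRightDescent_mul (α := α) (b := u) (i := i)
        (by unfold IsRightDescent; omega) with hdesc | ⟨α', -, hlen, heq⟩
      · unfold IsRightDescent at hdesc
        omega
      have hconj : u * s i * u⁻¹ ∈ Subgroup.closure (cs.simple '' Y) :=
        mul_mem (mul_mem hu (Subgroup.subset_closure ⟨i, hi, rfl⟩)) (inv_mem hu)
      have hle := ha _ hconj
      rw [show π α * (u * s i * u⁻¹) = π α' by
        rw [← mul_assoc, ← mul_assoc, heq, mul_inv_cancel_right]] at hle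
      have := cs.length_wordProd_le α'
      unfold IsReduced at hα
      omega
    · have := cs.length_mul_le (π α) (u * s i)
      have := cs.length_mul_simple (π α * u) i
      rw [mul_assoc] at this ⊢
      omega
  induction hu using Subgroup.closure_induction_right with
  | one => simp
  | mul_right u hu _ hy ih =>
    obtain ⟨i, hi, rfl⟩ := hy
    exact step u hu i hi ih
  | mul_inv_cancel u hu _ hy ih =>
    obtain ⟨i, hi, rfl⟩ := hy
    rw [inv_simple]
    exact step u hu i hi ih

theorem length_mul_eq_of_forall_length_le_mul {X : Set B} {a : W}
    (ha : ∀ v ∈ Subgroup.closure (cs.simple '' X), ℓ a ≤ ℓ (v * a)) {u : W}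
    (hu : u ∈ Subgroup.closure (cs.simple '' X)) : ℓ (u * a) = ℓ u + ℓ a := by
  have hinv : ∀ v ∈ Subgroup.closure (cs.simple '' X), ℓ a⁻¹ ≤ ℓ (a⁻¹ * v) := fun v hv => by
    simpa [← cs.length_inv (a⁻¹ * v)] using ha v⁻¹ (inv_mem hv)
  have := cs.length_mul_eq_of_forall_length_le hinv (inv_mem hu)
  rwa [← mul_inv_rev, length_inv, length_inv, length_inv, add_comm] at this

theorem forall_length_le_of_forall_not_isRightDescent {Y : Set B} {a : W}
    (ha : ∀ i ∈ Y, ¬ cs.IsRightDescent a i) :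
    ∀ v ∈ Subgroup.closure (cs.simple '' Y), ℓ a ≤ ℓ (a * v) := by
  obtain ⟨v, hv, hmin⟩ := (InvImage.wf (fun v => ℓ (a * v)) wellFounded_lt).has_min
    (Subgroup.closure (cs.simple '' Y) : Set W) ⟨1, one_mem _⟩
  have hav : ∀ v' ∈ Subgroup.closure (cs.simple '' Y), ℓ (a * v) ≤ ℓ (a * v * v') :=
    fun v' hv' => by
      rw [mul_assoc]
      exact not_lt.mp (hmin _ (mul_mem hv hv'))
  obtain rfl : v = 1 := by
    by_contra hne
    obtain ⟨i, hi, hdesc⟩ :=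
      cs.exists_isRightDescent_of_mem_closure (inv_mem hv) (inv_ne_one.mpr hne)
    have h₁ := cs.length_mul_eq_of_forall_length_le hav (inv_mem hv)
    have h₂ := cs.length_mul_eq_of_forall_length_le hav
      (mul_mem (inv_mem hv) (Subgroup.subset_closure ⟨i, hi, rfl⟩))
    rw [mul_inv_cancel_right] at h₁
    rw [← mul_assoc, mul_inv_cancel_right] at h₂
    unfold IsRightDescent at hdesc
    exact ha i hi (by unfold IsRightDescent; omega)
  simpa using hav

def IsMinimalInDoubleCoset (X Y : Set B) (σ : W) : Prop :=
  ∀ x ∈ Subgroup.closure (cs.simple '' X), ∀ y ∈ Subgroup.closure (cs.simple '' Y),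
    ℓ σ ≤ ℓ (x * σ * y)

namespace IsMinimalInDoubleCoset

variable {cs} {X Y : Set B} {σ : W}

theorem length_mul (hσ : cs.IsMinimalInDoubleCoset X Y σ) {u : W}
    (hu : u ∈ Subgroup.closure (cs.simple '' Y)) : ℓ (σ * u) = ℓ σ + ℓ u :=
  cs.length_mul_eq_of_forall_length_le (fun v hv => by simpa using hσ 1 (one_mem _) v hv) hu

theorem length_mul_left (hσ : cs.IsMinimalInDoubleCoset X Y σ) {x : W}
    (hx : x ∈ Subgroup.closure (cs.simple '' X)) : ℓ (x * σ) = ℓ x + ℓ σ :=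
  cs.length_mul_eq_of_forall_length_le_mul (fun v hv => by simpa using hσ v hv 1 (one_mem _)) hx

theorem conj_simple_mem_of_isLeftDescent (hσ : cs.IsMinimalInDoubleCoset X Y σ) {w : W}
    (hwX : w ∈ Subgroup.closure (cs.simple '' X))
    (hwY : σ⁻¹ * w * σ ∈ Subgroup.closure (cs.simple '' Y)) {x : B} (hx : x ∈ X)
    (hdesc : cs.IsLeftDescent w x) : σ⁻¹ * s x * σ ∈ cs.simple '' Y := by
  obtain ⟨β, -, hβY, hβ⟩ := cs.exists_isReduced_of_mem_closure hwY
  have hwσ : w * σ = σ * π β := by rw [hβ]; group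
  have hsx : s x ∈ Subgroup.closure (cs.simple '' X) := Subgroup.subset_closure ⟨x, hx, rfl⟩
  have hxσ : ℓ (s x * σ) = ℓ σ + 1 := by rw [hσ.length_mul_left hsx, length_simple, add_comm]
  have hdesc' : cs.IsLeftDescent (σ * π β) x := by
    unfold IsLeftDescent at hdesc ⊢
    rw [← hwσ, ← mul_assoc, hσ.length_mul_left (mul_mem hsx hwX), hσ.length_mul_left hwX]
    omega
  rcases cs.isLeftDescent_or_exists_sublist_of_isLeftDescent_mul hdesc'
    with hσdesc | ⟨β', hsub, -, heq⟩
  · unfold IsLeftDescent at hσdesc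
    omega
  have hv : σ⁻¹ * s x * σ = π β' * (π β)⁻¹ := by
    rw [eq_mul_inv_iff_mul_eq, ← inv_mul_cancel_left σ (π β'), ← heq]
    group
  have hvY : σ⁻¹ * s x * σ ∈ Subgroup.closure (cs.simple '' Y) := by
    rw [hv]
    exact mul_mem (cs.wordProd_mem_closure fun i hi => hβY i (hsub.subset hi))
      (inv_mem (cs.wordProd_mem_closure hβY))
  have hv1 : ℓ (σ⁻¹ * s x * σ) = 1 := by
    have := hσ.length_mul hvY
    rw [show σ * (σ⁻¹ * s x * σ) = s x * σ by group, hxσ] at this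
    omega
  obtain ⟨y, hy, hdy⟩ := cs.exists_isRightDescent_of_mem_closure hvY
    (fun h => by simp [h] at hv1)
  unfold IsRightDescent at hdy
  rw [hv1, Nat.lt_one_iff, length_eq_zero_iff, mul_eq_one_iff_eq_inv, inv_simple] at hdy
  exact ⟨y, hy, hdy.symm⟩

theorem inf_map_conj_eq_closure (hσ : cs.IsMinimalInDoubleCoset X Y σ) :
    Subgroup.closure (cs.simple '' X) ⊓
        (Subgroup.closure (cs.simple '' Y)).map (MulAut.conj σ).toMonoidHom =
      Subgroup.closure (cs.simple '' {i | i ∈ X ∧ σ⁻¹ * s i * σ ∈ cs.simple '' Y}) := by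
  have mem_iff : ∀ w, w ∈ Subgroup.closure (cs.simple '' X) ⊓
      (Subgroup.closure (cs.simple '' Y)).map (MulAut.conj σ).toMonoidHom ↔
      w ∈ Subgroup.closure (cs.simple '' X) ∧ σ⁻¹ * w * σ ∈ Subgroup.closure (cs.simple '' Y) :=
    fun w => by rw [Subgroup.mem_inf, Subgroup.mem_map_equiv, MulAut.conj_symm_apply]
  refine le_antisymm (fun w hw => ?_) ?_
  · induction hn : ℓ w using Nat.strong_induction_on generalizing w with
    | _ n ih =>
      obtain rfl | hne := eq_or_ne w 1
      · exact one_mem _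
      obtain ⟨hwX, hwY⟩ := (mem_iff w).mp hw
      obtain ⟨x, hx, hdesc⟩ :=
        cs.exists_isRightDescent_of_mem_closure (inv_mem hwX) (inv_ne_one.mpr hne)
      rw [isRightDescent_inv_iff] at hdesc
      have hxZ := hσ.conj_simple_mem_of_isLeftDescent hwX hwY hx hdesc
      have hsx := (mem_iff (s x)).mpr
        ⟨Subgroup.subset_closure ⟨x, hx, rfl⟩, Subgroup.subset_closure hxZ⟩
      rw [← cs.simple_mul_simple_cancel_left (w := w) x]
      exact mul_mem (Subgroup.subset_closure ⟨x, ⟨hx, hxZ⟩, rfl⟩)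
        (ih _ (by unfold IsLeftDescent at hdesc; omega) _ (mul_mem hsx hw) rfl)
  · rw [Subgroup.closure_le]
    rintro _ ⟨i, ⟨hiX, hiY⟩, rfl⟩
    exact (mem_iff _).mpr ⟨Subgroup.subset_closure ⟨i, hiX, rfl⟩, Subgroup.subset_closure hiY⟩

theorem not_isRightDescent_mul (hσ : cs.IsMinimalInDoubleCoset X Y σ) {τ : W}
    (hτ : τ ∈ Subgroup.closure (cs.simple '' X))
    (hτmin : ∀ u ∈ Subgroup.closure (cs.simple '' X) ⊓
        (Subgroup.closure (cs.simple '' Y)).map (MulAut.conj σ).toMonoidHom,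
      ℓ τ ≤ ℓ (τ * u))
    {y : B} (hy : y ∈ Y) : ¬ cs.IsRightDescent (τ * σ) y := by
  intro hdesc
  obtain ⟨α, hα, hαX, rfl⟩ := cs.exists_isReduced_of_mem_closure hτ
  rcases cs.isRightDescent_or_exists_sublist_of_isRightDescent_mul hdesc
    with hσdesc | ⟨α', hsub, hlen, heq⟩
  · have := hσ.length_mul (Subgroup.subset_closure ⟨y, hy, rfl⟩)
    unfold IsRightDescent at hσdesc
    rw [length_simple] at this
    omega
  have hu : π α * (σ * s y * σ⁻¹) = π α' := by
    rw [← mul_assoc, ← mul_assoc, heq, mul_inv_cancel_right]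
  have hmem : σ * s y * σ⁻¹ ∈ Subgroup.closure (cs.simple '' X) ⊓
      (Subgroup.closure (cs.simple '' Y)).map (MulAut.conj σ).toMonoidHom := by
    refine Subgroup.mem_inf.mpr
      ⟨?_, Subgroup.mem_map.mpr ⟨s y, Subgroup.subset_closure ⟨y, hy, rfl⟩, rfl⟩⟩
    rw [← inv_mul_eq_iff_eq_mul.mpr hu.symm]
    exact mul_mem (inv_mem hτ) (cs.wordProd_mem_closure fun i hi => hαX i (hsub.subset hi))
  have := hτmin _ hmem
  rw [hu] at this
  have := cs.length_wordProd_le α'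
  unfold IsReduced at hα
  omega

theorem length_mul_mul (hσ : cs.IsMinimalInDoubleCoset X Y σ) {τ : W}
    (hτ : τ ∈ Subgroup.closure (cs.simple '' X))
    (hτmin : ∀ u ∈ Subgroup.closure (cs.simple '' X) ⊓
        (Subgroup.closure (cs.simple '' Y)).map (MulAut.conj σ).toMonoidHom,
      ℓ τ ≤ ℓ (τ * u))
    {υ : W} (hυ : υ ∈ Subgroup.closure (cs.simple '' Y)) :
    ℓ (τ * σ * υ) = ℓ τ + ℓ σ + ℓ υ := by
  rw [cs.length_mul_eq_of_forall_length_le (cs.forall_length_le_of_forall_not_isRightDescent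
    fun y hy => hσ.not_isRightDescent_mul hτ hτmin hy) hυ, hσ.length_mul_left hτ]

end IsMinimalInDoubleCoset

end CoxeterSystem

/-- In a Coxeter system `(W, S)`, if `σ` is the minimal-length element of the double coset
`W_X σ W_Y` of standard parabolic subgroups, then `W_X ∩ σW_Yσ⁻¹` is a standard parabolic
subgroup of `(W_X, X)`, and `ℓ(τσυ) = ℓ(τ) + ℓ(σ) + ℓ(υ)` for every minimal-length coset
representative `τ` of `W_X/(W_X ∩ σW_Yσ⁻¹)` and every `υ ∈ W_Y`. -/
theorem coxeter_double_coset_reduced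
    {I W : Type*} [Group W] (M : CoxeterMatrix I) (cs : CoxeterSystem M W)
    (X Y : Set I) (σ : W)
    (hσmin : ∀ x ∈ Subgroup.closure (cs.simple '' X),
      ∀ y ∈ Subgroup.closure (cs.simple '' Y),
        cs.length σ ≤ cs.length (x * σ * y)) :
    (∃ Z ⊆ X,
      Subgroup.closure (cs.simple '' X) ⊓
          (Subgroup.closure (cs.simple '' Y)).map (MulAut.conj σ).toMonoidHom =
        Subgroup.closure (cs.simple '' Z)) ∧
    (∀ τ ∈ Subgroup.closure (cs.simple '' X),
      (∀ u ∈ Subgroup.closure (cs.simple '' X) ⊓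
          (Subgroup.closure (cs.simple '' Y)).map (MulAut.conj σ).toMonoidHom,
        cs.length τ ≤ cs.length (τ * u)) →
      ∀ υ ∈ Subgroup.closure (cs.simple '' Y),
        cs.length (τ * σ * υ) = cs.length τ + cs.length σ + cs.length υ) := by
  have hσ : cs.IsMinimalInDoubleCoset X Y σ := hσmin
  exact ⟨⟨_, fun _ hi => hi.1, hσ.inf_map_conj_eq_closure⟩,
    fun _ hτ hτmin _ hυ => hσ.length_mul_mul hτ hτmin hυ⟩
end

section
/- Let F be a local field with uniformizer ϖ, G = GSp₄(F), K = GSp₄(O_F), and H = GL₂(F) ×_det GL₂(F) embedded in G via the two orthogonal planes spanned by (e₁,e₃) and (e₂,e₄). Let τ₁ = [[ϖ,0,0,1],[0,ϖ,1,0],[0,0,1,0],[0,0,0,1]] and U = H ∩ K. Then H ∩ τ₁Kτ₁⁻¹ equals X°·J, where X° is the image of GL₂(O_F) under the twisted diagonal embedding h ↦ (h, s h s) with s = [[0,1],[1,0]], and J is the subgroup of H ∩ τ₁Kτ₁⁻¹ whose reduction mod ϖ lies in the diagonal torus. Moreover H ∩ τ₁Kτ₁⁻¹ is a proper subgroup of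 U, and consequently HK and Hτ₁K are disjoint. -/
open scoped Pointwise

noncomputable section GSp4Setup

variable {F : Type*} [Field F]

/-- The standard symplectic matrix `J₄ = [[0, 1₂], [−1₂, 0]]`. -/
def Jsp : Matrix (Fin 4) (Fin 4) F :=
  !![0, 0, 1, 0; 0, 0, 0, 1; -1, 0, 0, 0; 0, -1, 0, 0]

/-- The block-wise embedding `GL₂ ×_det GL₂ → GSp₄` via the planes `(e₁,e₃)` and `(e₂,e₄)`. -/
def embedPair (A B : Matrix (Fin 2) (Fin 2) F) : Matrix (Fin 4) (Fin 4) F :=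
  !![A 0 0, 0, A 0 1, 0;
     0, B 0 0, 0, B 0 1;
     A 1 0, 0, A 1 1, 0;
     0, B 1 0, 0, B 1 1]

/-- The symplectic similitude group `GSp₄(F)` as a set of matrices. -/
def GSpSet (F : Type*) [Field F] : Set (Matrix (Fin 4) (Fin 4) F) :=
  {g | ∃ c : F, c ≠ 0 ∧ g.transpose * Jsp * g = c • Jsp}

/-- The subgroup `H = GL₂ ×_det GL₂` of `GSp₄(F)` as a set of matrices. -/
def HSet (F : Type*) [Field F] : Set (Matrix (Fin 4) (Fin 4) F) :=
  {m | ∃ A B : Matrix (Fin 2) (Fin 2) F, A.det = B.det ∧ A.det ≠ 0 ∧ m = embedPair A B}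

/-- `K = GSp₄(O_F)`: integral symplectic similitude matrices with unit determinant. -/
def KSet (F : Type*) [Field F] (v : Valuation F (WithZero (Multiplicative ℤ))) :
    Set (Matrix (Fin 4) (Fin 4) F) :=
  {g | g ∈ GSpSet F ∧ (∀ i j, v (g i j) ≤ 1) ∧ v g.det = 1}

/-- The element `τ₁`. -/
def tauOne (ϖ : F) : Matrix (Fin 4) (Fin 4) F :=
  !![ϖ, 0, 0, 1; 0, ϖ, 1, 0; 0, 0, 1, 0; 0, 0, 0, 1]

end GSp4Setup

/-!
Conjugation by `τ₁` is explicit on `H`: `embedPair A B * τ₁ = τ₁ * tauConj ϖ A B`, where the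
entries of `tauConj ϖ A B` are, up to sign and a factor `ϖ`, entries of `A`, `B` and
`(A - sBs) / ϖ`. So
`embedPair A B ∈ τ₁Kτ₁⁻¹` exactly when `A`, `B` are integral with the same unit determinant and
`A ≡ sBs (mod ϖ)`. Such a pair factors as `(A, sAs) · (1, C)` with `C = (sAs)⁻¹ B ≡ 1 (mod ϖ)`,
which is the decomposition `X°·J`; the Weyl element `(!![0, 1; -1, 0], 1) ∈ U` violates `A ≡ sBs`.
For the disjointness, `HK ∩ Hτ₁K ≠ ∅` would give `h = τ₁ k` with `h ∈ H` and `k ∈ GL₄(O)`;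
then every entry of `h` is divisible by `ϖ`, so `v (det h) ≤ v ϖ ^ 4`, while
`v (det h) = v (det τ₁) = v ϖ ^ 2`.
-/

open Matrix

namespace Matrix

section Valuation

variable {R : Type*} [CommRing R] {Γ₀ : Type*} [LinearOrderedCommMonoidWithZero Γ₀]
  (v : Valuation R Γ₀)

theorem valuation_mul_apply_le {l m n : Type*} [Fintype m] {M : Matrix l m R}
    {N : Matrix m n R} {γ₁ γ₂ : Γ₀} (hM : ∀ i j, v (M i j) ≤ γ₁) (hN : ∀ i j, v (N i j) ≤ γ₂)
    (i : l) (j : n) : v ((M * N) i j) ≤ γ₁ * γ₂ :=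
  v.map_sum_le fun k _ => (v.map_mul _ _).trans_le (mul_le_mul' (hM i k) (hN k j))

variable {n : Type*} [Fintype n] [DecidableEq n]

theorem valuation_det_le {M : Matrix n n R} {γ : Γ₀} (hM : ∀ i j, v (M i j) ≤ γ) :
    v M.det ≤ γ ^ Fintype.card n := by
  rw [det_apply]
  refine v.map_sum_le fun σ _ => ?_
  rcases Int.units_eq_one_or (Equiv.Perm.sign σ) with h | h <;>
    simp only [h, one_smul, Units.neg_smul, Valuation.map_neg, map_prod] <;>
    exact Finset.prod_le_pow_card _ _ _ fun i _ => hM _ _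

theorem valuation_adjugate_apply_le_one {M : Matrix n n R} (hM : ∀ i j, v (M i j) ≤ 1)
    (i j : n) : v (M.adjugate i j) ≤ 1 := by
  rw [adjugate_apply]
  refine (valuation_det_le v fun k l => ?_).trans_eq (one_pow _)
  rw [updateRow_apply]
  split_ifs
  · rw [Pi.single_apply]; split_ifs <;> simp
  · exact hM k l

theorem valuation_inv_apply_le_one {F Γ : Type*} [Field F] [LinearOrderedCommGroupWithZero Γ]
    (v : Valuation F Γ) {M : Matrix n n F} (hM : ∀ i j, v (M i j) ≤ 1) (hdet : v M.det = 1)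
    (i j : n) : v (M⁻¹ i j) ≤ 1 := by
  rw [inv_def, smul_apply, smul_eq_mul, Ring.inverse_eq_inv', map_mul, map_inv₀, hdet, inv_one,
    one_mul]
  exact valuation_adjugate_apply_le_one v hM i j

end Valuation

end Matrix

section SwapConj

variable {R : Type*} [CommRing R]

def swapConj (M : Matrix (Fin 2) (Fin 2) R) : Matrix (Fin 2) (Fin 2) R :=
  !![0, 1; 1, 0] * M * !![0, 1; 1, 0]

theorem antidiag_mul_self : (!![0, 1; 1, 0] : Matrix (Fin 2) (Fin 2) R) * !![0, 1; 1, 0] = 1 := by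
  ext i j
  fin_cases i <;> fin_cases j <;> simp

theorem swapConj_eq_submatrix (M : Matrix (Fin 2) (Fin 2) R) :
    swapConj M = M.submatrix (Equiv.swap 0 1) (Equiv.swap 0 1) := by
  ext i j
  fin_cases i <;> fin_cases j <;> simp [swapConj, mul_apply, Fin.sum_univ_two, vecMul, dotProduct]

theorem swapConj_apply (M : Matrix (Fin 2) (Fin 2) R) (i j : Fin 2) :
    swapConj M i j = M (Equiv.swap 0 1 i) (Equiv.swap 0 1 j) := by
  rw [swapConj_eq_submatrix, submatrix_apply]

theorem valuation_swapConj_apply_le {Γ₀ : Type*} [LinearOrderedCommMonoidWithZero Γ₀]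
    (v : Valuation R Γ₀) {M : Matrix (Fin 2) (Fin 2) R} {γ : Γ₀} (h : ∀ i j, v (M i j) ≤ γ)
    (i j : Fin 2) : v (swapConj M i j) ≤ γ :=
  swapConj_apply M i j ▸ h _ _

theorem swapConj_one : swapConj (1 : Matrix (Fin 2) (Fin 2) R) = 1 := by
  rw [swapConj, Matrix.mul_one, antidiag_mul_self]

theorem swapConj_mul (M N : Matrix (Fin 2) (Fin 2) R) :
    swapConj (M * N) = swapConj M * swapConj N := by
  simp only [swapConj, Matrix.mul_assoc]
  rw [← Matrix.mul_assoc !![0, 1; 1, 0] !![0, 1; 1, 0], antidiag_mul_self, Matrix.one_mul]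

theorem swapConj_swapConj (M : Matrix (Fin 2) (Fin 2) R) : swapConj (swapConj M) = M := by
  simp only [swapConj, Matrix.mul_assoc]
  rw [antidiag_mul_self, Matrix.mul_one, ← Matrix.mul_assoc, antidiag_mul_self, Matrix.one_mul]

theorem det_swapConj (M : Matrix (Fin 2) (Fin 2) R) : (swapConj M).det = M.det := by
  rw [swapConj_eq_submatrix, det_submatrix_equiv_self]

end SwapConj

section EmbedPair

variable {F : Type*} [Field F]

theorem embedPair_mul (A B A' B' : Matrix (Fin 2) (Fin 2) F) :
    embedPair A B * embedPair A' B' = embedPair (A * A') (B * B') := by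
  ext i j
  fin_cases i <;> fin_cases j <;> simp [embedPair, mul_apply, Fin.sum_univ_four]

theorem embedPair_one : embedPair (1 : Matrix (Fin 2) (Fin 2) F) 1 = 1 := by
  ext i j
  fin_cases i <;> fin_cases j <;> simp [embedPair]

theorem det_embedPair (A B : Matrix (Fin 2) (Fin 2) F) :
    (embedPair A B).det = A.det * B.det := by
  simp [embedPair, det_succ_row_zero, Fin.sum_univ_succ, Fin.succAbove]
  ring

theorem embedPair_transpose_mul_Jsp_mul {A B : Matrix (Fin 2) (Fin 2) F} (h : A.det = B.det) :
    (embedPair A B)ᵀ * Jsp * embedPair A B = A.det • Jsp := by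
  have hB := det_fin_two B
  rw [← h, det_fin_two] at hB
  ext i j
  fin_cases i <;> fin_cases j <;>
    simp [embedPair, Jsp, mul_apply, Fin.sum_univ_four, det_fin_two] <;>
    first | ring1 | linear_combination hB | linear_combination -hB

theorem valuation_embedPair_apply_le {Γ₀ : Type*} [LinearOrderedCommMonoidWithZero Γ₀]
    (v : Valuation F Γ₀) {A B : Matrix (Fin 2) (Fin 2) F} {γ : Γ₀}
    (hA : ∀ i j, v (A i j) ≤ γ) (hB : ∀ i j, v (B i j) ≤ γ) (i j : Fin 4) :
    v (embedPair A B i j) ≤ γ := by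
  fin_cases i <;> fin_cases j <;> simp [embedPair, hA, hB]

/-- The matrix `τ₁⁻¹ · embedPair A B · τ₁`, written out (see `embedPair_mul_tauOne`). -/
def tauConj (ϖ : F) (A B : Matrix (Fin 2) (Fin 2) F) : Matrix (Fin 4) (Fin 4) F :=
  let D := A - swapConj B
  !![A 0 0, -B 1 0, D 0 1 / ϖ, D 0 0 / ϖ;
     -A 1 0, B 0 0, -D 1 1 / ϖ, -D 1 0 / ϖ;
     ϖ * A 1 0, 0, A 1 1, A 1 0;
     0, ϖ * B 1 0, B 1 0, B 1 1]

theorem embedPair_mul_tauOne {ϖ : F} (hϖ : ϖ ≠ 0) (A B : Matrix (Fin 2) (Fin 2) F) :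
    embedPair A B * tauOne ϖ = tauOne ϖ * tauConj ϖ A B := by
  ext i j
  fin_cases i <;> fin_cases j <;>
    simp [embedPair, tauOne, tauConj, mul_apply, Fin.sum_univ_four, swapConj_apply] <;>
    field_simp <;> ring

theorem det_tauOne (ϖ : F) : (tauOne ϖ).det = ϖ ^ 2 := by
  simp [tauOne, det_succ_row_zero, Fin.sum_univ_succ, Fin.succAbove]
  ring

theorem isUnit_tauOne {ϖ : F} (hϖ : ϖ ≠ 0) : IsUnit (tauOne ϖ) :=
  (isUnit_iff_isUnit_det _).2 (by rw [det_tauOne]; exact (pow_ne_zero 2 hϖ).isUnit)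

theorem det_tauConj {ϖ : F} (hϖ : ϖ ≠ 0) (A B : Matrix (Fin 2) (Fin 2) F) :
    (tauConj ϖ A B).det = A.det * B.det := by
  have h := congrArg det (embedPair_mul_tauOne hϖ A B)
  rw [det_mul, det_mul, det_embedPair, mul_comm] at h
  exact (mul_left_cancel₀ (by rw [det_tauOne]; exact pow_ne_zero 2 hϖ) h).symm

theorem tauOne_transpose_mul_Jsp_mul (ϖ : F) : (tauOne ϖ)ᵀ * Jsp * tauOne ϖ = ϖ • Jsp := by
  ext i j
  fin_cases i <;> fin_cases j <;> simp [tauOne, Jsp, mul_apply, Fin.sum_univ_four]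

theorem transpose_mul_Jsp_mul_of_mul_tauOne_eq {ϖ : F} (hϖ : ϖ ≠ 0)
    {m k : Matrix (Fin 4) (Fin 4) F} {c : F} (hm : mᵀ * Jsp * m = c • Jsp)
    (h : m * tauOne ϖ = tauOne ϖ * k) : kᵀ * Jsp * k = c • Jsp := by
  apply smul_right_injective _ hϖ
  calc ϖ • (kᵀ * Jsp * k) = kᵀ * ((tauOne ϖ)ᵀ * Jsp * tauOne ϖ) * k := by
        rw [tauOne_transpose_mul_Jsp_mul, Matrix.mul_smul, Matrix.smul_mul]
    _ = (tauOne ϖ * k)ᵀ * Jsp * (tauOne ϖ * k) := by simp only [transpose_mul, Matrix.mul_assoc]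
    _ = (m * tauOne ϖ)ᵀ * Jsp * (m * tauOne ϖ) := by rw [h]
    _ = (tauOne ϖ)ᵀ * (mᵀ * Jsp * m) * tauOne ϖ := by simp only [transpose_mul, Matrix.mul_assoc]
    _ = ϖ • (c • Jsp) := by
        rw [hm, Matrix.mul_smul, Matrix.smul_mul, tauOne_transpose_mul_Jsp_mul, smul_comm]

end EmbedPair

section TauPair

variable {F : Type*} [Field F] {Γ₀ : Type*} [LinearOrderedCommGroupWithZero Γ₀]
  (v : Valuation F Γ₀)

/-- The pairs with `embedPair A B ∈ τ₁Kτ₁⁻¹` (see `exists_mem_KSet_iff`): `A` and `B` are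
integral with the same unit determinant and `A ≡ sBs (mod ϖ)`. -/
structure IsTauPair (ϖ : F) (A B : Matrix (Fin 2) (Fin 2) F) : Prop where
  integral_left : ∀ i j, v (A i j) ≤ 1
  integral_right : ∀ i j, v (B i j) ≤ 1
  det_eq : A.det = B.det
  valuation_det : v A.det = 1
  congr : ∀ i j, v ((A - swapConj B) i j) ≤ v ϖ

theorem isTauPair_swapConj {ϖ : F} {h : Matrix (Fin 2) (Fin 2) F} (hh : ∀ i j, v (h i j) ≤ 1)
    (hdet : v h.det = 1) : IsTauPair v ϖ h (swapConj h) where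
  integral_left := hh
  integral_right := valuation_swapConj_apply_le v hh
  det_eq := (det_swapConj h).symm
  valuation_det := hdet
  congr i j := by simp [swapConj_swapConj]

namespace IsTauPair

variable {v} {ϖ : F} {A B : Matrix (Fin 2) (Fin 2) F}

theorem det_ne_zero (hp : IsTauPair v ϖ A B) : A.det ≠ 0 :=
  v.ne_zero_iff.1 (hp.valuation_det ▸ one_ne_zero)

theorem mul {A' B' : Matrix (Fin 2) (Fin 2) F} (hp : IsTauPair v ϖ A B)
    (hp' : IsTauPair v ϖ A' B') : IsTauPair v ϖ (A * A') (B * B') := by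
  have hdiff : A * A' - swapConj (B * B') =
      A * (A' - swapConj B') + (A - swapConj B) * swapConj B' := by
    rw [swapConj_mul, Matrix.mul_sub, Matrix.sub_mul]; abel
  refine ⟨fun i j => ?_, fun i j => ?_, ?_, ?_, fun i j => ?_⟩
  · simpa using valuation_mul_apply_le v hp.integral_left hp'.integral_left i j
  · simpa using valuation_mul_apply_le v hp.integral_right hp'.integral_right i j
  · rw [det_mul, det_mul, hp.det_eq, hp'.det_eq]
  · rw [det_mul, map_mul, hp.valuation_det, hp'.valuation_det, one_mul]
  · rw [hdiff, Matrix.add_apply]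
    refine v.map_add_le ?_ ?_
    · simpa using valuation_mul_apply_le v hp.integral_left hp'.congr i j
    · simpa using valuation_mul_apply_le v hp.congr
        (valuation_swapConj_apply_le v hp'.integral_right) i j

theorem one_swapConj_inv_mul (hp : IsTauPair v ϖ A B) :
    IsTauPair v ϖ 1 (swapConj A⁻¹ * B) := by
  have hAinv : ∀ i j, v (A⁻¹ i j) ≤ 1 :=
    valuation_inv_apply_le_one v hp.integral_left hp.valuation_det
  have hdiff : 1 - swapConj (swapConj A⁻¹ * B) = A⁻¹ * (A - swapConj B) := by
    rw [swapConj_mul, swapConj_swapConj, Matrix.mul_sub, nonsing_inv_mul A hp.det_ne_zero.isUnit]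
  refine ⟨fun i j => ?_, fun i j => ?_, ?_, by simp, fun i j => ?_⟩
  · rw [one_apply]; split_ifs <;> simp
  · simpa using valuation_mul_apply_le v (valuation_swapConj_apply_le v hAinv)
      hp.integral_right i j
  · rw [det_one, det_mul, det_swapConj, det_nonsing_inv, ← hp.det_eq, Ring.inverse_eq_inv',
      inv_mul_cancel₀ hp.det_ne_zero]
  · rw [hdiff]
    simpa using valuation_mul_apply_le v hAinv hp.congr i j

theorem valuation_embedPair_one_apply_le {C : Matrix (Fin 2) (Fin 2) F}
    (hp : IsTauPair v ϖ 1 C) (i j : Fin 4) (hij : i ≠ j) : v (embedPair 1 C i j) ≤ v ϖ := by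
  have h01 : v (C 0 1) ≤ v ϖ := by simpa [swapConj_apply] using hp.congr 1 0
  have h10 : v (C 1 0) ≤ v ϖ := by simpa [swapConj_apply] using hp.congr 0 1
  fin_cases i <;> fin_cases j <;> simp_all [embedPair]

end IsTauPair

theorem setOf_isTauPair_eq_mul (ϖ : F) :
    {m | ∃ A B, IsTauPair v ϖ A B ∧ m = embedPair A B} =
      {m | ∃ h : Matrix (Fin 2) (Fin 2) F, (∀ i j, v (h i j) ≤ 1) ∧ v h.det = 1 ∧
          m = embedPair h (swapConj h)} *
        {m ∈ {m | ∃ A B, IsTauPair v ϖ A B ∧ m = embedPair A B} |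
          ∀ i j, i ≠ j → v (m i j) ≤ v ϖ} := by
  apply Set.Subset.antisymm
  · rintro _ ⟨A, B, hp, rfl⟩
    have hC := hp.one_swapConj_inv_mul
    refine ⟨embedPair A (swapConj A), ⟨A, hp.integral_left, hp.valuation_det, rfl⟩,
      embedPair 1 (swapConj A⁻¹ * B), ⟨⟨1, _, hC, rfl⟩, hC.valuation_embedPair_one_apply_le⟩, ?_⟩
    dsimp only
    rw [embedPair_mul, Matrix.mul_one, ← Matrix.mul_assoc, ← swapConj_mul,
      mul_nonsing_inv A hp.det_ne_zero.isUnit, swapConj_one, Matrix.one_mul]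
  · rintro _ ⟨_, ⟨h, hh, hdet, rfl⟩, _, ⟨⟨A, B, hp, rfl⟩, -⟩, rfl⟩
    exact ⟨_, _, (isTauPair_swapConj v hh hdet).mul hp, embedPair_mul _ _ _ _⟩

theorem embedPair_weyl_one_not_mem {ϖ : F} (hϖ1 : v ϖ < 1) :
    embedPair !![0, 1; -1, 0] 1 ∉ {m | ∃ A B, IsTauPair v ϖ A B ∧ m = embedPair A B} := by
  rintro ⟨A, B, hp, h⟩
  have hA : A 0 0 = 0 := by simpa [embedPair] using (congrFun (congrFun h 0) 0).symm
  have hB : B 1 1 = 1 := by simpa [embedPair] using (congrFun (congrFun h 3) 3).symm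
  have hcongr := hp.congr 0 0
  simp [swapConj_apply, hA, hB] at hcongr
  exact hϖ1.not_ge hcongr

theorem valuation_tauConj_apply_le_one_iff {ϖ : F} (hϖ : ϖ ≠ 0) (hϖ1 : v ϖ ≤ 1)
    {A B : Matrix (Fin 2) (Fin 2) F} :
    (∀ i j, v (tauConj ϖ A B i j) ≤ 1) ↔
      (∀ i j, v (A i j) ≤ 1) ∧ (∀ i j, v (B i j) ≤ 1) ∧
        ∀ i j, v ((A - swapConj B) i j) ≤ v ϖ := by
  have hdiv (x : F) : v (x / ϖ) ≤ 1 ↔ v x ≤ v ϖ := by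
    rw [map_div₀, div_le_one₀ (zero_lt_iff.2 (v.ne_zero_iff.2 hϖ))]
  constructor
  · intro hk
    have hD : ∀ i j, v ((A - swapConj B) i j) ≤ v ϖ := by
      intro i j
      fin_cases i <;> fin_cases j
      · exact (hdiv _).1 (hk 0 3)
      · exact (hdiv _).1 (hk 0 2)
      · exact (v.map_neg _).symm.trans_le ((hdiv _).1 (hk 1 3))
      · exact (v.map_neg _).symm.trans_le ((hdiv _).1 (hk 1 2))
    have hB : ∀ i j, v (B i j) ≤ 1 := by
      intro i j
      fin_cases i <;> fin_cases j
      · exact hk 1 1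
      · have hB01 : B 0 1 = A 1 0 - (A - swapConj B) 1 0 := by simp [swapConj_apply]
        exact hB01 ▸ v.map_sub_le (hk 2 3) ((hD 1 0).trans hϖ1)
      · exact hk 3 2
      · exact hk 3 3
    refine ⟨fun i j => ?_, hB, hD⟩
    rw [← sub_add_cancel A (swapConj B), Matrix.add_apply]
    exact v.map_add_le ((hD i j).trans hϖ1) (valuation_swapConj_apply_le v hB i j)
  · rintro ⟨hA, hB, hD⟩ i j
    fin_cases i <;> fin_cases j
    all_goals first
      | exact hA _ _ | exact hB _ _
      | exact (v.map_neg _).trans_le (hA _ _) | exact (v.map_neg _).trans_le (hB _ _)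
      | exact (hdiv _).2 (hD _ _)
      | exact (hdiv _).2 ((v.map_neg _).trans_le (hD _ _))
      | exact (v.map_mul _ _).trans_le (mul_le_one' hϖ1 (hA _ _))
      | exact (v.map_mul _ _).trans_le (mul_le_one' hϖ1 (hB _ _))
      | simp [tauConj]

theorem embedPair_ne_tauOne_mul {ϖ : F} (hϖ0 : ϖ ≠ 0) (hϖ1 : v ϖ < 1)
    (A B : Matrix (Fin 2) (Fin 2) F) {N : Matrix (Fin 4) (Fin 4) F}
    (hN : ∀ i j, v (N i j) ≤ 1) (hNdet : v N.det = 1) : embedPair A B ≠ tauOne ϖ * N := by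
  intro h
  have hτN (j : Fin 4) : (tauOne ϖ * N) 0 j - (tauOne ϖ * N) 3 j = ϖ * N 0 j ∧
      (tauOne ϖ * N) 1 j - (tauOne ϖ * N) 2 j = ϖ * N 1 j := by
    simp [tauOne, mul_apply, Fin.sum_univ_four]
  have hrow (j : Fin 4) : v (embedPair A B 0 j - embedPair A B 3 j) ≤ v ϖ ∧
      v (embedPair A B 1 j - embedPair A B 2 j) ≤ v ϖ := by
    rw [h, (hτN j).1, (hτN j).2, map_mul, map_mul]
    exact ⟨mul_le_of_le_one_right' (hN 0 j), mul_le_of_le_one_right' (hN 1 j)⟩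
  -- rows `0, 3` and rows `1, 2` of `embedPair A B` have disjoint supports
  have hA : ∀ i j, v (A i j) ≤ v ϖ := by
    intro i j
    fin_cases i <;> fin_cases j
    · simpa [embedPair] using (hrow 0).1
    · simpa [embedPair] using (hrow 2).1
    · simpa [embedPair] using (hrow 0).2
    · simpa [embedPair] using (hrow 2).2
  have hB : ∀ i j, v (B i j) ≤ v ϖ := by
    intro i j
    fin_cases i <;> fin_cases j
    · simpa [embedPair] using (hrow 1).2
    · simpa [embedPair] using (hrow 3).2
    · simpa [embedPair] using (hrow 1).1
    · simpa [embedPair] using (hrow 3).1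
  have hdet := valuation_det_le v (valuation_embedPair_apply_le v hA hB)
  have hϖpos : 0 < v ϖ ^ 2 := pow_pos (zero_lt_iff.2 (v.ne_zero_iff.2 hϖ0)) 2
  rw [h, det_mul, det_tauOne, map_mul, map_pow, hNdet, mul_one, Fintype.card_fin,
    show 4 = 2 + 2 from rfl, pow_add, le_mul_iff_one_le_right hϖpos] at hdet
  exact (pow_lt_one₀ zero_le hϖ1 two_ne_zero).not_ge hdet

end TauPair

section GSp4

variable {F : Type*} [Field F] (v : Valuation F (WithZero (Multiplicative ℤ)))

theorem embedPair_mem_KSet {A B : Matrix (Fin 2) (Fin 2) F} (hA : ∀ i j, v (A i j) ≤ 1)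
    (hB : ∀ i j, v (B i j) ≤ 1) (hdet : A.det = B.det) (hv : v A.det = 1) :
    embedPair A B ∈ KSet F v :=
  ⟨⟨A.det, v.ne_zero_iff.1 (hv ▸ one_ne_zero), embedPair_transpose_mul_Jsp_mul hdet⟩,
    valuation_embedPair_apply_le v hA hB, by rw [det_embedPair, ← hdet, map_mul, hv, one_mul]⟩

theorem IsTauPair.embedPair_mem_HSet_inter_KSet {ϖ : F} {A B : Matrix (Fin 2) (Fin 2) F}
    (hp : IsTauPair v ϖ A B) : embedPair A B ∈ HSet F ∩ KSet F v :=
  ⟨⟨A, B, hp.det_eq, hp.det_ne_zero, rfl⟩,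
    embedPair_mem_KSet v hp.integral_left hp.integral_right hp.det_eq hp.valuation_det⟩

theorem embedPair_weyl_one_mem_HSet_inter_KSet :
    embedPair !![0, 1; -1, 0] 1 ∈ HSet F ∩ KSet F v := by
  have hdet : (!![0, 1; -1, 0] : Matrix (Fin 2) (Fin 2) F).det = 1 := by simp [det_fin_two]
  refine ⟨⟨_, _, by rw [hdet, det_one], by rw [hdet]; exact one_ne_zero, rfl⟩,
    embedPair_mem_KSet v (fun i j => ?_) (fun i j => ?_) (by rw [hdet, det_one]) (by simp [hdet])⟩
  · fin_cases i <;> fin_cases j <;> simp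
  · rw [one_apply]; split_ifs <;> simp

theorem tauConj_mem_KSet_iff {ϖ : F} (hϖ : ϖ ≠ 0) (hϖ1 : v ϖ ≤ 1)
    {A B : Matrix (Fin 2) (Fin 2) F} (hdet : A.det = B.det) :
    tauConj ϖ A B ∈ KSet F v ↔ IsTauPair v ϖ A B := by
  rw [KSet, Set.mem_ofPred_eq, valuation_tauConj_apply_le_one_iff v hϖ hϖ1, det_tauConj hϖ,
    ← hdet, map_mul, ← sq, pow_eq_one_iff_of_nonneg zero_le two_ne_zero]
  constructor
  · rintro ⟨-, ⟨hA, hB, hD⟩, hv⟩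
    exact ⟨hA, hB, hdet, hv, hD⟩
  · intro hp
    refine ⟨⟨A.det, hp.det_ne_zero, ?_⟩, ⟨hp.integral_left, hp.integral_right, hp.congr⟩,
      hp.valuation_det⟩
    exact transpose_mul_Jsp_mul_of_mul_tauOne_eq hϖ (embedPair_transpose_mul_Jsp_mul hdet)
      (embedPair_mul_tauOne hϖ A B)

theorem exists_mem_KSet_iff {ϖ : F} (hϖ : ϖ ≠ 0) (hϖ1 : v ϖ ≤ 1)
    {A B : Matrix (Fin 2) (Fin 2) F} (hdet : A.det = B.det) :
    (∃ k ∈ KSet F v, embedPair A B * tauOne ϖ = tauOne ϖ * k) ↔ IsTauPair v ϖ A B := by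
  rw [← tauConj_mem_KSet_iff v hϖ hϖ1 hdet, embedPair_mul_tauOne hϖ]
  constructor
  · rintro ⟨k, hk, h⟩
    rwa [(isUnit_tauOne hϖ).mul_left_cancel h]
  · exact fun hk => ⟨_, hk, rfl⟩

theorem HSet_inter_conj_KSet_eq {ϖ : F} (hϖ : ϖ ≠ 0) (hϖ1 : v ϖ ≤ 1) :
    {m ∈ HSet F | ∃ k ∈ KSet F v, m * tauOne ϖ = tauOne ϖ * k} =
      {m | ∃ A B, IsTauPair v ϖ A B ∧ m = embedPair A B} := by
  ext m
  constructor
  · rintro ⟨⟨A, B, hdet, -, rfl⟩, hk⟩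
    exact ⟨A, B, (exists_mem_KSet_iff v hϖ hϖ1 hdet).1 hk, rfl⟩
  · rintro ⟨A, B, hp, rfl⟩
    exact ⟨⟨A, B, hp.det_eq, hp.det_ne_zero, rfl⟩, (exists_mem_KSet_iff v hϖ hϖ1 hp.det_eq).2 hp⟩

theorem disjoint_HSet_mul_KSet_tauOne {ϖ : F} (hϖ0 : ϖ ≠ 0) (hϖ1 : v ϖ < 1) :
    Disjoint (HSet F * KSet F v) (HSet F * {tauOne ϖ} * KSet F v) := by
  rw [Set.disjoint_left]
  rintro _ ⟨_, ⟨A₁, B₁, -, -, rfl⟩, k₁, ⟨-, hk₁, hk₁det⟩, rfl⟩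
    ⟨_, ⟨_, ⟨A₂, B₂, hdet₂, hne₂, rfl⟩, _, rfl, rfl⟩, k₂, ⟨-, hk₂, hk₂det⟩, hx⟩
  dsimp only at hx
  have hk₁u : IsUnit k₁.det := (v.ne_zero_iff.1 (hk₁det ▸ one_ne_zero)).isUnit
  refine embedPair_ne_tauOne_mul v hϖ0 hϖ1 (A₂⁻¹ * A₁) (B₂⁻¹ * B₁) (N := k₂ * k₁⁻¹)
    (fun i j => by
      simpa using valuation_mul_apply_le v hk₂ (valuation_inv_apply_le_one v hk₁ hk₁det) i j)
    (by rw [det_mul, det_nonsing_inv, Ring.inverse_eq_inv', map_mul, map_inv₀, hk₁det, hk₂det,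
      inv_one, one_mul]) ?_
  calc embedPair (A₂⁻¹ * A₁) (B₂⁻¹ * B₁)
      = embedPair A₂⁻¹ B₂⁻¹ * (embedPair A₁ B₁ * k₁) * k₁⁻¹ := by
        rw [← Matrix.mul_assoc, mul_nonsing_inv_cancel_right _ _ hk₁u, embedPair_mul]
    _ = embedPair A₂⁻¹ B₂⁻¹ * (embedPair A₂ B₂ * tauOne ϖ * k₂) * k₁⁻¹ := by rw [← hx]
    _ = tauOne ϖ * (k₂ * k₁⁻¹) := by
        rw [← Matrix.mul_assoc, ← Matrix.mul_assoc, ← Matrix.mul_assoc, embedPair_mul,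
          nonsing_inv_mul _ hne₂.isUnit, nonsing_inv_mul _ (hdet₂ ▸ hne₂).isUnit, embedPair_one,
          Matrix.one_mul, Matrix.mul_assoc]

end GSp4

/-- For `G = GSp₄(F)`, `K = GSp₄(O_F)`, `H = GL₂ ×_det GL₂` and
`τ₁ = [[ϖ,0,0,1],[0,ϖ,1,0],[0,0,1,0],[0,0,0,1]]`: the group `H ∩ τ₁Kτ₁⁻¹` equals `X°·J`,
where `X°` is the image of `GL₂(O_F)` under `h ↦ (h, shs)` and `J` is the subgroup of
`H ∩ τ₁Kτ₁⁻¹` reducing mod `ϖ` into the diagonal torus; moreover `H ∩ τ₁Kτ₁⁻¹ ⊊ U = H ∩ K`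
and consequently `HK` and `Hτ₁K` are disjoint. -/
theorem gsp4_H_tau_structure
    {F : Type*} [Field F] (v : Valuation F (WithZero (Multiplicative ℤ)))
    (ϖ : F) (hϖ : v ϖ = ((Multiplicative.ofAdd (-1 : ℤ) : Multiplicative ℤ) :
      WithZero (Multiplicative ℤ))) :
    ({m ∈ HSet F | ∃ k ∈ KSet F v, m * tauOne ϖ = tauOne ϖ * k} =
      {m | ∃ h : Matrix (Fin 2) (Fin 2) F, (∀ i j, v (h i j) ≤ 1) ∧ v h.det = 1 ∧
          m = embedPair h (!![0, 1; 1, 0] * h * !![0, 1; 1, 0])} *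
        {m ∈ {m ∈ HSet F | ∃ k ∈ KSet F v, m * tauOne ϖ = tauOne ϖ * k} |
          ∀ i j, i ≠ j → v (m i j) ≤ ((Multiplicative.ofAdd (-1 : ℤ) : Multiplicative ℤ) :
            WithZero (Multiplicative ℤ))}) ∧
    ({m ∈ HSet F | ∃ k ∈ KSet F v, m * tauOne ϖ = tauOne ϖ * k} ⊆ HSet F ∩ KSet F v) ∧
    ({m ∈ HSet F | ∃ k ∈ KSet F v, m * tauOne ϖ = tauOne ϖ * k} ≠ HSet F ∩ KSet F v) ∧
    Disjoint (HSet F * KSet F v) (HSet F * {tauOne ϖ} * KSet F v) := by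
  have hϖ0 : ϖ ≠ 0 := v.ne_zero_iff.1 (hϖ ▸ WithZero.coe_ne_zero)
  have hϖ1 : v ϖ < 1 := hϖ ▸ by decide
  rw [← hϖ, HSet_inter_conj_KSet_eq v hϖ0 hϖ1.le]
  exact ⟨setOf_isTauPair_eq_mul v ϖ,
    fun _ ⟨_, _, hp, hm⟩ => hm ▸ hp.embedPair_mem_HSet_inter_KSet v,
    fun h => embedPair_weyl_one_not_mem v hϖ1 (h ▸ embedPair_weyl_one_mem_HSet_inter_KSet v),
    disjoint_HSet_mul_KSet_tauOne v hϖ0 hϖ1⟩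
end
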